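/- arXiv:math/0301277 — 7 statements merged into one kernel-verified Lean document; each statement's English description precedes it below -/
import Mathlib

section
/- Let (a_i,b_i)_{i=1}^s be a composition of positive integers, let (k_1,…,k_n) = (a_1+1, 1^{b_1−1}, …, a_s+1, 1^{b_s−1}) be the associated index (so n = b_1+⋯+b_s and k_1 ≥ 2). Then for every λ ∈ ℂ with |λ| < 1, the power series Σ_{l=0}^∞ [ Σ_{c_1+⋯+c_n=l, c_j≥0} ζ(k_1+c_1,…,k_n+c_n) ] λ^l converges absolutely and equals f((a_i,b_i)_{i=1}^s;λ). -/
/-- Strictly decreasing tuples `m 0 > m 1 > ⋯ > m (N-1) ≥ 1` of positive integers,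
padded by `0` from position `N` on. -/
def DecTuple (N : ℕ) : Set (ℕ → ℕ) :=
  {m | (∀ j, j + 1 < N → m (j + 1) < m j) ∧ (∀ j, j < N → 1 ≤ m j) ∧ ∀ j, N ≤ j → m j = 0}

/-- The multiple zeta value `ζ(k₁,…,kₙ)` for an index given as a list. -/
noncomputable def mzvL (k : List ℕ) : ℂ :=
  ∑' m : DecTuple k.length, ∏ i ∈ Finset.range k.length, ((m.1 i : ℂ) ^ k.getD i 0)⁻¹

/-- The generating function `f((aᵢ,bᵢ)ᵢ₌₁ˢ;λ)` of the Ohno sums: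
`Σ_{m₁>⋯>m_{B_s}≥1} Π_i m_{B_{i-1}+1}^{-aᵢ} Π_{j=B_{i-1}+1}^{B_i} (m_j-λ)⁻¹`
(indices are 0-based here, so `B_{i-1}` is `∑_{t<i} b t`). -/
noncomputable def genF (s : ℕ) (a b : ℕ → ℕ) (lam : ℂ) : ℂ :=
  ∑' m : DecTuple (∑ j ∈ Finset.range s, b j),
    ∏ i ∈ Finset.range s,
      ((m.1 (∑ t ∈ Finset.range i, b t) : ℂ) ^ a i)⁻¹ *
        ∏ j ∈ Finset.Ico (∑ t ∈ Finset.range i, b t) (∑ t ∈ Finset.range (i + 1), b t),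
          ((m.1 j : ℂ) - lam)⁻¹

/-- The index `κ((aᵢ,bᵢ)ᵢ₌₁ˢ) = (a₁+1,1^{b₁-1},…,a_s+1,1^{b_s-1})` attached
to a composition of pairs (0-based). -/
def kappa (s : ℕ) (a b : ℕ → ℕ) : List ℕ :=
  (List.range s).flatMap fun i => (a i + 1) :: List.replicate (b i - 1) 1

/-- The Ohno sum `Σ_{c₁+⋯+cₙ=l, cⱼ≥0} ζ(k₁+c₁,…,kₙ+cₙ)`. -/
noncomputable def ohnoSum (k : List ℕ) (l : ℕ) : ℂ :=
  ∑ c ∈ Finset.Nat.antidiagonalTuple k.length l,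
    mzvL (List.ofFn fun i : Fin k.length => k.getD i.1 0 + c i)

/-!
For `m ≥ 1 > |λ|` the geometric expansion `(m - λ)⁻¹ = ∑_c λ^c m^{-1-c}` turns `f` into the
double series `∑_m ∑_c λ^{|c|} ∏_j m_j^{-(k_j + c_j)}` over decreasing tuples `m` and shifts
`c ∈ ℕⁿ`. It converges absolutely: its terms are bounded by `∏_j m_j^{-k_j}` times a product of
geometric series, and `k_1 ≥ 2` gives `∏_j m_j^{-k_j} ≤ ∏_j m_j^{-(1 + 1/n)}`, a summable
product. Summing over `m` first and grouping the shifts by `|c| = l` produces the Ohno sums.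
-/

open Finset

section PiProduct

variable {R α : Type*} [NormedCommRing R]

theorem summable_norm_prod_pi {N : ℕ} (g : Fin N → α → R)
    (hg : ∀ j, Summable fun x => ‖g j x‖) :
    Summable fun c : Fin N → α => ‖∏ j, g j (c j)‖ := by
  induction N with
  | zero => exact Summable.of_finite
  | succ N ih =>
    rw [← (Fin.consEquiv fun _ => α).summable_iff]
    refine ((hg 0).mul_norm (ih (fun j => g j.succ) fun j => hg j.succ)).congr fun p => ?_
    simp [Fin.prod_univ_succ, Fin.consEquiv]

theorem tsum_prod_pi [CompleteSpace R] {N : ℕ} (g : Fin N → α → R)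
    (hg : ∀ j, Summable fun x => ‖g j x‖) :
    ∑' c : Fin N → α, ∏ j, g j (c j) = ∏ j, ∑' x, g j x := by
  induction N with
  | zero => simp
  | succ N ih =>
    rw [← (Fin.consEquiv fun _ => α).tsum_eq, Fin.prod_univ_succ,
      ← ih (fun j => g j.succ) fun j => hg j.succ,
      tsum_mul_tsum_of_summable_norm (hg 0) (summable_norm_prod_pi _ fun j => hg j.succ)]
    simp [Fin.prod_univ_succ, Fin.consEquiv]

end PiProduct

theorem hasSum_inv_pow_mul_pow {𝕜 : Type*} [NormedField 𝕜] {x lam : 𝕜} (h : ‖lam‖ < ‖x‖)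
    (k : ℕ) :
    HasSum (fun c : ℕ => (x ^ (k + 1 + c))⁻¹ * lam ^ c) ((x ^ k)⁻¹ * (x - lam)⁻¹) := by
  have hx : x ≠ 0 := norm_pos_iff.mp ((norm_nonneg lam).trans_lt h)
  have hxl : x - lam ≠ 0 := sub_ne_zero.mpr fun hl => (hl ▸ h).false
  have hratio : ‖lam / x‖ < 1 := by
    rw [norm_div, div_lt_one (norm_pos_iff.mpr hx)]; exact h
  have hterm : ∀ c : ℕ, (x ^ (k + 1 + c))⁻¹ * lam ^ c = (x ^ (k + 1))⁻¹ * (lam / x) ^ c := by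
    intro c
    rw [div_pow, pow_add _ (k + 1)]
    field_simp
  have hsum : (x ^ (k + 1))⁻¹ * (1 - lam / x)⁻¹ = (x ^ k)⁻¹ * (x - lam)⁻¹ := by
    rw [one_sub_div hx, inv_div, pow_succ]
    field_simp
  simp only [hterm, ← hsum]
  exact (hasSum_geometric_of_norm_lt_one hratio).mul_left _

theorem summable_norm_inv_pow_mul_pow {𝕜 : Type*} [NormedField 𝕜] {x lam : 𝕜}
    (h : ‖lam‖ < ‖x‖) (k : ℕ) :
    Summable fun c : ℕ => ‖(x ^ (k + 1 + c))⁻¹ * lam ^ c‖ := by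
  simp only [norm_mul, norm_inv, norm_pow]
  exact (hasSum_inv_pow_mul_pow (x := ‖x‖) (lam := ‖lam‖) (by simpa using h) k).summable

namespace DecTuple

variable {N : ℕ}

theorem one_le (m : DecTuple N) {j : ℕ} (hj : j < N) : 1 ≤ m.1 j := m.2.2.1 j hj

theorem le_apply_zero (m : DecTuple N) {j : ℕ} (hj : j < N) : m.1 j ≤ m.1 0 := by
  induction j with
  | zero => exact le_rfl
  | succ j ih => exact (m.2.1 j hj).le.trans (ih (by omega))

theorem injective_restrict : Function.Injective fun (m : DecTuple N) (j : Fin N) => m.1 j := by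
  intro m m' h
  ext j
  rcases lt_or_ge j N with hj | hj
  · exact congrFun h ⟨j, hj⟩
  · rw [m.2.2.2 j hj, m'.2.2.2 j hj]

theorem summable_prod_inv_rpow {p : ℝ} (hp : 1 < p) :
    Summable fun m : DecTuple N => ∏ j : Fin N, ((m.1 j : ℝ) ^ p)⁻¹ :=
  (summable_norm_prod_pi (fun _ (x : ℕ) => ((x : ℝ) ^ p)⁻¹)
    fun _ => (Real.summable_nat_rpow_inv.mpr hp).abs).of_norm.comp_injective injective_restrict

/-- Since `m 0` is the largest entry, `m 0 ≥ (∏ⱼ m j)^{1/(N+1)}`, and the extra power of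
`m 0` is enough to push every exponent above `1`. -/
theorem prod_inv_pow_le_prod_inv_rpow (m : DecTuple (N + 1)) {e : ℕ → ℕ} (he : 1 ≤ e 0) :
    ∏ j : Fin (N + 1), ((m.1 j : ℝ) ^ (e j + 1))⁻¹ ≤
      ∏ j : Fin (N + 1), ((m.1 j : ℝ) ^ (1 + 1 / (N + 1 : ℝ)))⁻¹ := by
  have hone : ∀ j : Fin (N + 1), (1 : ℝ) ≤ m.1 j := fun j => by exact_mod_cast one_le m j.2
  have hpos : ∀ j : Fin (N + 1), (0 : ℝ) < m.1 j := fun j => zero_lt_one.trans_le (hone j)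
  rw [prod_inv_distrib, prod_inv_distrib]
  refine inv_anti₀ (prod_pos fun j _ => Real.rpow_pos_of_pos (hpos j) _) ?_
  calc ∏ j : Fin (N + 1), (m.1 j : ℝ) ^ (1 + 1 / (N + 1 : ℝ))
      = ∏ j : Fin (N + 1), (m.1 j : ℝ) * (m.1 j : ℝ) ^ (1 / (N + 1 : ℝ)) :=
        prod_congr rfl fun j _ => by rw [Real.rpow_add (hpos j), Real.rpow_one]
    _ ≤ ∏ j : Fin (N + 1), (m.1 j : ℝ) * (m.1 0 : ℝ) ^ (1 / (N + 1 : ℝ)) := by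
        gcongr with j
        exact_mod_cast le_apply_zero m j.2
    _ = (m.1 0 : ℝ) * ∏ j : Fin (N + 1), (m.1 j : ℝ) := by
        rw [prod_mul_distrib, prod_const, card_univ, Fintype.card_fin, ← Real.rpow_natCast,
          ← Real.rpow_mul (Nat.cast_nonneg _), Nat.cast_succ, one_div_mul_cancel (by positivity),
          Real.rpow_one, mul_comm]
    _ ≤ ∏ j : Fin (N + 1), (m.1 j : ℝ) ^ (e j + 1) := by
        rw [Fin.prod_univ_succ, Fin.prod_univ_succ, ← mul_assoc, Fin.val_zero, ← sq]
        gcongr with j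
        · exact_mod_cast hone 0
        · omega
        · exact le_self_pow₀ (hone j.succ) (by omega)

theorem summable_prod_inv_pow_succ (hN : 0 < N) {e : ℕ → ℕ} (he : 1 ≤ e 0) :
    Summable fun m : DecTuple N => ∏ j : Fin N, ((m.1 j : ℝ) ^ (e j + 1))⁻¹ := by
  obtain ⟨N, rfl⟩ := Nat.exists_eq_succ_of_ne_zero hN.ne'
  refine (summable_prod_inv_rpow (p := 1 + 1 / (N + 1 : ℝ)) (by simp; positivity)).of_nonneg_of_le
    (fun m => prod_nonneg fun j _ => by positivity) fun m => ?_
  exact prod_inv_pow_le_prod_inv_rpow m he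

end DecTuple

section Regrouping

variable {E : Type*} [NormedAddCommGroup E]

theorem summable_norm_tsum_left {α β : Type*} {F : α × β → E} (hF : Summable fun p => ‖F p‖) :
    Summable fun b => ‖∑' a, F (a, b)‖ :=
  hF.prod_symm.prod.of_nonneg_of_le (fun _ => norm_nonneg _) fun b =>
    norm_tsum_le_tsum_norm (hF.prod_symm.prod_factor b)

variable {N : ℕ} {G : (Fin N → ℕ) → E}

theorem summable_norm_sum_antidiagonalTuple (hG : Summable fun c => ‖G c‖) :
    Summable fun l => ‖∑ c ∈ Nat.antidiagonalTuple N l, G c‖ := by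
  have hσ := (Nat.sigmaAntidiagonalTupleEquivTuple N).summable_iff.mpr hG
  refine hσ.sigma.of_nonneg_of_le (fun _ => norm_nonneg _) fun l => ?_
  exact (norm_sum_le _ _).trans_eq (Finset.tsum_subtype _ fun c => ‖G c‖).symm

theorem tsum_sum_antidiagonalTuple [CompleteSpace E] (hG : Summable fun c => ‖G c‖) :
    ∑' l, ∑ c ∈ Nat.antidiagonalTuple N l, G c = ∑' c, G c := by
  have hσ := (Nat.sigmaAntidiagonalTupleEquivTuple N).summable_iff.mpr hG.of_norm
  rw [← (Nat.sigmaAntidiagonalTupleEquivTuple N).tsum_eq]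
  exact (hσ.tsum_sigma.trans (tsum_congr fun l => Finset.tsum_subtype _ G)).symm

end Regrouping

/-- The summand `λ^{|c|} ∏ⱼ m_j^{-(k_j + c_j)}`, with `k_j = e j + 1`, of the absolutely
convergent double series behind the theorem. -/
noncomputable def ohnoTerm (N : ℕ) (e : ℕ → ℕ) (lam : ℂ) (p : DecTuple N × (Fin N → ℕ)) : ℂ :=
  ∏ j : Fin N, ((p.1.1 j : ℂ) ^ (e j + 1 + p.2 j))⁻¹ * lam ^ p.2 j

section OhnoTerm

variable {N : ℕ} {e : ℕ → ℕ} {lam : ℂ}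

theorem norm_lt_norm_decTuple_apply (hlam : ‖lam‖ < 1) (m : DecTuple N) (j : Fin N) :
    ‖lam‖ < ‖(m.1 j : ℂ)‖ := by
  rw [Complex.norm_natCast]
  exact hlam.trans_le (by exact_mod_cast DecTuple.one_le m j.2)

theorem summable_norm_ohnoTerm (hN : 0 < N) (he : 1 ≤ e 0) (hlam : ‖lam‖ < 1) :
    Summable fun p => ‖ohnoTerm N e lam p‖ := by
  have hgeom : Summable fun c : Fin N → ℕ => ‖∏ j, ‖lam‖ ^ c j‖ :=
    summable_norm_prod_pi _ fun _ => by
      simpa using summable_geometric_of_lt_one (norm_nonneg lam) hlam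
  refine ((DecTuple.summable_prod_inv_pow_succ hN he).mul_of_nonneg hgeom.of_norm
    (fun m => by positivity) fun c => by positivity).of_nonneg_of_le
    (fun _ => norm_nonneg _) fun ⟨m, c⟩ => ?_
  rw [ohnoTerm, norm_prod, ← prod_mul_distrib]
  gcongr with j
  rw [norm_mul, norm_inv, norm_pow, norm_pow, Complex.norm_natCast]
  have hm : (1 : ℝ) ≤ m.1 j := by exact_mod_cast DecTuple.one_le m j.2
  exact mul_le_mul_of_nonneg_right
    (inv_anti₀ (by positivity) (pow_le_pow_right₀ hm (Nat.le_add_right _ _))) (by positivity)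

theorem tsum_ohnoTerm_right (hlam : ‖lam‖ < 1) (m : DecTuple N) :
    ∑' c, ohnoTerm N e lam (m, c) = ∏ j : Fin N, ((m.1 j : ℂ) ^ e j)⁻¹ * ((m.1 j : ℂ) - lam)⁻¹ :=
  (tsum_prod_pi _ fun j =>
    summable_norm_inv_pow_mul_pow (norm_lt_norm_decTuple_apply hlam m j) _).trans <|
    prod_congr rfl fun j _ =>
      (hasSum_inv_pow_mul_pow (norm_lt_norm_decTuple_apply hlam m j) _).tsum_eq

end OhnoTerm

theorem mzvL_ofFn {n : ℕ} (f : Fin n → ℕ) :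
    mzvL (List.ofFn f) = ∑' m : DecTuple n, ∏ i : Fin n, ((m.1 i : ℂ) ^ f i)⁻¹ := by
  rw [mzvL, List.length_ofFn]
  refine tsum_congr fun m => ?_
  rw [← Fin.prod_univ_eq_prod_range (fun i => ((m.1 i : ℂ) ^ (List.ofFn f).getD i 0)⁻¹)]
  simp

section AdmissibleIndex

variable {k : List ℕ} {lam : ℂ}

theorem ohnoSum_mul_pow (hk : ∀ x ∈ k, 1 ≤ x) (l : ℕ) :
    ohnoSum k l * lam ^ l = ∑ c ∈ Nat.antidiagonalTuple k.length l,
      ∑' m, ohnoTerm k.length (fun j => k.getD j 0 - 1) lam (m, c) := by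
  rw [ohnoSum, sum_mul]
  refine sum_congr rfl fun c hc => ?_
  rw [mzvL_ofFn, ← tsum_mul_right]
  refine tsum_congr fun m => ?_
  rw [ohnoTerm, prod_mul_distrib, prod_pow_eq_pow_sum, Nat.mem_antidiagonalTuple.mp hc]
  congr 1
  refine prod_congr rfl fun j _ => ?_
  have hj : 1 ≤ k.getD j 0 := hk _ (by simp)
  rw [Nat.sub_add_cancel hj]

theorem summable_norm_ohnoTerm_getD (hk0 : 2 ≤ k.getD 0 0) (hlam : ‖lam‖ < 1) :
    Summable fun p => ‖ohnoTerm k.length (fun j => k.getD j 0 - 1) lam p‖ := by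
  have hN : 0 < k.length := List.length_pos_of_ne_nil (by rintro rfl; simp at hk0)
  exact summable_norm_ohnoTerm hN (by omega) hlam

theorem summable_norm_ohnoSum_mul_pow (hk : ∀ x ∈ k, 1 ≤ x) (hk0 : 2 ≤ k.getD 0 0)
    (hlam : ‖lam‖ < 1) : Summable fun l => ‖ohnoSum k l * lam ^ l‖ := by
  simp only [ohnoSum_mul_pow hk]
  exact summable_norm_sum_antidiagonalTuple
    (summable_norm_tsum_left (summable_norm_ohnoTerm_getD hk0 hlam))

theorem tsum_ohnoSum_mul_pow (hk : ∀ x ∈ k, 1 ≤ x) (hk0 : 2 ≤ k.getD 0 0)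
    (hlam : ‖lam‖ < 1) :
    ∑' l, ohnoSum k l * lam ^ l = ∑' m : DecTuple k.length,
      ∏ j ∈ range k.length, ((m.1 j : ℂ) ^ (k.getD j 0 - 1))⁻¹ * ((m.1 j : ℂ) - lam)⁻¹ := by
  have hF := summable_norm_ohnoTerm_getD hk0 hlam
  have hcomm := Summable.tsum_comm
    (f := fun m c => ohnoTerm k.length (fun j => k.getD j 0 - 1) lam (m, c)) hF.of_norm
  simp only [ohnoSum_mul_pow hk]
  rw [tsum_sum_antidiagonalTuple (summable_norm_tsum_left hF), hcomm]
  refine tsum_congr fun m => ?_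
  rw [tsum_ohnoTerm_right hlam, Fin.prod_univ_eq_prod_range
    (fun j => ((m.1 j : ℂ) ^ (k.getD j 0 - 1))⁻¹ * ((m.1 j : ℂ) - lam)⁻¹)]

end AdmissibleIndex

theorem prod_range_sum_eq_prod_Ico {M : Type*} [CommMonoid M] (s : ℕ) (b : ℕ → ℕ)
    (f : ℕ → M) :
    ∏ j ∈ range (∑ t ∈ range s, b t), f j =
      ∏ i ∈ range s, ∏ j ∈ Ico (∑ t ∈ range i, b t) (∑ t ∈ range (i + 1), b t), f j := by
  induction s with
  | zero => simp
  | succ s ih =>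
    rw [prod_range_succ, ← ih, prod_range_mul_prod_Ico f (by simp [sum_range_succ])]

section Kappa

variable {s : ℕ} {a b : ℕ → ℕ}

theorem kappa_succ :
    kappa (s + 1) a b = kappa s a b ++ (a s + 1) :: List.replicate (b s - 1) 1 := by
  simp [kappa, List.range_succ]

theorem one_le_of_mem_kappa {x : ℕ} (hx : x ∈ kappa s a b) : 1 ≤ x := by
  simp only [kappa, List.mem_flatMap, List.mem_cons, List.mem_replicate] at hx
  omega

theorem kappa_getD_zero (hs : 0 < s) : (kappa s a b).getD 0 0 = a 0 + 1 := by
  obtain ⟨s, rfl⟩ := Nat.exists_eq_succ_of_ne_zero hs.ne'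
  simp [kappa, List.range_succ_eq_map]

theorem length_kappa (hb : ∀ i < s, 1 ≤ b i) : (kappa s a b).length = ∑ i ∈ range s, b i := by
  induction s with
  | zero => simp [kappa]
  | succ s ih =>
    have := hb s s.lt_succ_self
    rw [kappa_succ, List.length_append, ih fun i hi => hb i (by omega), sum_range_succ]
    simp only [List.length_cons, List.length_replicate]
    omega

/-- Along `kappa s a b`, the exponent `k_j - 1` is `a i` at the first position `∑_{t<i} b t`
of the `i`-th block and `0` elsewhere. -/
theorem prod_range_getD_kappa_sub_one {M : Type*} [CommMonoid M] (hb : ∀ i < s, 1 ≤ b i)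
    (f : ℕ → ℕ → M) (hf : ∀ j, f j 0 = 1) :
    ∏ j ∈ range (∑ t ∈ range s, b t), f j ((kappa s a b).getD j 0 - 1) =
      ∏ i ∈ range s, f (∑ t ∈ range i, b t) (a i) := by
  induction s with
  | zero => simp
  | succ s ih =>
    have hlen := length_kappa (a := a) fun i (hi : i < s) => hb i (by omega)
    obtain ⟨r, hr⟩ := Nat.exists_eq_add_of_le' (hb s s.lt_succ_self)
    rw [sum_range_succ, prod_range_add, prod_range_succ, kappa_succ,
      ← ih fun i hi => hb i (by omega), hr, Nat.add_sub_cancel, prod_range_succ']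
    congr 1
    · exact prod_congr rfl fun j hj => by
        rw [List.getD_append _ _ _ _ (hlen ▸ mem_range.mp hj)]
    · have hright : ∀ t, (kappa s a b ++ (a s + 1) :: List.replicate r 1).getD
          (∑ t ∈ range s, b t + t) 0 = ((a s + 1) :: List.replicate r 1).getD t 0 := fun t => by
        rw [List.getD_append_right _ _ _ _ (by omega), hlen, Nat.add_sub_cancel_left]
      simp only [hright, List.getD_cons_zero, List.getD_cons_succ, Nat.add_sub_cancel]
      rw [add_zero, prod_eq_one fun t ht => by
        rw [List.getD_replicate _ (mem_range.mp ht), Nat.sub_self, hf], one_mul]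

theorem genF_eq_tsum_getD_kappa (hb : ∀ i < s, 1 ≤ b i) (lam : ℂ) :
    genF s a b lam = ∑' m : DecTuple (kappa s a b).length, ∏ j ∈ range (kappa s a b).length,
      ((m.1 j : ℂ) ^ ((kappa s a b).getD j 0 - 1))⁻¹ * ((m.1 j : ℂ) - lam)⁻¹ := by
  rw [length_kappa hb, genF]
  refine tsum_congr fun m => ?_
  rw [prod_mul_distrib, prod_mul_distrib,
    prod_range_getD_kappa_sub_one hb (fun j x => ((m.1 j : ℂ) ^ x)⁻¹) (by simp),
    prod_range_sum_eq_prod_Ico s b fun j => ((m.1 j : ℂ) - lam)⁻¹]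

end Kappa

/-- For `|λ| < 1` the power series `Σ_l (Σ_{c₁+⋯+cₙ=l} ζ(k₁+c₁,…,kₙ+cₙ)) λ^l`, where
`(k₁,…,kₙ) = κ((aᵢ,bᵢ)ᵢ₌₁ˢ)`, converges absolutely and equals `f((aᵢ,bᵢ)ᵢ₌₁ˢ;λ)`. -/
theorem genF_eq_tsum_ohnoSum (s : ℕ) (hs : 1 ≤ s) (a b : ℕ → ℕ)
    (ha : ∀ i, i < s → 1 ≤ a i) (hb : ∀ i, i < s → 1 ≤ b i)
    (lam : ℂ) (hlam : ‖lam‖ < 1) :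
    Summable (fun l : ℕ => ‖ohnoSum (kappa s a b) l * lam ^ l‖) ∧
      ∑' l : ℕ, ohnoSum (kappa s a b) l * lam ^ l = genF s a b lam := by
  have hk0 : 2 ≤ (kappa s a b).getD 0 0 := by
    rw [kappa_getD_zero hs]
    exact Nat.succ_le_succ (ha 0 hs)
  exact ⟨summable_norm_ohnoSum_mul_pow (fun _ => one_le_of_mem_kappa) hk0 hlam,
    (tsum_ohnoSum_mul_pow (fun _ => one_le_of_mem_kappa) hk0 hlam).trans
      (genF_eq_tsum_getD_kappa hb lam).symm⟩
end

section
/- Let (a_i,b_i)_{i=1}^s be a composition of positive integers and let λ ∈ ℂ not be a positive integer. For m_1 > ⋯ > m_{B_s} ≥ 1 and 1 ≤ j ≤ B_s define C_{m_j}^{m_1,…,m_{B_s}} := (∏_{i=1}^s m_{B_{i−1}+1}^{−a_i}) · ∏_{i≠j} (m_i − m_j)^{−1}. Then (i) for each fixed j the series Σ_{m_1>⋯>m_{B_s}≥1} | C_{m_j}^{m_1,…,m_{B_s}} / (m_j − λ) | converges; and (ii) f((a_i,b_i)_{i=1}^s;λ) = Σ_{p=1}^∞ r_p/(p−λ), where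 r_p := Σ_{j=1}^{B_s} Σ_{m_1>⋯>m_{j−1}>p>m_{j+1}>⋯>m_{B_s}≥1} C_p^{m_1,…,m_{j−1},p,m_{j+1},…,m_{B_s}} (with m_j set equal to p). -/
/-- The coefficient `C_{m_j}^{m₁,…,m_{B_s}} = (Π_i m_{B_{i-1}+1}^{-aᵢ}) Π_{i≠j} (mᵢ-m_j)⁻¹`
(0-based indices). -/
noncomputable def Ccoef (s : ℕ) (a b : ℕ → ℕ) (m : ℕ → ℕ) (j : ℕ) : ℂ :=
  (∏ i ∈ Finset.range s, ((m (∑ t ∈ Finset.range i, b t) : ℂ) ^ a i)⁻¹) *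
    ∏ i ∈ (Finset.range (∑ t ∈ Finset.range s, b t)).erase j,
      ((m i : ℂ) - (m j : ℂ))⁻¹

/-- The residue `r_p = Σ_{j=1}^{B_s} Σ_{m₁>⋯>m_{j-1}>p>m_{j+1}>⋯>m_{B_s}≥1}
C_p^{m₁,…,p,…,m_{B_s}}`, realized by summing over strictly decreasing tuples whose
`j`-th entry equals `p`. -/
noncomputable def resCoef (s : ℕ) (a b : ℕ → ℕ) (p : ℕ) : ℂ :=
  ∑ j ∈ Finset.range (∑ t ∈ Finset.range s, b t),
    ∑' m : {m : ℕ → ℕ // m ∈ DecTuple (∑ t ∈ Finset.range s, b t) ∧ m j = p},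
      Ccoef s a b m.1 j

open Finset

theorem prod_inv_sub_eq_sum_prod_inv_sub_mul {F ι : Type*} [Field F] [DecidableEq ι]
    {s : Finset ι} (hs : s.Nonempty) {v : ι → F} (hv : Set.InjOn v s) {x : F}
    (hx : ∀ i ∈ s, v i ≠ x) :
    ∏ i ∈ s, (v i - x)⁻¹ = ∑ j ∈ s, (∏ i ∈ s.erase j, (v i - v j)⁻¹) * (v j - x)⁻¹ := by
  have hbasis : ∀ j ∈ s, (Lagrange.basis s v j).eval x =
      (∏ i ∈ s.erase j, (v i - v j)⁻¹) * ∏ i ∈ s.erase j, (v i - x) := by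
    intro j _
    rw [Lagrange.basis, Polynomial.eval_prod, ← prod_mul_distrib]
    refine prod_congr rfl fun i _ => ?_
    simp only [Lagrange.basisDivisor, Polynomial.eval_mul, Polynomial.eval_C,
      Polynomial.eval_sub, Polynomial.eval_X]
    rw [← neg_sub (v i) (v j), ← neg_sub (v i) x, inv_neg, neg_mul_neg]
  have hsum := congrArg (Polynomial.eval x) (Lagrange.sum_basis hv hs)
  rw [Polynomial.eval_finsetSum, Polynomial.eval_one, sum_congr rfl hbasis] at hsum
  rw [← one_mul (∏ i ∈ s, _), ← hsum, sum_mul]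
  refine sum_congr rfl fun j hj => ?_
  have hne : ∏ i ∈ s.erase j, (v i - x) ≠ 0 :=
    prod_ne_zero_iff.2 fun i hi => sub_ne_zero.2 (hx i (mem_of_mem_erase hi))
  have hsplit : ∏ i ∈ s, (v i - x)⁻¹ = (v j - x)⁻¹ * (∏ i ∈ s.erase j, (v i - x))⁻¹ := by
    rw [← mul_prod_erase s _ hj, prod_inv_distrib]
  rw [hsplit, mul_assoc, mul_left_comm (∏ i ∈ s.erase j, (v i - x)), mul_inv_cancel₀ hne, mul_one]

theorem prod_range_prod_Ico_sum {M : Type*} [CommMonoid M] (b : ℕ → ℕ) (f : ℕ → M) (s : ℕ) :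
    ∏ i ∈ range s, ∏ j ∈ Ico (∑ t ∈ range i, b t) (∑ t ∈ range (i + 1), b t), f j =
      ∏ j ∈ range (∑ t ∈ range s, b t), f j := by
  induction s with
  | zero => simp
  | succ s ih =>
    rw [prod_range_succ, ih,
      prod_range_mul_prod_Ico _ (sum_le_sum_of_subset (range_subset_range.2 s.le_succ))]

theorem summable_fin_pi_prod {α : Type*} {n : ℕ} {f : Fin n → α → ℝ} (hf0 : ∀ k x, 0 ≤ f k x)
    (hf : ∀ k, Summable (f k)) : Summable fun g : Fin n → α => ∏ k, f k (g k) := by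
  induction n with
  | zero => exact Summable.of_finite
  | succ n ih =>
    have hprod := (hf 0).mul_of_nonneg (ih (fun k => hf0 k.succ) fun k => hf k.succ) (hf0 0)
      fun g => prod_nonneg fun k _ => hf0 _ _
    refine (hprod.comp_injective (Fin.consEquiv fun _ => α).symm.injective).congr fun g => ?_
    simp [Fin.prod_univ_succ, Fin.tail]

theorem exists_norm_inv_natCast_sub_le (x : ℂ) :
    ∃ C : ℝ, 0 ≤ C ∧ ∀ n : ℕ, 0 < n → ‖((n : ℂ) - x)⁻¹‖ ≤ C / n := by
  obtain ⟨C, hC⟩ := ((tendsto_natCast_div_add_atTop (-x)).norm).bddAbove_range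
  refine ⟨C, (norm_nonneg _).trans (hC ⟨0, rfl⟩), fun n hn => ?_⟩
  rw [le_div_iff₀ (Nat.cast_pos.2 hn), ← Complex.norm_natCast, ← norm_mul, mul_comm,
    ← div_eq_mul_inv]
  exact hC ⟨n, by simp [sub_eq_add_neg]⟩

theorem inv_mul_prod_inv_le_prod_rpow {ι : Type*} [Fintype ι] (hι : 0 < Fintype.card ι)
    {x : ι → ℝ} {M : ℝ} (hx : ∀ k, 0 < x k) (hxM : ∀ k, x k ≤ M) :
    M⁻¹ * ∏ k, (x k)⁻¹ ≤ ∏ k, x k ^ (-(1 + (Fintype.card ι : ℝ)⁻¹)) := by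
  obtain ⟨k₀⟩ := Fintype.card_pos_iff.1 hι
  have hM : 0 < M := (hx k₀).trans_le (hxM k₀)
  have hMinv : M⁻¹ = ∏ _k : ι, M ^ (-(Fintype.card ι : ℝ)⁻¹) := by
    rw [prod_const, card_univ, ← Real.rpow_natCast, ← Real.rpow_mul hM.le,
      neg_mul, inv_mul_cancel₀ (Nat.cast_pos.2 hι).ne', Real.rpow_neg_one]
  rw [hMinv, ← prod_mul_distrib]
  refine prod_le_prod (fun k _ => mul_nonneg (by positivity) (inv_nonneg.2 (hx k).le))
    fun k _ => ?_
  rw [neg_add, Real.rpow_add (hx k), Real.rpow_neg_one, mul_comm]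
  exact mul_le_mul_of_nonneg_left (Real.rpow_le_rpow_of_nonpos (hx k) (hxM k) (by simp))
    (inv_nonneg.2 (hx k).le)

theorem norm_prod_inv_pow_le {s : ℕ} (hs : 1 ≤ s) {a : ℕ → ℕ} (ha : 1 ≤ a 0) (c : ℕ → ℕ) :
    ‖∏ i ∈ range s, ((c i : ℂ) ^ a i)⁻¹‖ ≤ (c 0 : ℝ)⁻¹ := by
  obtain ⟨n, rfl⟩ := Nat.exists_eq_add_of_le' hs
  have hfactor : ∀ i, ‖((c i : ℂ) ^ a i)⁻¹‖ = (((c i ^ a i : ℕ) : ℝ))⁻¹ := fun i => by simp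
  rw [prod_range_succ', norm_mul, norm_prod]
  simp only [hfactor]
  obtain ⟨k, hk⟩ := Nat.exists_eq_add_of_le' ha
  have hfirst : (((c 0 ^ a 0 : ℕ) : ℝ))⁻¹ = (((c 0 ^ k : ℕ) : ℝ))⁻¹ * (c 0 : ℝ)⁻¹ := by
    rw [hk, pow_succ]; push_cast; rw [mul_inv]
  rw [hfirst, ← mul_assoc]
  refine mul_le_of_le_one_left (by positivity) ?_
  exact mul_le_one₀ (prod_le_one (fun _ _ => by positivity) fun _ _ => Nat.cast_inv_le_one _)
    (by positivity) (Nat.cast_inv_le_one _)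

namespace DecTuple

variable {N : ℕ} {m : ℕ → ℕ}

theorem succ_le (hm : m ∈ DecTuple N) (k : ℕ) : m (k + 1) ≤ m k := by
  rcases lt_or_ge (k + 1) N with h | h
  · exact (hm.1 k h).le
  · simp [hm.2.2 _ h]

theorem antitone (hm : m ∈ DecTuple N) : Antitone m := antitone_nat_of_succ_le (succ_le hm)

theorem succ_lt (hm : m ∈ DecTuple N) {k : ℕ} (hk : k < N) : m (k + 1) < m k := by
  rcases lt_or_ge (k + 1) N with h | h
  · exact hm.1 k h
  · rw [hm.2.2 _ h]
    exact hm.2.1 k hk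

theorem strictAntiOn (hm : m ∈ DecTuple N) : StrictAntiOn m (Set.Iic N) :=
  fun _ _ _ hj hij => (antitone hm hij).trans_lt (succ_lt hm (hij.trans_le hj))

-- Shifted by one, so that the gaps of a tuple range over all of `Fin N → ℕ`.
def gaps (N : ℕ) (m : ℕ → ℕ) (k : Fin N) : ℕ := m k - m (k + 1) - 1

theorem gaps_add_one (hm : m ∈ DecTuple N) (k : Fin N) : gaps N m k + 1 = m k - m (k + 1) := by
  have := succ_lt hm k.2
  unfold gaps
  omega

theorem injOn_gaps : Set.InjOn (gaps N) (DecTuple N) := by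
  intro m hm m' hm' h
  funext j
  induction hk : N - j generalizing j with
  | zero => rw [hm.2.2 j (by omega), hm'.2.2 j (by omega)]
  | succ t ih =>
    have hj : j < N := by omega
    have hgap := congrFun h ⟨j, hj⟩
    have hnext := ih (j + 1) (by omega)
    have := succ_lt hm hj
    have := succ_lt hm' hj
    simp only [gaps] at hgap
    omega

theorem summable_prod_gaps_add_one_rpow {e : ℝ} (he : e < -1) :
    Summable fun m : DecTuple N => ∏ k, ((gaps N m.1 k : ℝ) + 1) ^ e := by
  have hpow : Summable fun n : ℕ => ((n : ℝ) + 1) ^ e := by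
    simpa using (summable_nat_add_iff 1).2 (Real.summable_nat_rpow.2 he)
  have hpi := summable_fin_pi_prod (n := N) (fun _ n => by positivity) fun _ => hpow
  exact hpi.comp_injective fun m m' h => Subtype.ext (injOn_gaps m.2 m'.2 h)

theorem prod_gaps_add_one_le (hm : m ∈ DecTuple N) {j : ℕ} (hj : j < N) :
    ∏ k, ((gaps N m k : ℝ) + 1) ≤ (∏ i ∈ (range N).erase j, ‖(m i : ℂ) - m j‖) * m j := by
  set g : ℕ → ℝ := fun i => ‖(m i : ℂ) - m j‖
  -- `e` enumerates the indices `≠ j` of `0, …, N`; the gap at `k` is at most `g (e k)`,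
  -- and the extra index `N` contributes `g N = m j` because `m N = 0`.
  set e : ℕ → ℕ := fun k => if k < j then k else k + 1
  have hlast : (m j : ℝ) = g N := by simp [g, hm.2.2 N le_rfl]
  have hinsert : (range (N + 1)).erase j = insert N ((range N).erase j) := by
    rw [range_add_one, erase_insert_of_ne hj.ne']
  have himage : (range N).image e = (range (N + 1)).erase j := by
    ext i
    simp only [e, mem_image, mem_range, mem_erase]
    constructor
    · rintro ⟨k, hk, rfl⟩
      split_ifs <;> omega
    · intro hi
      exact ⟨if i < j then i else i - 1, by split_ifs <;> omega, by split_ifs <;> omega⟩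
  have he : Set.InjOn e (range N) := by
    intro k _ k' _ h
    simp only [e] at h
    split_ifs at h <;> omega
  have hrhs : (∏ i ∈ (range N).erase j, g i) * g N = ∏ k ∈ range N, g (e k) := by
    rw [← prod_image he, himage, hinsert, prod_insert (by simp), mul_comm]
  have hlhs : ∏ k, ((gaps N m k : ℝ) + 1) = ∏ k ∈ range N, ((m k - m (k + 1) : ℕ) : ℝ) := by
    rw [← Fin.prod_univ_eq_prod_range (fun k => ((m k - m (k + 1) : ℕ) : ℝ))]
    exact prod_congr rfl fun k _ => by rw [← gaps_add_one hm k]; push_cast; rfl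
  rw [hlast, hrhs, hlhs]
  refine prod_le_prod (fun _ _ => by positivity) fun k hk => ?_
  rw [Nat.cast_sub (succ_le hm k)]
  have hnorm : ∀ p q : ℕ, (p : ℝ) - q ≤ ‖(p : ℂ) - q‖ := fun p q => by
    simpa using norm_sub_norm_le (p : ℂ) q
  by_cases hkj : k < j
  · have : (m j : ℝ) ≤ m (k + 1) := Nat.cast_le.2 (antitone hm hkj)
    have := hnorm (m k) (m j)
    simp only [g, e, if_pos hkj]
    linarith
  · have : (m k : ℝ) ≤ m j := Nat.cast_le.2 (antitone hm (not_lt.1 hkj))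
    have := hnorm (m j) (m (k + 1))
    simp only [g, e, if_neg hkj, norm_sub_rev]
    linarith

theorem hasSum_tsum_fiber {α : Type*} [AddCommGroup α] [UniformSpace α]
    [IsUniformAddGroup α] [CompleteSpace α] [T2Space α] {N j : ℕ} (hj : j < N)
    {F : (ℕ → ℕ) → α} (hF : Summable fun m : DecTuple N => F m) :
    HasSum (fun p : ℕ => ∑' m : {m : ℕ → ℕ // m ∈ DecTuple N ∧ m j = p + 1}, F m)
      (∑' m : DecTuple N, F m) := by
  let fiber (c : ℕ) : {m : ℕ → ℕ // m ∈ DecTuple N ∧ m j = c} ≃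
      ((fun m : DecTuple N => m.1 j) ⁻¹' {c}) :=
    ⟨fun m => ⟨⟨m.1, m.2.1⟩, m.2.2⟩, fun m => ⟨m.1.1, m.1.2, m.2⟩, fun _ => rfl, fun _ => rfl⟩
  have h := hF.hasSum.tsum_fiberwise fun m : DecTuple N => m.1 j
  simp only [← (fiber _).tsum_eq] at h
  have hzero : IsEmpty {m : ℕ → ℕ // m ∈ DecTuple N ∧ m j = 0} :=
    ⟨fun m => by simpa [m.2.2] using m.2.1.2.1 j hj⟩
  have hshift := (hasSum_nat_add_iff' 1).2 h
  simp only [range_one, sum_singleton, tsum_empty, sub_zero] at hshift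
  exact hshift

end DecTuple

open DecTuple in
theorem norm_Ccoef_mul_inv_sub_le {s : ℕ} (hs : 1 ≤ s) {a b : ℕ → ℕ} (ha : 1 ≤ a 0)
    {m : ℕ → ℕ} (hm : m ∈ DecTuple (∑ t ∈ range s, b t)) {j : ℕ} (hj : j < ∑ t ∈ range s, b t)
    {lam : ℂ} {C : ℝ} (hC0 : 0 ≤ C) (hC : ∀ n : ℕ, 0 < n → ‖((n : ℂ) - lam)⁻¹‖ ≤ C / n) :
    ‖Ccoef s a b m j * ((m j : ℂ) - lam)⁻¹‖ ≤ C * ∏ k, ((gaps (∑ t ∈ range s, b t) m k : ℝ) + 1) ^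
      (-(1 + ((∑ t ∈ range s, b t : ℕ) : ℝ)⁻¹)) := by
  have hweight : ‖∏ i ∈ range s, ((m (∑ t ∈ range i, b t) : ℂ) ^ a i)⁻¹‖ ≤ (m 0 : ℝ)⁻¹ := by
    simpa only [sum_range_zero] using norm_prod_inv_pow_le hs ha fun i => m (∑ t ∈ range i, b t)
  rw [Ccoef, norm_mul, norm_mul]
  set N := ∑ t ∈ range s, b t
  set D := ∏ i ∈ (range N).erase j, ‖(m i : ℂ) - m j‖
  have hdist : ‖∏ i ∈ (range N).erase j, ((m i : ℂ) - m j)⁻¹‖ = D⁻¹ := by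
    simp only [norm_prod, norm_inv, prod_inv_distrib, D]
  rw [hdist]
  have hgaps : (m 0 : ℝ)⁻¹ * ∏ k, ((gaps N m k : ℝ) + 1)⁻¹ ≤
      ∏ k, ((gaps N m k : ℝ) + 1) ^ (-(1 + (N : ℝ)⁻¹)) := by
    simpa using inv_mul_prod_inv_le_prod_rpow (by simpa using hj.pos)
      (x := fun k : Fin N => (gaps N m k : ℝ) + 1) (fun _ => by positivity) fun k => by
        rw [← Nat.cast_add_one, gaps_add_one hm, Nat.cast_le]
        exact (Nat.sub_le _ _).trans (antitone hm (Nat.zero_le _))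
  calc ‖∏ i ∈ range s, ((m (∑ t ∈ range i, b t) : ℂ) ^ a i)⁻¹‖ * D⁻¹ * ‖((m j : ℂ) - lam)⁻¹‖
      ≤ (m 0 : ℝ)⁻¹ * D⁻¹ * (C / m j) :=
        mul_le_mul (mul_le_mul_of_nonneg_right hweight (by positivity))
          (hC _ (hm.2.1 j hj)) (norm_nonneg _) (by positivity)
    _ = C * ((m 0 : ℝ)⁻¹ * (D * m j)⁻¹) := by ring
    _ ≤ C * ((m 0 : ℝ)⁻¹ * (∏ k, ((gaps N m k : ℝ) + 1))⁻¹) := by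
        gcongr
        exact prod_gaps_add_one_le hm hj
    _ ≤ _ := by
        rw [← prod_inv_distrib]
        exact mul_le_mul_of_nonneg_left hgaps hC0

open DecTuple in
theorem summable_norm_Ccoef_mul_inv_sub {s : ℕ} (hs : 1 ≤ s) {a b : ℕ → ℕ} (ha : 1 ≤ a 0)
    (lam : ℂ) {j : ℕ} (hj : j < ∑ t ∈ range s, b t) :
    Summable fun m : DecTuple (∑ t ∈ range s, b t) =>
      ‖Ccoef s a b m.1 j * ((m.1 j : ℂ) - lam)⁻¹‖ := by
  obtain ⟨C, hC0, hC⟩ := exists_norm_inv_natCast_sub_le lam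
  have hexp : -(1 + ((∑ t ∈ range s, b t : ℕ) : ℝ)⁻¹) < -1 := by
    have : (0 : ℝ) < ((∑ t ∈ range s, b t : ℕ) : ℝ)⁻¹ := inv_pos.2 (Nat.cast_pos.2 hj.pos)
    linarith
  exact Summable.of_nonneg_of_le (fun _ => norm_nonneg _)
    (fun m => norm_Ccoef_mul_inv_sub_le hs ha m.2 hj hC0 hC)
    ((summable_prod_gaps_add_one_rpow hexp).mul_left C)

theorem genF_summand_eq_sum_Ccoef_mul {s : ℕ} {a b : ℕ → ℕ} {lam : ℂ}
    (hN : 0 < ∑ t ∈ range s, b t) (hlam : ∀ p : ℕ, 0 < p → lam ≠ (p : ℂ)) {m : ℕ → ℕ}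
    (hm : m ∈ DecTuple (∑ t ∈ range s, b t)) :
    ∏ i ∈ range s, ((m (∑ t ∈ range i, b t) : ℂ) ^ a i)⁻¹ *
        ∏ j ∈ Ico (∑ t ∈ range i, b t) (∑ t ∈ range (i + 1), b t), ((m j : ℂ) - lam)⁻¹ =
      ∑ j ∈ range (∑ t ∈ range s, b t), Ccoef s a b m j * ((m j : ℂ) - lam)⁻¹ := by
  have hinj : Set.InjOn (fun i => (m i : ℂ)) (range (∑ t ∈ range s, b t)) :=
    Nat.cast_injective.comp_injOn
      ((DecTuple.strictAntiOn hm).injOn.mono fun i hi => (mem_range.1 hi).le)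
  have hne : ∀ i ∈ range (∑ t ∈ range s, b t), (m i : ℂ) ≠ lam :=
    fun i hi h => hlam _ (hm.2.1 i (mem_range.1 hi)) h.symm
  rw [prod_mul_distrib, prod_range_prod_Ico_sum,
    prod_inv_sub_eq_sum_prod_inv_sub_mul (nonempty_range_iff.2 hN.ne') hinj hne, mul_sum]
  exact sum_congr rfl fun j _ => by rw [Ccoef, mul_assoc]

theorem hasSum_resCoef_mul_inv_sub {s : ℕ} (hs : 1 ≤ s) {a b : ℕ → ℕ} (ha : 1 ≤ a 0)
    (hN : 0 < ∑ t ∈ range s, b t) {lam : ℂ} (hlam : ∀ p : ℕ, 0 < p → lam ≠ (p : ℂ)) :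
    HasSum (fun p : ℕ => resCoef s a b (p + 1) * (((p : ℂ) + 1) - lam)⁻¹) (genF s a b lam) := by
  have hF : ∀ j ∈ range (∑ t ∈ range s, b t), Summable fun m : DecTuple (∑ t ∈ range s, b t) =>
      Ccoef s a b m.1 j * ((m.1 j : ℂ) - lam)⁻¹ :=
    fun j hj => (summable_norm_Ccoef_mul_inv_sub hs ha lam (mem_range.1 hj)).of_norm
  have hgenF : genF s a b lam = ∑ j ∈ range (∑ t ∈ range s, b t),
      ∑' m : DecTuple (∑ t ∈ range s, b t), Ccoef s a b m.1 j * ((m.1 j : ℂ) - lam)⁻¹ := by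
    rw [genF, ← Summable.tsum_finsetSum hF]
    exact tsum_congr fun m => genF_summand_eq_sum_Ccoef_mul hN hlam m.2
  rw [hgenF]
  refine (hasSum_sum fun j hj => DecTuple.hasSum_tsum_fiber (mem_range.1 hj)
    (F := fun m => Ccoef s a b m j * ((m j : ℂ) - lam)⁻¹) (hF j hj)).congr_fun fun p => ?_
  rw [resCoef, sum_mul]
  refine sum_congr rfl fun j _ => ?_
  rw [← tsum_mul_right]
  exact tsum_congr fun m => by rw [m.2.2]; push_cast; rfl

/-- **Partial-fraction expansion of the generating function.**
(i) For each fixed `j` the series `Σ_{m₁>⋯>m_{B_s}≥1} |C_{m_j}/(m_j-λ)|` converges; and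
(ii) `f((aᵢ,bᵢ)ᵢ₌₁ˢ;λ) = Σ_{p=1}^∞ r_p/(p-λ)` where
`r_p = Σ_j Σ_{m₁>⋯>m_{j-1}>p>m_{j+1}>⋯≥1} C_p`. -/
theorem genF_partial_fraction (s : ℕ) (hs : 1 ≤ s) (a b : ℕ → ℕ)
    (ha : ∀ i, i < s → 1 ≤ a i) (hb : ∀ i, i < s → 1 ≤ b i)
    (lam : ℂ) (hlam : ∀ p : ℕ, 0 < p → lam ≠ (p : ℂ)) :
    (∀ j, j < ∑ t ∈ Finset.range s, b t →
      Summable (fun m : DecTuple (∑ t ∈ Finset.range s, b t) =>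
        ‖Ccoef s a b m.1 j * ((m.1 j : ℂ) - lam)⁻¹‖)) ∧
    Summable (fun p : ℕ => resCoef s a b (p + 1) * (((p : ℂ) + 1) - lam)⁻¹) ∧
    genF s a b lam = ∑' p : ℕ, resCoef s a b (p + 1) * (((p : ℂ) + 1) - lam)⁻¹ := by
  have hN : 0 < ∑ t ∈ range s, b t :=
    lt_of_lt_of_le (hb 0 hs) (single_le_sum (fun _ _ => Nat.zero_le _) (mem_range.2 hs))
  have h := hasSum_resCoef_mul_inv_sub hs (ha 0 hs) hN hlam
  exact ⟨fun j hj => summable_norm_Ccoef_mul_inv_sub hs (ha 0 hs) lam hj, h.summable,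
    h.tsum_eq.symm⟩
end

section
/- Let (k_1,…,k_n) be an index of positive integers and let z ∈ ℂ with |z| < 1. Then Li_{k_1,…,k_n} is complex-differentiable at z, and: if k_1 ≥ 2 and z ≠ 0 then d/dz Li_{k_1,…,k_n}(z) = (1/z)·Li_{k_1−1,k_2,…,k_n}(z), while if k_1 = 1 then d/dz Li_{k_1,…,k_n}(z) = (1/(1−z))·Li_{k_2,…,k_n}(z). -/
/-- The multiple polylogarithm `Li_{k₁,…,kₙ}(z) = Σ_{m₁>⋯>mₙ≥1} z^{m₁}/(m₁^{k₁}⋯mₙ^{kₙ})`,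
with `Li_∅(z) = 1`. -/
noncomputable def mpl (k : List ℕ) (z : ℂ) : ℂ :=
  ∑' m : DecTuple k.length,
    z ^ m.1 0 * ∏ i ∈ Finset.range k.length, ((m.1 i : ℂ) ^ k.getD i 0)⁻¹

/-!
Grouping the terms of `Li_k(z)` by their largest index `m₁ = n` gives the power series
`Li_k(z) = ∑ₙ c_k(n) zⁿ` with `c_{k₁,k'}(n) = n^{-k₁} ∑_{j<n} c_{k'}(j)` and `0 ≤ c_k(n) ≤ 1`.
Bounded coefficients let us differentiate termwise in the unit disc. Since
`n c_{k₁,k'}(n) = c_{k₁-1,k'}(n)`, for `k₁ ≥ 2` the derivative is `z⁻¹ Li_{k₁-1,k'}(z)`; for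
`k₁ = 1` the coefficient of `zⁿ` in the derivative is `∑_{j≤n} c_{k'}(j)`, which is the Cauchy
product of `c_{k'}` with the geometric series of `(1 - z)⁻¹`.
-/

open Finset

/-- `mplCoeff k n` is the sum of `1/(m₁^{k₁}⋯m_r^{k_r})` over `n = m₁ > ⋯ > m_r ≥ 1`, i.e. the
`n`-th Taylor coefficient of `Li_k`. -/
noncomputable def mplCoeff : List ℕ → ℕ → ℝ
  | [], n => if n = 0 then 1 else 0
  | k0 :: ks, n => ((n : ℝ) ^ k0)⁻¹ * ∑ j ∈ range n, mplCoeff ks j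

lemma mplCoeff_nonneg (k : List ℕ) (n : ℕ) : 0 ≤ mplCoeff k n := by
  induction k generalizing n with
  | nil => simp only [mplCoeff]; split_ifs <;> norm_num
  | cons k0 ks ih => exact mul_nonneg (by positivity) (sum_nonneg fun j _ => ih j)

lemma mplCoeff_le_one {k : List ℕ} (hk : ∀ x ∈ k, 1 ≤ x) (n : ℕ) : mplCoeff k n ≤ 1 := by
  induction k generalizing n with
  | nil => simp only [mplCoeff]; split_ifs <;> norm_num
  | cons k0 ks ih =>
    rcases Nat.eq_zero_or_pos n with rfl | hn
    · simp [mplCoeff]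
    have hsum : ∑ j ∈ range n, mplCoeff ks j ≤ n := by
      simpa using sum_le_sum (s := range n) fun j _ =>
        ih (fun x hx => hk x (List.mem_cons_of_mem _ hx)) j
    have hpow : (n : ℝ) ≤ (n : ℝ) ^ k0 :=
      le_self_pow₀ (by exact_mod_cast hn) (by have := hk k0 List.mem_cons_self; omega)
    calc mplCoeff (k0 :: ks) n ≤ ((n : ℝ) ^ k0)⁻¹ * (n : ℝ) ^ k0 :=
          mul_le_mul_of_nonneg_left (hsum.trans hpow) (by positivity)
      _ = 1 := inv_mul_cancel₀ (by positivity)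

lemma norm_mplCoeff_le_one {k : List ℕ} (hk : ∀ x ∈ k, 1 ≤ x) (n : ℕ) :
    ‖(mplCoeff k n : ℂ)‖ ≤ 1 := by
  rw [Complex.norm_real, Real.norm_of_nonneg (mplCoeff_nonneg k n)]
  exact mplCoeff_le_one hk n

lemma natCast_mul_mplCoeff_cons {k0 : ℕ} (hk0 : 1 ≤ k0) (ks : List ℕ) (n : ℕ) :
    (n : ℝ) * mplCoeff (k0 :: ks) n = mplCoeff ((k0 - 1) :: ks) n := by
  rcases Nat.eq_zero_or_pos n with rfl | hn
  · simp [mplCoeff]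
  obtain ⟨k, rfl⟩ : ∃ k, k0 = k + 1 := ⟨k0 - 1, by omega⟩
  have : (n : ℝ) ≠ 0 := by positivity
  simp only [mplCoeff, Nat.add_sub_cancel, pow_succ]
  field_simp

lemma mplCoeff_zero_cons (ks : List ℕ) (n : ℕ) :
    mplCoeff (0 :: ks) n = ∑ j ∈ range n, mplCoeff ks j := by
  simp [mplCoeff]

noncomputable def mplWeight (k : List ℕ) (m : ℕ → ℕ) : ℝ :=
  ∏ i ∈ range k.length, ((m i : ℝ) ^ k.getD i 0)⁻¹

lemma mplWeight_nonneg (k : List ℕ) (m : ℕ → ℕ) : 0 ≤ mplWeight k m :=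
  prod_nonneg fun _ _ => by positivity

lemma mplWeight_cons (k0 : ℕ) (ks : List ℕ) (m : ℕ → ℕ) :
    mplWeight (k0 :: ks) m = ((m 0 : ℝ) ^ k0)⁻¹ * mplWeight ks (fun i => m (i + 1)) := by
  rw [mplWeight, List.length_cons, prod_range_succ', mul_comm]
  rfl

def seqCons (a : ℕ) (m : ℕ → ℕ) : ℕ → ℕ
  | 0 => a
  | i + 1 => m i

namespace DecTuple

lemma eq_zero {m : ℕ → ℕ} (hm : m ∈ DecTuple 0) : m = 0 :=
  funext fun j => hm.2.2 j (Nat.zero_le j)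

lemma tail_mem {N : ℕ} {m : ℕ → ℕ} (hm : m ∈ DecTuple (N + 1)) :
    (fun i => m (i + 1)) ∈ DecTuple N :=
  ⟨fun j _ => hm.1 (j + 1) (by omega), fun j _ => hm.2.1 (j + 1) (by omega),
    fun j _ => hm.2.2 (j + 1) (by omega)⟩

lemma apply_one_lt_apply_zero {N : ℕ} {m : ℕ → ℕ} (hm : m ∈ DecTuple (N + 1)) : m 1 < m 0 := by
  rcases N with _ | N
  · rw [hm.2.2 1 le_rfl]
    exact hm.2.1 0 Nat.one_pos
  · exact hm.1 0 (by omega)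

lemma seqCons_mem {N a : ℕ} {m : ℕ → ℕ} (hm : m ∈ DecTuple N) (ha : m 0 < a) :
    seqCons a m ∈ DecTuple (N + 1) := by
  refine ⟨?_, ?_, ?_⟩
  · rintro (_ | j) hj
    · exact ha
    · exact hm.1 j (by omega)
  · rintro (_ | j) hj
    · exact Nat.one_le_of_lt ha
    · exact hm.2.1 j (by omega)
  · rintro (_ | j) hj
    · omega
    · exact hm.2.2 j (by omega)

def consEquiv (N n : ℕ) : {m : DecTuple N // m.1 0 < n} ≃ {m : DecTuple (N + 1) // m.1 0 = n} where
  toFun m := ⟨⟨seqCons n m.1.1, seqCons_mem m.1.2 m.2⟩, rfl⟩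
  invFun m :=
    ⟨⟨fun i => m.1.1 (i + 1), tail_mem m.1.2⟩, (apply_one_lt_apply_zero m.1.2).trans_eq m.2⟩
  left_inv m := rfl
  right_inv m := by
    ext (_ | i)
    · exact m.2.symm
    · rfl

end DecTuple

lemma hasSum_subtype_lt_of_hasSum_fiber {β α : Type*} [AddCommMonoid α] [TopologicalSpace α]
    [ContinuousAdd α] {f : β → α} {g : β → ℕ} {a : ℕ → α}
    (h : ∀ j, HasSum (fun b : {b // g b = j} => f b) (a j)) (n : ℕ) :
    HasSum (fun b : {b // g b < n} => f b) (∑ j ∈ range n, a j) := by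
  have hind : {b | g b < n}.indicator f = fun b => ∑ j ∈ range n, {b | g b = j}.indicator f b := by
    ext b
    simp [Set.indicator_apply]
  refine (hasSum_subtype_iff_indicator (s := {b | g b < n})).2 ?_
  rw [hind]
  exact hasSum_sum fun j _ => (hasSum_subtype_iff_indicator (s := {b | g b = j})).1 (h j)

theorem hasSum_mplWeight_fiber (k : List ℕ) (n : ℕ) :
    HasSum (fun m : {m : DecTuple k.length // m.1 0 = n} => mplWeight k m.1.1) (mplCoeff k n) := by
  induction k generalizing n with
  | nil =>
    have hzero (m : {m : DecTuple 0 // m.1 0 = n}) : m.1.1 = 0 := DecTuple.eq_zero m.1.2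
    by_cases hn : n = 0
    · subst hn
      let m₀ : {m : DecTuple ([] : List ℕ).length // m.1 0 = 0} := ⟨⟨0, by simp [DecTuple]⟩, rfl⟩
      have hm₀ : mplCoeff [] 0 = mplWeight [] m₀.1.1 := by simp [mplWeight, mplCoeff]
      rw [hm₀]
      exact hasSum_single m₀ fun m hm => absurd (Subtype.ext (Subtype.ext (hzero m))) hm
    · have : IsEmpty {m : DecTuple 0 // m.1 0 = n} := ⟨fun m => hn (by simp [← m.2, hzero m])⟩
      simp [mplCoeff, hn]
  | cons k0 ks ih =>
    refine (DecTuple.consEquiv ks.length n).hasSum_iff.1 ?_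
    have htail := hasSum_subtype_lt_of_hasSum_fiber (β := DecTuple ks.length)
      (f := fun m => mplWeight ks m.1) (g := fun m => m.1 0) (a := mplCoeff ks) ih n
    exact (htail.mul_left ((n : ℝ) ^ k0)⁻¹).congr_fun fun m => mplWeight_cons k0 ks _

theorem hasSum_mpl {k : List ℕ} (hk : ∀ x ∈ k, 1 ≤ x) {z : ℂ} (hz : ‖z‖ < 1) :
    HasSum (fun n => (mplCoeff k n : ℂ) * z ^ n) (mpl k z) := by
  set F : DecTuple k.length → ℂ :=
    fun m => z ^ m.1 0 * ∏ i ∈ range k.length, ((m.1 i : ℂ) ^ k.getD i 0)⁻¹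
  have hF (m : DecTuple k.length) : F m = z ^ m.1 0 * (mplWeight k m.1 : ℂ) := by
    simp [F, mplWeight]
  have hfiber (n : ℕ) :
      HasSum (fun m : {m : DecTuple k.length // m.1 0 = n} => F m) (mplCoeff k n * z ^ n) := by
    rw [mul_comm]
    refine ((Complex.hasSum_ofReal.2 (hasSum_mplWeight_fiber k n)).mul_left (z ^ n)).congr_fun
      fun m => ?_
    rw [hF, m.2]
  have hnorm_fiber (n : ℕ) : HasSum (fun m : {m : DecTuple k.length // m.1 0 = n} => ‖F m‖)
      (‖z‖ ^ n * mplCoeff k n) := by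
    refine ((hasSum_mplWeight_fiber k n).mul_left (‖z‖ ^ n)).congr_fun fun m => ?_
    rw [hF, norm_mul, norm_pow, Complex.norm_real, Real.norm_of_nonneg (mplWeight_nonneg _ _), m.2]
  have hsummable : Summable fun m => ‖F m‖ := by
    refine (summable_partition (fun m => norm_nonneg (F m)) (s := fun n => {m | m.1 0 = n})
      fun m => existsUnique_eq').2 ⟨fun n => (hnorm_fiber n).summable, ?_⟩
    refine .of_nonneg_of_le (fun n => tsum_nonneg fun _ => norm_nonneg _) (fun n => ?_)
      (summable_geometric_of_lt_one (norm_nonneg z) hz)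
    exact (hnorm_fiber n).tsum_eq.trans_le
      (mul_le_of_le_one_right (by positivity) (mplCoeff_le_one hk n))
  exact (hsummable.of_norm.hasSum.tsum_fiberwise fun m => m.1 0).congr_fun
    fun n => (hfiber n).tsum_eq.symm

section PowerSeries

variable {𝕜 : Type*} [RCLike 𝕜]

lemma summable_norm_mul_pow_of_norm_le {a : ℕ → 𝕜} {C : ℝ} (ha : ∀ n, ‖a n‖ ≤ C) {z : 𝕜}
    (hz : ‖z‖ < 1) : Summable fun n => ‖a n * z ^ n‖ := by
  refine .of_nonneg_of_le (fun _ => norm_nonneg _) (fun n => ?_)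
    ((summable_geometric_of_lt_one (norm_nonneg z) hz).mul_left C)
  rw [norm_mul, norm_pow]
  exact mul_le_mul_of_nonneg_right (ha n) (by positivity)

lemma hasDerivAt_tsum_mul_pow {a : ℕ → 𝕜} {C : ℝ} (ha : ∀ n, ‖a n‖ ≤ C) {z : 𝕜}
    (hz : ‖z‖ < 1) :
    HasDerivAt (fun y => ∑' n, a n * y ^ n) (∑' n, a n * (n * z ^ (n - 1))) z := by
  obtain ⟨r, hzr, hr⟩ := exists_between hz
  have hr0 : 0 ≤ r := (norm_nonneg z).trans hzr.le
  have hu : Summable fun n : ℕ => C * (n * r ^ (n - 1)) := by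
    refine .mul_left C ((summable_nat_add_iff 1).1 ?_)
    have := (summable_pow_mul_geometric_of_norm_lt_one 1
      (by rwa [Real.norm_of_nonneg hr0])).add (summable_geometric_of_lt_one hr0 hr)
    simpa [add_mul] using this
  refine hasDerivAt_tsum_of_isPreconnected hu Metric.isOpen_ball (convex_ball 0 r).isPreconnected
    (fun n y _ => (hasDerivAt_pow n y).const_mul (a n)) (fun n y hy => ?_)
    (mem_ball_zero_iff.2 hzr) (summable_norm_mul_pow_of_norm_le ha hz).of_norm
    (mem_ball_zero_iff.2 hzr)
  have hy : ‖y‖ ≤ r := (mem_ball_zero_iff.1 hy).le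
  rw [norm_mul, norm_mul, norm_pow, RCLike.norm_natCast]
  gcongr
  exacts [(norm_nonneg _).trans (ha 0), ha n]

lemma hasSum_sum_range_mul_pow {b : ℕ → 𝕜} {z : 𝕜} (hz : ‖z‖ < 1)
    (hb : Summable fun n => ‖b n * z ^ n‖) :
    HasSum (fun n => (∑ j ∈ range (n + 1), b j) * z ^ n) ((1 - z)⁻¹ * ∑' n, b n * z ^ n) := by
  rw [← tsum_geometric_of_norm_lt_one hz, mul_comm]
  refine (hasSum_sum_range_mul_of_summable_norm hb (summable_norm_geometric_of_norm_lt_one hz))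
    |>.congr_fun fun n => ?_
  rw [sum_mul]
  refine sum_congr rfl fun j hj => ?_
  rw [mul_assoc, ← pow_add, Nat.add_sub_cancel' (Nat.lt_succ_iff.1 (mem_range.1 hj))]

end PowerSeries

theorem hasDerivAt_mpl {k : List ℕ} (hk : ∀ x ∈ k, 1 ≤ x) {z : ℂ} (hz : ‖z‖ < 1) :
    HasDerivAt (mpl k) (∑' n, (mplCoeff k n : ℂ) * (n * z ^ (n - 1))) z := by
  refine (hasDerivAt_tsum_mul_pow (norm_mplCoeff_le_one hk) hz).congr_of_eventuallyEq ?_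
  filter_upwards [Metric.isOpen_ball.mem_nhds (mem_ball_zero_iff.2 hz)] with y hy
  exact (hasSum_mpl hk (mem_ball_zero_iff.1 hy)).tsum_eq.symm

lemma mplCoeff_cons_mul_deriv_pow {k0 : ℕ} (hk0 : 1 ≤ k0) (ks : List ℕ) {z : ℂ} (hz : z ≠ 0)
    (n : ℕ) : (mplCoeff (k0 :: ks) n : ℂ) * (n * z ^ (n - 1)) =
      z⁻¹ * (mplCoeff ((k0 - 1) :: ks) n * z ^ n) := by
  rw [← natCast_mul_mplCoeff_cons hk0]
  rcases Nat.eq_zero_or_pos n with rfl | hn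
  · simp
  · rw [← Nat.sub_add_cancel hn, pow_succ]
    push_cast
    field_simp

lemma hasSum_mplCoeff_one_cons_mul_deriv_pow {ks : List ℕ} (hks : ∀ x ∈ ks, 1 ≤ x) {z : ℂ}
    (hz : ‖z‖ < 1) :
    HasSum (fun n => (mplCoeff (1 :: ks) n : ℂ) * (n * z ^ (n - 1))) ((1 - z)⁻¹ * mpl ks z) := by
  refine (hasSum_nat_add_iff' 1).1 ?_
  have hcauchy := hasSum_sum_range_mul_pow hz
    (summable_norm_mul_pow_of_norm_le (norm_mplCoeff_le_one hks) hz)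
  rw [(hasSum_mpl hks hz).tsum_eq] at hcauchy
  simp only [sum_range_one, Nat.cast_zero, zero_mul, mul_zero, sub_zero, Nat.add_sub_cancel]
  refine hcauchy.congr_fun fun n => ?_
  have h := natCast_mul_mplCoeff_cons le_rfl ks (n + 1)
  rw [Nat.sub_self, mplCoeff_zero_cons, mul_comm] at h
  rw [← mul_assoc]
  congr 1
  exact_mod_cast h

/-- **Differential relations for multiple polylogarithms.**  For `|z| < 1` the function
`Li_{k₁,…,kₙ}` is complex-differentiable at `z`, with
`(d/dz) Li_{k₁,…,kₙ}(z) = z⁻¹ · Li_{k₁-1,k₂,…,kₙ}(z)` if `k₁ ≥ 2` (and `z ≠ 0`), and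
`(d/dz) Li_{k₁,…,kₙ}(z) = (1-z)⁻¹ · Li_{k₂,…,kₙ}(z)` if `k₁ = 1`. -/
theorem mpl_hasDeriv (k0 : ℕ) (ks : List ℕ) (hk0 : 1 ≤ k0) (hks : ∀ x ∈ ks, 1 ≤ x)
    (z : ℂ) (hz : ‖z‖ < 1) :
    DifferentiableAt ℂ (mpl (k0 :: ks)) z ∧
    (2 ≤ k0 → z ≠ 0 → deriv (mpl (k0 :: ks)) z = z⁻¹ * mpl ((k0 - 1) :: ks) z) ∧
    (k0 = 1 → deriv (mpl (k0 :: ks)) z = (1 - z)⁻¹ * mpl ks z) := by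
  have hderiv := hasDerivAt_mpl (List.forall_mem_cons.2 ⟨hk0, hks⟩) hz
  refine ⟨hderiv.differentiableAt, fun h2 hz0 => ?_, fun h1 => ?_⟩
  · have hks' : ∀ x ∈ (k0 - 1) :: ks, 1 ≤ x := List.forall_mem_cons.2 ⟨by omega, hks⟩
    rw [hderiv.deriv, tsum_congr (mplCoeff_cons_mul_deriv_pow (by omega) ks hz0), tsum_mul_left,
      (hasSum_mpl hks' hz).tsum_eq]
  · subst h1
    exact hderiv.deriv.trans (hasSum_mplCoeff_one_cons_mul_deriv_pow hks hz).tsum_eq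
end

section
/- Let (a_i,b_i)_{i=1}^s be a composition of positive integers, and for each integer p ≥ 1 let r_p := Σ_{j=1}^{B_s} Σ_{m_1>⋯>m_{j−1}>p>m_{j+1}>⋯>m_{B_s}≥1} (∏_{i=1}^s m_{B_{i−1}+1}^{−a_i}) ∏_{i≠j}(m_i − p)^{−1}, where m_j is set equal to p (each inner series converges absolutely). Then the power series Σ_{p=1}^∞ r_p z^p has radius of convergence at least 1. -/
lemma decTuple_anti {N : ℕ} {m : ℕ → ℕ} (h1 : ∀ j, j + 1 < N → m (j + 1) < m j)
    {i k : ℕ} : i < k → k < N → m k < m i := by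
  induction k with
  | zero => omega
  | succ k ih =>
    intro hik hk
    rcases Nat.lt_succ_iff_lt_or_eq.mp hik with h | h
    · exact (h1 k hk).trans (ih h (by omega))
    · rw [h]; exact h1 k hk

lemma ccoef_norm_bound (s : ℕ) (hs : 1 ≤ s) (a b : ℕ → ℕ)
    (ha : ∀ i, i < s → 1 ≤ a i) (hb : ∀ i, i < s → 1 ≤ b i) (p j : ℕ) (hp : 1 ≤ p)
    (hj : j < ∑ t ∈ Finset.range s, b t) (m : ℕ → ℕ)
    (hm : m ∈ DecTuple (∑ t ∈ Finset.range s, b t)) (hmj : m j = p) :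
    ‖Ccoef s a b m j‖ ≤
      ∏ i : Fin j, (((m i - p : ℕ) : ℝ) ^ (1 + ((∑ t ∈ Finset.range s, b t : ℕ) : ℝ)⁻¹))⁻¹ := by
  classical
  set N := ∑ t ∈ Finset.range s, b t with hN
  set q : ℝ := 1 + (N : ℝ)⁻¹ with hqdef
  obtain ⟨hdec, hpos, hzero⟩ := hm
  have hanti : ∀ {i k : ℕ}, i < k → k < N → m k < m i := fun hik hk => decTuple_anti hdec hik hk
  have hN1 : 1 ≤ N := by omega
  have hm0 : 1 ≤ m 0 := hpos 0 (by omega)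
  have hup : ∀ i, i < j → p < m i := fun i hi => hmj ▸ hanti hi hj
  have hm0p : p ≤ m 0 := by
    rcases Nat.eq_zero_or_pos j with h | h
    · rw [← hmj, h]
    · exact (hup 0 h).le
  -- first product
  have h1 : ‖∏ i ∈ Finset.range s, ((m (∑ t ∈ Finset.range i, b t) : ℂ) ^ a i)⁻¹‖
      ≤ ((m 0 : ℝ))⁻¹ := by
    rw [norm_prod]
    have hposN : ∀ i, i < s → ∑ t ∈ Finset.range i, b t < N := by
      intro i hi
      have h2 : ∑ t ∈ Finset.range i, b t + b i ≤ N := by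
        rw [hN, ← Finset.sum_range_succ]
        exact Finset.sum_le_sum_of_subset (Finset.range_subset_range.2 hi)
      have := hb i hi
      omega
    have hfac : ∀ i ∈ Finset.range s,
        ‖((m (∑ t ∈ Finset.range i, b t) : ℂ) ^ a i)⁻¹‖
          = (((m (∑ t ∈ Finset.range i, b t) : ℝ)) ^ a i)⁻¹ := by
      intro i _
      rw [norm_inv, norm_pow, Complex.norm_natCast]
    rw [Finset.prod_congr rfl hfac]
    rw [← Finset.mul_prod_erase _ _ (Finset.mem_range.2 hs)]
    have e0 : (Finset.range 0).sum b = 0 := by simp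
    rw [show (∑ t ∈ Finset.range 0, b t) = 0 from by simp]
    have hf0 : (((m 0 : ℝ)) ^ a 0)⁻¹ ≤ ((m 0 : ℝ))⁻¹ := by
      apply inv_anti₀ (by exact_mod_cast hm0)
      calc ((m 0 : ℝ)) = ((m 0 : ℝ)) ^ 1 := (pow_one _).symm
        _ ≤ ((m 0 : ℝ)) ^ a 0 := pow_le_pow_right₀ (by exact_mod_cast hm0) (ha 0 hs)
    have hrest : ∏ i ∈ (Finset.range s).erase 0,
        (((m (∑ t ∈ Finset.range i, b t) : ℝ)) ^ a i)⁻¹ ≤ 1 := by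
      apply Finset.prod_le_one (fun i _ => by positivity)
      intro i hi
      have his : i < s := Finset.mem_range.mp (Finset.mem_of_mem_erase hi)
      have h1m : 1 ≤ m (∑ t ∈ Finset.range i, b t) := hpos _ (hposN i his)
      exact inv_le_one_of_one_le₀ (one_le_pow₀ (by exact_mod_cast h1m))
    calc (((m 0:ℝ)) ^ a 0)⁻¹ * ∏ i ∈ (Finset.range s).erase 0,
          (((m (∑ t ∈ Finset.range i, b t) : ℝ)) ^ a i)⁻¹
        ≤ ((m 0:ℝ))⁻¹ * 1 :=
          mul_le_mul hf0 hrest (Finset.prod_nonneg (fun i _ => by positivity)) (by positivity)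
      _ = ((m 0:ℝ))⁻¹ := mul_one _
  -- second product
  have h2 : ‖∏ i ∈ (Finset.range N).erase j, ((m i : ℂ) - (m j : ℂ))⁻¹‖
      ≤ ∏ i ∈ Finset.range j, (((m i - p : ℕ) : ℝ))⁻¹ := by
    rw [norm_prod]
    have hsplit : (Finset.range N).erase j = Finset.range j ∪ Finset.Ioo j N := by
      ext k
      simp only [Finset.mem_erase, Finset.mem_range, Finset.mem_union, Finset.mem_Ioo]
      omega
    have hdisj : Disjoint (Finset.range j) (Finset.Ioo j N) := by
      rw [Finset.disjoint_left]
      intro k hk hk'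
      simp only [Finset.mem_range] at hk
      simp only [Finset.mem_Ioo] at hk'
      omega
    rw [hsplit, Finset.prod_union hdisj]
    have hlow : ∏ i ∈ Finset.Ioo j N, ‖((m i : ℂ) - (m j : ℂ))⁻¹‖ ≤ 1 := by
      apply Finset.prod_le_one (fun i _ => by positivity)
      intro i hi
      simp only [Finset.mem_Ioo] at hi
      have hlt : m i < m j := hanti hi.1 hi.2
      rw [norm_inv]
      apply inv_le_one_of_one_le₀
      have he : ((m i : ℂ) - (m j : ℂ)) = (((m i : ℝ) - (m j : ℝ) : ℝ) : ℂ) := by push_cast; ring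
      rw [he, Complex.norm_real]
      have h1le : (1:ℝ) ≤ -((m i : ℝ) - (m j : ℝ)) := by
        have : (m i : ℝ) + 1 ≤ (m j : ℝ) := by exact_mod_cast hlt
        linarith
      exact le_abs.2 (Or.inr h1le)
    have hupfac : ∀ i ∈ Finset.range j,
        ‖((m i : ℂ) - (m j : ℂ))⁻¹‖ = (((m i - p : ℕ) : ℝ))⁻¹ := by
      intro i hi
      have hi' : i < j := Finset.mem_range.mp hi
      have hgt : p < m i := hup i hi'
      rw [norm_inv]
      congr 1
      have he : ((m i : ℂ) - (m j : ℂ)) = (((m i : ℝ) - (m j : ℝ) : ℝ) : ℂ) := by push_cast; ring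
      have hple : (p : ℝ) ≤ (m i : ℝ) := by exact_mod_cast hgt.le
      rw [he, Complex.norm_real, hmj, Real.norm_eq_abs,
        abs_of_nonneg (by linarith), ← Nat.cast_sub hgt.le]
    rw [Finset.prod_congr rfl hupfac]
    calc (∏ i ∈ Finset.range j, (((m i - p : ℕ) : ℝ))⁻¹) *
          ∏ i ∈ Finset.Ioo j N, ‖((m i : ℂ) - (m j : ℂ))⁻¹‖
        ≤ (∏ i ∈ Finset.range j, (((m i - p : ℕ) : ℝ))⁻¹) * 1 := by
          apply mul_le_mul_of_nonneg_left hlow (Finset.prod_nonneg (fun i _ => by positivity))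
      _ = _ := mul_one _
  -- combine and AM-GM step
  have hCle : ‖Ccoef s a b m j‖ ≤
      ((m 0 : ℝ))⁻¹ * ∏ i ∈ Finset.range j, (((m i - p : ℕ) : ℝ))⁻¹ := by
    rw [Ccoef, norm_mul]
    exact mul_le_mul h1 h2 (norm_nonneg _) (by positivity)
  refine hCle.trans ?_
  rw [Fin.prod_univ_eq_prod_range (fun i => (((m i - p : ℕ) : ℝ) ^ q)⁻¹)]
  -- now pure real estimate
  set P : ℝ := ∏ i ∈ Finset.range j, ((m i - p : ℕ) : ℝ) with hP
  have hu1 : ∀ i ∈ Finset.range j, (1:ℝ) ≤ ((m i - p : ℕ) : ℝ) := by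
    intro i hi
    have := hup i (Finset.mem_range.mp hi)
    exact_mod_cast Nat.one_le_iff_ne_zero.2 (by omega)
  have hP1 : 1 ≤ P := by
    have := Finset.prod_le_prod (f := fun _ : ℕ => (1:ℝ))
      (g := fun i => ((m i - p : ℕ) : ℝ)) (fun i _ => zero_le_one) hu1
    simpa using this
  have hP0 : 0 < P := lt_of_lt_of_le one_pos hP1
  have hm0R : (1:ℝ) ≤ (m 0 : ℝ) := by exact_mod_cast hm0
  have hprodinv : ∏ i ∈ Finset.range j, (((m i - p : ℕ) : ℝ))⁻¹ = P⁻¹ := by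
    rw [hP, ← Finset.prod_inv_distrib]
  have hrpow : ∏ i ∈ Finset.range j, ((((m i - p : ℕ) : ℝ)) ^ q)⁻¹ = (P ^ q)⁻¹ := by
    rw [Finset.prod_inv_distrib, Real.finset_prod_rpow _ _ (fun i _ => by positivity) q, ← hP]
  rw [hprodinv, hrpow, ← mul_inv]
  apply inv_anti₀ (by positivity)
  -- P ^ q ≤ m 0 * P
  have hPles : P ≤ ((m 0 : ℝ)) ^ N := by
    have hstep : ∀ i ∈ Finset.range j, ((m i - p : ℕ) : ℝ) ≤ (m 0 : ℝ) := by
      intro i hi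
      have hi' : i < j := Finset.mem_range.mp hi
      have : m i ≤ m 0 := by
        rcases Nat.eq_zero_or_pos i with h | h
        · rw [h]
        · exact (hanti h (hi'.trans hj)).le
      have : m i - p ≤ m 0 := by omega
      exact_mod_cast this
    calc P ≤ ∏ _i ∈ Finset.range j, ((m 0 : ℝ)) :=
          Finset.prod_le_prod (fun i hi => by positivity) hstep
      _ = ((m 0 : ℝ)) ^ j := by rw [Finset.prod_const, Finset.card_range]
      _ ≤ ((m 0 : ℝ)) ^ N := pow_le_pow_right₀ hm0R hj.le
  have hPN : P ^ ((N:ℝ)⁻¹) ≤ (m 0 : ℝ) := by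
    have h0 : (0:ℝ) ≤ P := hP0.le
    have := Real.rpow_le_rpow h0 hPles (by positivity : (0:ℝ) ≤ (N:ℝ)⁻¹)
    rwa [← Real.rpow_natCast ((m 0 : ℝ)) N, ← Real.rpow_mul (by positivity),
      mul_inv_cancel₀ (Nat.cast_ne_zero.2 (by omega) : (N:ℝ) ≠ 0),
      Real.rpow_one] at this
  calc P ^ q = P ^ (1:ℝ) * P ^ ((N:ℝ)⁻¹) := by
        rw [← Real.rpow_add hP0]
    _ = P * P ^ ((N:ℝ)⁻¹) := by rw [Real.rpow_one]
    _ ≤ P * (m 0 : ℝ) := mul_le_mul_of_nonneg_left hPN hP0.le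
    _ = (m 0 : ℝ) * P := mul_comm _ _

set_option maxHeartbeats 1000000 in
lemma summable_G0 {q : ℝ} (hq : 1 < q) (j : ℕ) :
    Summable (fun u : Fin j → ℕ => ∏ i, (((u i : ℕ) : ℝ) ^ q)⁻¹) := by
  induction j with
  | zero =>
    haveI : Finite (Fin 0 → ℕ) := Finite.of_subsingleton
    exact Summable.of_finite
  | succ j ih =>
    rw [← (Fin.consEquiv (fun _ : Fin (j+1) => ℕ)).summable_iff]
    have hmul := Summable.mul_of_nonneg (f := fun n : ℕ => ((n : ℝ) ^ q)⁻¹)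
      (g := fun u : Fin j → ℕ => ∏ i, (((u i : ℕ) : ℝ) ^ q)⁻¹)
      (Real.summable_nat_rpow_inv.2 hq) ih
      (fun n => by positivity) (fun u => by positivity)
    apply hmul.congr
    intro x
    show _ = ∏ i : Fin (j+1), ((((Fin.cons x.1 x.2 : Fin (j+1) → ℕ) i : ℕ) : ℝ) ^ q)⁻¹
    rw [Fin.prod_univ_succ]
    simp

set_option maxHeartbeats 1000000 in
lemma key_bound (s : ℕ) (hs : 1 ≤ s) (a b : ℕ → ℕ)
    (ha : ∀ i, i < s → 1 ≤ a i) (hb : ∀ i, i < s → 1 ≤ b i) (p j : ℕ) (hp : 1 ≤ p)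
    (hj : j < ∑ t ∈ Finset.range s, b t) :
    (Summable fun x : {m : ℕ → ℕ // m ∈ DecTuple (∑ t ∈ Finset.range s, b t) ∧ m j = p} =>
      ‖Ccoef s a b x.1 j‖) ∧
    ∑' x : {m : ℕ → ℕ // m ∈ DecTuple (∑ t ∈ Finset.range s, b t) ∧ m j = p},
        ‖Ccoef s a b x.1 j‖ ≤
      (p : ℝ) ^ (∑ t ∈ Finset.range s, b t) *
        ∑' u : Fin j → ℕ,
          ∏ i, (((u i : ℕ) : ℝ) ^ (1 + ((∑ t ∈ Finset.range s, b t : ℕ) : ℝ)⁻¹))⁻¹ := by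
  classical
  set N := ∑ t ∈ Finset.range s, b t with hNdef
  set q : ℝ := 1 + (N : ℝ)⁻¹ with hqdef
  have hq : 1 < q := by
    have : (0:ℝ) < (N : ℝ)⁻¹ := inv_pos.2 (Nat.cast_pos.2 (by omega))
    rw [hqdef]; linarith
  set L := N - 1 - j with hLdef
  set S := {m : ℕ → ℕ // m ∈ DecTuple N ∧ m j = p} with hSdef
  have hval : ∀ (x : S) (i : Fin L), x.1 (j + 1 + i.1) < p := by
    intro x i
    have h1 := decTuple_anti x.2.1.1 (show j < j + 1 + i.1 by omega)
      (show j + 1 + i.1 < N by have := i.2; omega)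
    have h2 := x.2.2
    omega
  let ι : S → (Fin j → ℕ) × (Fin L → Fin p) := fun x =>
    (fun i => x.1 i.1 - p, fun i => ⟨x.1 (j + 1 + i.1), hval x i⟩)
  have hinj : Function.Injective ι := by
    intro x y hxy
    have hfst := congrArg Prod.fst hxy
    have hsnd := congrArg Prod.snd hxy
    simp only [ι] at hfst hsnd
    apply Subtype.ext
    funext k
    rcases lt_trichotomy k j with hk | hk | hk
    · have h1 : x.1 k - p = y.1 k - p := congrFun hfst ⟨k, hk⟩
      have hx : x.1 j < x.1 k := decTuple_anti x.2.1.1 hk hj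
      have hy : y.1 j < y.1 k := decTuple_anti y.2.1.1 hk hj
      have hxj := x.2.2
      have hyj := y.2.2
      omega
    · rw [hk, x.2.2, y.2.2]
    · rcases lt_or_ge k N with hkN | hkN
      · have hkL : k - j - 1 < L := by omega
        have h1 := congrFun hsnd ⟨k - j - 1, hkL⟩
        have h2 : j + 1 + (k - j - 1) = k := by omega
        have h3 := congrArg Fin.val h1
        simpa [h2] using h3
      · rw [x.2.1.2.2 k hkN, y.2.1.2.2 k hkN]
  have hG : Summable (fun x : (Fin j → ℕ) × (Fin L → Fin p) =>
      ∏ i, (((x.1 i : ℕ) : ℝ) ^ q)⁻¹) := by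
    have h1 := Summable.mul_of_nonneg (f := fun u : Fin j → ℕ => ∏ i, (((u i : ℕ) : ℝ) ^ q)⁻¹)
      (g := fun _ : Fin L → Fin p => (1:ℝ)) (summable_G0 hq j) Summable.of_finite
      (fun u => by positivity) (fun v => zero_le_one)
    exact h1.congr (fun x => mul_one _)
  have hle : ∀ x : S, ‖Ccoef s a b x.1 j‖ ≤
      (fun y : (Fin j → ℕ) × (Fin L → Fin p) => ∏ i, (((y.1 i : ℕ) : ℝ) ^ q)⁻¹) (ι x) := by
    intro x
    exact ccoef_norm_bound s hs a b ha hb p j hp hj x.1 x.2.1 x.2.2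
  have hFs : Summable fun x : S => ‖Ccoef s a b x.1 j‖ :=
    Summable.of_nonneg_of_le (fun x => norm_nonneg _) hle (hG.comp_injective hinj)
  refine ⟨hFs, ?_⟩
  have hts := Summable.tsum_le_tsum_of_inj ι hinj (fun c _ => by positivity) hle hFs hG
  refine hts.trans ?_
  rw [Summable.tsum_prod' hG (fun u => Summable.of_finite)]
  have hcard : Nat.card (Fin L → Fin p) = p ^ L := by
    simp [Nat.card_eq_fintype_card]
  have htconst : ∀ u : Fin j → ℕ,
      ∑' _v : Fin L → Fin p, (∏ i, (((u i : ℕ) : ℝ) ^ q)⁻¹) =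
        (p ^ L : ℕ) * ∏ i, (((u i : ℕ) : ℝ) ^ q)⁻¹ := by
    intro u
    rw [tsum_const, hcard, nsmul_eq_mul]
  rw [tsum_congr htconst, tsum_mul_left]
  have hK : 0 ≤ ∑' u : Fin j → ℕ, ∏ i, (((u i : ℕ) : ℝ) ^ q)⁻¹ :=
    tsum_nonneg (fun u => by positivity)
  apply mul_le_mul_of_nonneg_right _ hK
  have : p ^ L ≤ p ^ N := Nat.pow_le_pow_right hp (by omega)
  exact_mod_cast this

/-- The power series `Σ_{p=1}^∞ r_p z^p` built from the residues of the generating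
function has radius of convergence at least `1`. -/
theorem resCoef_series_radius (s : ℕ) (hs : 1 ≤ s) (a b : ℕ → ℕ)
    (ha : ∀ i, i < s → 1 ≤ a i) (hb : ∀ i, i < s → 1 ≤ b i) :
    ∀ z : ℂ, ‖z‖ < 1 → Summable (fun p : ℕ => resCoef s a b (p + 1) * z ^ (p + 1)) := by
  intro z hz
  classical
  set N := ∑ t ∈ Finset.range s, b t with hNdef
  have hN1 : 1 ≤ N := by
    calc 1 ≤ b 0 := hb 0 hs
    _ ≤ N := Finset.single_le_sum (f := b) (fun i _ => Nat.zero_le _) (Finset.mem_range.2 hs)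
  set q : ℝ := 1 + (N : ℝ)⁻¹ with hqdef
  set C : ℝ := ∑ j ∈ Finset.range N, ∑' u : Fin j → ℕ, ∏ i, (((u i : ℕ) : ℝ) ^ q)⁻¹ with hC
  have hKnn : ∀ j : ℕ, 0 ≤ ∑' u : Fin j → ℕ, ∏ i, (((u i : ℕ) : ℝ) ^ q)⁻¹ :=
    fun j => tsum_nonneg (fun u => by positivity)
  have hCnn : 0 ≤ C := Finset.sum_nonneg fun j _ => hKnn j
  have hbound : ∀ p : ℕ, 1 ≤ p → ‖resCoef s a b p‖ ≤ (p : ℝ) ^ N * C := by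
    intro p hp
    rw [resCoef]
    calc ‖∑ j ∈ Finset.range N,
          ∑' m : {m : ℕ → ℕ // m ∈ DecTuple N ∧ m j = p}, Ccoef s a b m.1 j‖
        ≤ ∑ j ∈ Finset.range N,
            ‖∑' m : {m : ℕ → ℕ // m ∈ DecTuple N ∧ m j = p}, Ccoef s a b m.1 j‖ :=
          norm_sum_le _ _
      _ ≤ ∑ j ∈ Finset.range N,
            (p : ℝ) ^ N * ∑' u : Fin j → ℕ, ∏ i, (((u i : ℕ) : ℝ) ^ q)⁻¹ := by
          apply Finset.sum_le_sum
          intro j hjr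
          have hj : j < N := Finset.mem_range.mp hjr
          have hk := key_bound s hs a b ha hb p j hp hj
          exact (norm_tsum_le_tsum_norm hk.1).trans hk.2
      _ = (p : ℝ) ^ N * C := by rw [hC, Finset.mul_sum]
  apply Summable.of_norm_bounded (g := fun p : ℕ => C * (((p + 1 : ℕ) : ℝ) ^ N * ‖z‖ ^ (p + 1)))
  · apply Summable.mul_left
    have hz' : ‖(‖z‖)‖ < 1 := by rwa [Real.norm_eq_abs, abs_of_nonneg (norm_nonneg z)]
    have h0 : Summable fun n : ℕ => (n : ℝ) ^ N * ‖z‖ ^ n :=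
      summable_pow_mul_geometric_of_norm_lt_one N hz'
    exact ((summable_nat_add_iff 1).2 h0).congr (fun n => by push_cast; ring)
  · intro p
    rw [norm_mul, norm_pow]
    calc ‖resCoef s a b (p + 1)‖ * ‖z‖ ^ (p + 1)
        ≤ ((p + 1 : ℕ) : ℝ) ^ N * C * ‖z‖ ^ (p + 1) :=
          mul_le_mul_of_nonneg_right (hbound (p + 1) (by omega)) (by positivity)
      _ = C * (((p + 1 : ℕ) : ℝ) ^ N * ‖z‖ ^ (p + 1)) := by ring
end

section
/- Let k be a positive integer and let λ ∈ ℂ not be a positive integer. Then Σ_{m=1}^∞ 1/( m^k (m−λ) ) = Σ_{m_1>m_2>⋯>m_k≥1} 1/( m_1 (m_1−λ)(m_2−λ)⋯(m_k−λ) ); that is, the reduced Ohno relation F(k;λ) = G(k;λ) for the depth-one index (k) holds, which is the generating-function form of the sum formula of depth k. -/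
/-!
Connector method. Put `(1-λ)ₙ = ∏_{1 ≤ i ≤ n} (i - λ)` and `c(m, n) = (1-λ)ₘ (1-λ)ₙ / (1-λ)ₘ₊ₙ`.
The connector satisfies `c(m, n) - c(m, n+1) = m c(m, n+1) / (n+1-λ)` and tends to `0` in `n`,
so `∑_{n > r} c(m, n) / (n - λ) = c(m, r) / m`. Sum the family
`(m-λ)⁻¹ (v₁-λ)⁻¹ ⋯ (v_k-λ)⁻¹ c(m, v₁)` over `m ≥ 1` and `v₁ > ⋯ > v_k ≥ 1` in both orders:
telescoping away `v₁, …, v_k` one at a time leaves `c(m, 0) / ((m-λ) mᵏ) = 1 / (mᵏ (m-λ))`, while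
telescoping away `m` leaves `c(v₁, 0) / v₁ = 1 / v₁`.

Absolute convergence comes from comparison with the parameter `-s`, `s > |λ|` an integer, for
which every term is positive, so the same telescoping sums bound the family. Shifting `m` by `2s`
gives `|c_λ(m + 2s, n)| ≤ c_{-s}(m, n)`, which makes the bound uniform in `m`.
-/

open Finset Filter Topology

namespace ReducedOhno

section Algebra

variable {𝕜 : Type*} [Field 𝕜]

def invSub (lam : 𝕜) (n : ℕ) : 𝕜 := ((n : 𝕜) - lam)⁻¹

def shiftedPoch (lam : 𝕜) (n : ℕ) : 𝕜 := ∏ i ∈ range n, (((i + 1 : ℕ) : 𝕜) - lam)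

def connector (lam : 𝕜) (m n : ℕ) : 𝕜 :=
  shiftedPoch lam m * shiftedPoch lam n / shiftedPoch lam (m + n)

variable {lam : 𝕜}

theorem natCast_sub_ne_zero (hlam : ∀ p : ℕ, 0 < p → lam ≠ p) {n : ℕ} (hn : 0 < n) :
    (n : 𝕜) - lam ≠ 0 :=
  sub_ne_zero.2 (hlam n hn).symm

theorem shiftedPoch_ne_zero (hlam : ∀ p : ℕ, 0 < p → lam ≠ p) (n : ℕ) : shiftedPoch lam n ≠ 0 :=
  prod_ne_zero_iff.2 fun _ _ => natCast_sub_ne_zero hlam (Nat.succ_pos _)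

theorem connector_comm (lam : 𝕜) (m n : ℕ) : connector lam m n = connector lam n m := by
  rw [connector, connector, mul_comm, add_comm]

theorem connector_zero_right (hlam : ∀ p : ℕ, 0 < p → lam ≠ p) (m : ℕ) : connector lam m 0 = 1 := by
  rw [connector, add_zero, mul_div_right_comm, div_self (shiftedPoch_ne_zero hlam m)]
  simp [shiftedPoch]

theorem shiftedPoch_add (lam : 𝕜) (m n : ℕ) :
    shiftedPoch lam (m + n) = shiftedPoch lam m * ∏ i ∈ range n, (((m + i + 1 : ℕ) : 𝕜) - lam) :=
  prod_range_add _ m n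

theorem connector_eq_prod (hlam : ∀ p : ℕ, 0 < p → lam ≠ p) (m n : ℕ) :
    connector lam m n =
      ∏ i ∈ range n, (((i + 1 : ℕ) : 𝕜) - lam) / (((m + i + 1 : ℕ) : 𝕜) - lam) := by
  rw [connector, shiftedPoch_add, mul_div_mul_left _ _ (shiftedPoch_ne_zero hlam m), shiftedPoch,
    prod_div_distrib]

theorem connector_eq_mul_prod (hlam : ∀ p : ℕ, 0 < p → lam ≠ p) (m n : ℕ) :
    connector lam m n = shiftedPoch lam m * ∏ i ∈ range m, invSub lam (n + i + 1) := by
  simp_rw [connector_comm lam m, connector_eq_prod hlam, div_eq_mul_inv, prod_mul_distrib]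
  rfl

theorem connector_sub_connector_succ (hlam : ∀ p : ℕ, 0 < p → lam ≠ p) (m n : ℕ) :
    connector lam m n - connector lam m (n + 1) =
      m * (invSub lam (n + 1) * connector lam m (n + 1)) := by
  have hn := natCast_sub_ne_zero hlam (Nat.succ_pos n)
  have hmn := natCast_sub_ne_zero hlam (Nat.succ_pos (m + n))
  rw [connector_eq_prod hlam m (n + 1), prod_range_succ, ← connector_eq_prod hlam, invSub]
  field_simp
  push_cast
  ring

theorem sum_range_invSub_mul_connector (hlam : ∀ p : ℕ, 0 < p → lam ≠ p) [CharZero 𝕜] {m : ℕ}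
    (hm : 0 < m) (r N : ℕ) :
    ∑ b ∈ range N, invSub lam (r + b + 1) * connector lam m (r + b + 1)
      = (connector lam m r - connector lam m (r + N)) / m := by
  have hm' : (m : 𝕜) ≠ 0 := Nat.cast_ne_zero.2 hm.ne'
  rw [eq_div_iff hm', sum_mul]
  calc _ = ∑ b ∈ range N, (connector lam m (r + b) - connector lam m (r + (b + 1))) :=
        sum_congr rfl fun b _ => by rw [← add_assoc, connector_sub_connector_succ hlam]; ring
    _ = _ := by rw [sum_range_sub']; simp

end Algebra

section Gaps

/-- The decreasing tuple `m 0 > ⋯ > m (j-1) ≥ 1`, zero from `j` on, whose gaps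
`m i - m (i+1) - 1` (with `m j = 0`) are the entries of `g`. -/
def ofGaps {j : ℕ} (g : Fin j → ℕ) (i : ℕ) : ℕ := ∑ u : Fin j, if i ≤ u then g u + 1 else 0

theorem ofGaps_of_le {j : ℕ} (g : Fin j → ℕ) {i : ℕ} (hi : j ≤ i) : ofGaps g i = 0 :=
  sum_eq_zero fun u _ => if_neg (by omega)

theorem ofGaps_of_lt {j : ℕ} (g : Fin j → ℕ) {i : ℕ} (hi : i < j) :
    ofGaps g i = g ⟨i, hi⟩ + 1 + ofGaps g (i + 1) := by
  have split : ∀ u : Fin j, (if i ≤ u then g u + 1 else 0)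
      = (if u = ⟨i, hi⟩ then g u + 1 else 0) + (if i + 1 ≤ u then g u + 1 else 0) := by
    intro u
    by_cases h : u = ⟨i, hi⟩
    · subst h; simp
    · have : (u : ℕ) ≠ i := fun h' => h (Fin.ext h')
      by_cases h' : i ≤ u <;> simp [h, h'] <;> omega
  rw [ofGaps, sum_congr rfl fun u _ => split u, sum_add_distrib, sum_ite_eq' univ,
    if_pos (mem_univ _)]
  rfl

theorem ofGaps_snoc {j : ℕ} (g : Fin j → ℕ) (b : ℕ) {i : ℕ} (hi : i ≤ j) :
    ofGaps (Fin.snoc g b : Fin (j + 1) → ℕ) i = b + 1 + ofGaps g i := by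
  simp [ofGaps, Fin.sum_univ_castSucc, hi, add_comm]

theorem ofGaps_mem_decTuple {j : ℕ} (g : Fin j → ℕ) : ofGaps g ∈ DecTuple j := by
  refine ⟨fun i hi => ?_, fun i hi => ?_, fun i hi => ofGaps_of_le g hi⟩
  · rw [ofGaps_of_lt g (i := i) (by omega)]; omega
  · rw [ofGaps_of_lt g hi]; omega

def decTupleEquiv (j : ℕ) : (Fin j → ℕ) ≃ DecTuple j where
  toFun g := ⟨ofGaps g, ofGaps_mem_decTuple g⟩
  invFun m u := m.1 u - m.1 (u + 1) - 1
  left_inv g := by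
    funext u
    show ofGaps g u - ofGaps g (u + 1) - 1 = g u
    rw [ofGaps_of_lt g u.isLt]
    simp
  right_inv := by
    rintro ⟨m, hm⟩
    obtain ⟨hdec, hpos, hzero⟩ := hm
    refine Subtype.ext (funext fun i => ?_)
    show ofGaps (fun u : Fin j => m u - m (u + 1) - 1) i = m i
    induction h : j - i generalizing i with
    | zero => rw [ofGaps_of_le _ (by omega), hzero i (by omega)]
    | succ d ih =>
      have hi : i < j := by omega
      rw [ofGaps_of_lt _ hi, ih (i + 1) (by omega)]
      dsimp only
      by_cases hlast : i + 1 < j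
      · have := hdec i hlast; omega
      · rw [hzero (i + 1) (by omega)]; have := hpos i hi; omega

end Gaps

section Chain

/-- The term indexed by the chain `r + m 0 > ⋯ > r + m (j-1) > r`, `m = ofGaps g`: the weight `a`
at every vertex, times `f` at the top vertex. -/
def chain {𝕜 : Type*} [CommMonoid 𝕜] (a f : ℕ → 𝕜) {j : ℕ} (r : ℕ) (g : Fin j → ℕ) : 𝕜 :=
  (∏ i ∈ range j, a (r + ofGaps g i)) * f (r + ofGaps g 0)

variable {𝕜 : Type*}

theorem chain_zero [CommMonoid 𝕜] (a f : ℕ → 𝕜) (r : ℕ) (g : Fin 0 → ℕ) : chain a f r g = f r := by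
  simp [chain, ofGaps]

theorem chain_snoc [CommMonoid 𝕜] (a f : ℕ → 𝕜) {j : ℕ} (r : ℕ) (g : Fin j → ℕ) (b : ℕ) :
    chain a f r (Fin.snoc g b : Fin (j + 1) → ℕ) = a (r + b + 1) * chain a f (r + b + 1) g := by
  have hpos : ∀ i ≤ j, r + ofGaps (Fin.snoc g b : Fin (j + 1) → ℕ) i = r + b + 1 + ofGaps g i :=
    fun i hi => by rw [ofGaps_snoc g b hi]; ring
  rw [chain, chain, prod_range_succ, hpos j le_rfl, hpos 0 (Nat.zero_le _), ofGaps_of_le g le_rfl,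
    prod_congr rfl fun i hi => by rw [hpos i (mem_range.1 hi).le]]
  ac_rfl

theorem norm_chain_le [NormedField 𝕜] {a f : ℕ → 𝕜} {a' f' : ℕ → ℝ} {C K : ℝ}
    (ha : ∀ n, ‖a n‖ ≤ C * a' n) (hf : ∀ n, ‖f n‖ ≤ K * f' n) {j : ℕ} (r : ℕ) (g : Fin j → ℕ) :
    ‖chain a f r g‖ ≤ C ^ j * K * chain a' f' r g := by
  have hprod : ∏ i ∈ range j, ‖a (r + ofGaps g i)‖ ≤ ∏ i ∈ range j, C * a' (r + ofGaps g i) :=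
    prod_le_prod (fun _ _ => norm_nonneg _) fun _ _ => ha _
  rw [chain, chain, norm_mul, norm_prod, prod_mul_distrib, prod_const, card_range] at *
  calc _ ≤ (C ^ j * ∏ i ∈ range j, a' (r + ofGaps g i)) * (K * f' (r + ofGaps g 0)) :=
        mul_le_mul hprod (hf _) (norm_nonneg _) ((prod_nonneg fun _ _ => norm_nonneg _).trans hprod)
    _ = _ := by ring

theorem hasSum_chain_zero [Field 𝕜] [TopologicalSpace 𝕜] (a f : ℕ → 𝕜) (μ : 𝕜) (r : ℕ) :
    HasSum (chain a f (j := 0) r) (f r / μ ^ 0) := by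
  simpa [chain_zero] using hasSum_fintype (chain a f (j := 0) r)

section HasSum

variable [Field 𝕜] [TopologicalSpace 𝕜] [IsTopologicalRing 𝕜] [T3Space 𝕜]
  {a f : ℕ → 𝕜} {μ : 𝕜}

theorem hasSum_chain_succ (hf : ∀ r, HasSum (fun b => a (r + b + 1) * f (r + b + 1)) (f r / μ))
    {j : ℕ} (hj : ∀ r, HasSum (chain a f (j := j) r) (f r / μ ^ j)) {r : ℕ}
    (hs : Summable (chain a f (j := j + 1) r)) :
    HasSum (chain a f (j := j + 1) r) (f r / μ ^ (j + 1)) := by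
  let e := Fin.snocEquiv fun _ : Fin (j + 1) => ℕ
  have hs' : Summable (chain a f r ∘ e) := e.summable_iff.2 hs
  have hfiber : ∀ b, HasSum (fun t => (chain a f r ∘ e) (b, t))
      (a (r + b + 1) * (f (r + b + 1) / μ ^ j)) :=
    fun b => by
      change HasSum (fun t => chain a f r (Fin.snoc t b : Fin (j + 1) → ℕ)) _
      simpa only [chain_snoc] using (hj (r + b + 1)).mul_left (a (r + b + 1))
  have htotal : HasSum (fun b => a (r + b + 1) * (f (r + b + 1) / μ ^ j)) (f r / μ ^ (j + 1)) := by
    simpa [mul_div_assoc, pow_succ', div_div] using (hf r).div_const (μ ^ j)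
  have h := hs'.hasSum
  rw [(hs'.hasSum.prod_fiberwise hfiber).unique htotal] at h
  exact e.hasSum_iff.1 h

theorem hasSum_chain (hf : ∀ r, HasSum (fun b => a (r + b + 1) * f (r + b + 1)) (f r / μ))
    (hs : ∀ j r, Summable (chain a f (j := j) r)) (j r : ℕ) :
    HasSum (chain a f (j := j) r) (f r / μ ^ j) := by
  induction j generalizing r with
  | zero => exact hasSum_chain_zero a f μ r
  | succ j ih => exact hasSum_chain_succ hf ih (hs _ r)

end HasSum

theorem chain_nonneg {a f : ℕ → ℝ} (ha : 0 ≤ a) (hf : 0 ≤ f) {j : ℕ} (r : ℕ) (g : Fin j → ℕ) :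
    0 ≤ chain a f r g :=
  mul_nonneg (prod_nonneg fun _ _ => ha _) (hf _)

theorem hasSum_chain_of_nonneg {a f : ℕ → ℝ} {μ : ℝ} (ha : 0 ≤ a) (hf0 : 0 ≤ f)
    (hf : ∀ r, HasSum (fun b => a (r + b + 1) * f (r + b + 1)) (f r / μ)) (j r : ℕ) :
    HasSum (chain a f (j := j) r) (f r / μ ^ j) := by
  induction j generalizing r with
  | zero => exact hasSum_chain_zero a f μ r
  | succ j ih =>
    refine hasSum_chain_succ hf ih ?_
    let e := Fin.snocEquiv fun _ : Fin (j + 1) => ℕ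
    rw [← e.summable_iff, summable_prod_of_nonneg (f := chain a f r ∘ e)
      fun _ => chain_nonneg ha hf0 _ _]
    change (∀ b, Summable fun t => chain a f r (Fin.snoc t b : Fin (j + 1) → ℕ)) ∧
      Summable fun b => ∑' t, chain a f r (Fin.snoc t b : Fin (j + 1) → ℕ)
    simp only [chain_snoc, tsum_mul_left, (ih _).tsum_eq, ← mul_div_assoc]
    exact ⟨fun b => (ih _).summable.mul_left _, (hf r).summable.div_const _⟩

end Chain

section Analysis

theorem invSub_neg_natCast (s n : ℕ) : invSub (-(s : ℝ)) n = ((n : ℝ) + s)⁻¹ := by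
  simp [invSub]

theorem neg_natCast_ne_natCast (s : ℕ) : ∀ p : ℕ, 0 < p → -(s : ℝ) ≠ p := fun p hp h => by
  have : (0 : ℝ) < p := by exact_mod_cast hp
  linarith [(Nat.cast_nonneg s : (0 : ℝ) ≤ s)]

theorem invSub_neg_natCast_nonneg (s : ℕ) : 0 ≤ invSub (-(s : ℝ)) := fun n => by
  rw [invSub_neg_natCast]; positivity

theorem connector_neg_natCast_nonneg (s m : ℕ) : 0 ≤ connector (-(s : ℝ)) m := fun n => by
  rw [connector_eq_prod (neg_natCast_ne_natCast s)]
  exact prod_nonneg fun _ _ => by simp only [sub_neg_eq_add]; positivity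

variable {𝕜 : Type*} [RCLike 𝕜] {lam : 𝕜}

theorem exists_norm_invSub_le {s : ℕ} (hs : ‖lam‖ < s) :
    ∃ C, 0 ≤ C ∧ ∀ n, ‖invSub lam n‖ ≤ C * invSub (-(s : ℝ)) n := by
  have hs1 : (0 : ℝ) < s := (norm_nonneg lam).trans_lt hs
  have hsum : 0 ≤ ∑ n ∈ range (2 * s + 1), ((n : ℝ) + s) * ‖invSub lam n‖ :=
    sum_nonneg fun _ _ => by positivity
  refine ⟨3 + ∑ n ∈ range (2 * s + 1), ((n : ℝ) + s) * ‖invSub lam n‖, by positivity, fun n => ?_⟩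
  have hns : (0 : ℝ) < n + s := by positivity
  rw [invSub_neg_natCast, ← div_eq_mul_inv, le_div_iff₀ hns, mul_comm]
  by_cases hn : n < 2 * s + 1
  · linarith [single_le_sum (f := fun n : ℕ => ((n : ℝ) + s) * ‖invSub lam n‖)
      (fun _ _ => by positivity) (mem_range.2 hn)]
  · have hn' : (2 * s + 1 : ℝ) ≤ n := by exact_mod_cast not_lt.1 hn
    have hlow : (n : ℝ) - s ≤ ‖(n : 𝕜) - lam‖ := by
      calc (n : ℝ) - s ≤ ‖(n : 𝕜)‖ - ‖lam‖ := by rw [RCLike.norm_natCast]; linarith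
        _ ≤ _ := norm_sub_norm_le _ _
    have hpos : 0 < ‖(n : 𝕜) - lam‖ := by linarith
    rw [invSub, norm_inv, ← div_eq_mul_inv, div_le_iff₀ hpos]
    nlinarith

theorem tendsto_invSub (lam : 𝕜) : Tendsto (invSub lam) atTop (𝓝 0) := by
  obtain ⟨s, hs⟩ := exists_nat_gt ‖lam‖
  obtain ⟨C, -, hC⟩ := exists_norm_invSub_le hs
  refine squeeze_zero_norm hC ?_
  simp_rw [invSub_neg_natCast]
  simpa using (tendsto_inv_atTop_zero.comp
    (tendsto_natCast_atTop_atTop.atTop_add tendsto_const_nhds)).const_mul C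

theorem tendsto_connector (hlam : ∀ p : ℕ, 0 < p → lam ≠ p) {m : ℕ} (hm : 0 < m) :
    Tendsto (connector lam m) atTop (𝓝 0) := by
  have hprod : Tendsto (fun n => ∏ i ∈ range m, invSub lam (n + i + 1)) atTop
      (𝓝 (∏ _i ∈ range m, (0 : 𝕜))) :=
    tendsto_finsetProd _ fun i _ => by
      simpa only [add_assoc, Function.comp_def] using
        (tendsto_invSub lam).comp (tendsto_add_atTop_nat (i + 1))
  simp_rw [funext (connector_eq_mul_prod hlam m)]
  simpa [hm.ne'] using hprod.const_mul (shiftedPoch lam m)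

theorem hasSum_invSub_mul_connector_of_summable (hlam : ∀ p : ℕ, 0 < p → lam ≠ p) {m : ℕ}
    (hm : 0 < m) {r : ℕ}
    (hsum : Summable fun b => invSub lam (r + b + 1) * connector lam m (r + b + 1)) :
    HasSum (fun b => invSub lam (r + b + 1) * connector lam m (r + b + 1))
      (connector lam m r / m) := by
  rw [hsum.hasSum_iff_tendsto_nat]
  simp_rw [sum_range_invSub_mul_connector hlam hm]
  have htail : Tendsto (fun N => connector lam m (r + N)) atTop (𝓝 0) :=
    by simpa only [add_comm r, Function.comp_def] using
      (tendsto_connector hlam hm).comp (tendsto_add_atTop_nat r)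
  simpa using (tendsto_const_nhds.sub htail).div_const (m : 𝕜)

theorem summable_invSub_mul_connector_neg (s : ℕ) {m : ℕ} (hm : 0 < m) (r : ℕ) :
    Summable fun b => invSub (-(s : ℝ)) (r + b + 1) * connector (-(s : ℝ)) m (r + b + 1) := by
  refine summable_of_sum_range_le (c := connector (-(s : ℝ)) m r / m)
    (fun b => mul_nonneg (invSub_neg_natCast_nonneg s _) (connector_neg_natCast_nonneg s m _))
    fun N => ?_
  rw [sum_range_invSub_mul_connector (neg_natCast_ne_natCast s) hm]
  gcongr
  exact sub_le_self _ (connector_neg_natCast_nonneg s m _)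

theorem norm_connector_le (hlam : ∀ p : ℕ, 0 < p → lam ≠ p) {s : ℕ} {C : ℝ}
    (hC : ∀ n, ‖invSub lam n‖ ≤ C * invSub (-(s : ℝ)) n) (m : ℕ) :
    ∃ K, ∀ n, ‖connector lam m n‖ ≤ K * connector (-(s : ℝ)) m n := by
  have hpoch := shiftedPoch_ne_zero (neg_natCast_ne_natCast s) m
  refine ⟨‖shiftedPoch lam m‖ * C ^ m / shiftedPoch (-(s : ℝ)) m, fun n => ?_⟩
  calc ‖connector lam m n‖ = ‖shiftedPoch lam m‖ * ∏ i ∈ range m, ‖invSub lam (n + i + 1)‖ := by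
        rw [connector_eq_mul_prod hlam, norm_mul, norm_prod]
    _ ≤ ‖shiftedPoch lam m‖ * ∏ i ∈ range m, (C * invSub (-(s : ℝ)) (n + i + 1)) :=
        mul_le_mul_of_nonneg_left (prod_le_prod (fun _ _ => norm_nonneg _) fun _ _ => hC _)
          (norm_nonneg _)
    _ = _ := by
        rw [connector_eq_mul_prod (neg_natCast_ne_natCast s), prod_mul_distrib, prod_const,
          card_range]
        field_simp

theorem norm_connector_add_le (hlam : ∀ p : ℕ, 0 < p → lam ≠ p) {s : ℕ} (hs : ‖lam‖ ≤ s)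
    (M n : ℕ) : ‖connector lam (M + 2 * s) n‖ ≤ connector (-(s : ℝ)) M n := by
  rw [connector_eq_prod hlam, connector_eq_prod (neg_natCast_ne_natCast s), norm_prod]
  refine prod_le_prod (fun _ _ => norm_nonneg _) fun i _ => ?_
  rw [norm_div, sub_neg_eq_add, sub_neg_eq_add]
  refine div_le_div₀ (by positivity) ?_ (by positivity) ?_
  · refine (norm_sub_le _ _).trans ?_
    rw [RCLike.norm_natCast]
    linarith
  · refine le_trans ?_ (norm_sub_norm_le _ _)
    rw [RCLike.norm_natCast]
    push_cast
    linarith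

theorem hasSum_invSub_mul_connector (hlam : ∀ p : ℕ, 0 < p → lam ≠ p) {m : ℕ} (hm : 0 < m)
    (r : ℕ) :
    HasSum (fun b => invSub lam (r + b + 1) * connector lam m (r + b + 1))
      (connector lam m r / m) := by
  obtain ⟨s, hs⟩ := exists_nat_gt ‖lam‖
  obtain ⟨C, -, hC⟩ := exists_norm_invSub_le hs
  obtain ⟨K, hK⟩ := norm_connector_le hlam hC m
  refine hasSum_invSub_mul_connector_of_summable hlam hm
    (((summable_invSub_mul_connector_neg s hm r).mul_left (C * K)).of_norm_bounded fun b => ?_)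
  rw [norm_mul, mul_mul_mul_comm]
  exact mul_le_mul (hC _) (hK _) (norm_nonneg _) ((norm_nonneg _).trans (hC _))

theorem hasSum_chain_connector_neg (s : ℕ) {m : ℕ} (hm : 0 < m) (j r : ℕ) :
    HasSum (chain (invSub (-(s : ℝ))) (connector (-(s : ℝ)) m) (j := j) r)
      (connector (-(s : ℝ)) m r / m ^ j) :=
  hasSum_chain_of_nonneg (invSub_neg_natCast_nonneg s) (connector_neg_natCast_nonneg s m)
    (hasSum_invSub_mul_connector (neg_natCast_ne_natCast s) hm) j r

theorem summable_norm_chain_connector (hlam : ∀ p : ℕ, 0 < p → lam ≠ p) {m : ℕ} (hm : 0 < m)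
    (j r : ℕ) : Summable fun g : Fin j → ℕ => ‖chain (invSub lam) (connector lam m) r g‖ := by
  obtain ⟨s, hs⟩ := exists_nat_gt ‖lam‖
  obtain ⟨C, -, hC⟩ := exists_norm_invSub_le hs
  obtain ⟨K, hK⟩ := norm_connector_le hlam hC m
  exact ((hasSum_chain_connector_neg s hm j r).summable.mul_left (C ^ j * K)).of_nonneg_of_le
    (fun _ => norm_nonneg _) (norm_chain_le hC hK r)

theorem hasSum_chain_connector (hlam : ∀ p : ℕ, 0 < p → lam ≠ p) {m : ℕ} (hm : 0 < m) (j r : ℕ) :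
    HasSum (chain (invSub lam) (connector lam m) (j := j) r) (connector lam m r / m ^ j) :=
  hasSum_chain (hasSum_invSub_mul_connector hlam hm)
    (fun j r => (summable_norm_chain_connector hlam hm j r).of_norm) j r

end Analysis

section Family

variable {𝕜 : Type*} [RCLike 𝕜] {lam : 𝕜}

def connectorFamily (lam : 𝕜) (k : ℕ) (p : ℕ × (Fin k → ℕ)) : 𝕜 :=
  invSub lam (p.1 + 1) * chain (invSub lam) (connector lam (p.1 + 1)) 0 p.2

theorem tsum_norm_connectorFamily_le (hlam : ∀ p : ℕ, 0 < p → lam ≠ p) {s : ℕ} (hs : ‖lam‖ < s)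
    {C : ℝ} (hC0 : 0 ≤ C) (hC : ∀ n, ‖invSub lam n‖ ≤ C * invSub (-(s : ℝ)) n) (k m : ℕ) :
    ∑' g, ‖connectorFamily lam k (m + 2 * s, g)‖ ≤
      C ^ (k + 1) * (((m + 1 : ℕ) : ℝ) ^ (k + 1))⁻¹ := by
  have hmaj := hasSum_chain_connector_neg s m.succ_pos k 0
  rw [connector_zero_right (neg_natCast_ne_natCast s)] at hmaj
  have hchain : ∑' g : Fin k → ℕ, ‖chain (invSub lam) (connector lam (m + 2 * s + 1)) 0 g‖
      ≤ C ^ k * (((m + 1 : ℕ) : ℝ) ^ k)⁻¹ := by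
    have hle := norm_chain_le (f := connector lam (m + 2 * s + 1))
      (f' := connector (-(s : ℝ)) (m + 1)) (K := 1) hC (fun n => by
      rw [one_mul, show m + 2 * s + 1 = m + 1 + 2 * s by ring]
      exact norm_connector_add_le hlam hs.le _ _) (j := k) 0
    calc _ ≤ ∑' g, C ^ k * 1 * chain (invSub (-(s : ℝ))) (connector (-(s : ℝ)) (m + 1)) 0 g :=
          (summable_norm_chain_connector hlam (Nat.succ_pos _) k 0).tsum_le_tsum hle
            (hmaj.summable.mul_left _)
      _ = _ := by rw [tsum_mul_left, hmaj.tsum_eq, one_div, mul_one]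
  have hinv : ‖invSub lam (m + 2 * s + 1)‖ ≤ C * ((m + 1 : ℕ) : ℝ)⁻¹ := by
    refine (hC _).trans (mul_le_mul_of_nonneg_left ?_ hC0)
    rw [invSub_neg_natCast]
    gcongr
    push_cast
    linarith [(Nat.cast_nonneg s : (0 : ℝ) ≤ s)]
  simp only [connectorFamily, norm_mul, tsum_mul_left]
  calc _ ≤ C * ((m + 1 : ℕ) : ℝ)⁻¹ * (C ^ k * (((m + 1 : ℕ) : ℝ) ^ k)⁻¹) :=
        mul_le_mul hinv hchain (tsum_nonneg fun _ => norm_nonneg _) (by positivity)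
    _ = _ := by ring

theorem summable_connectorFamily (hlam : ∀ p : ℕ, 0 < p → lam ≠ p) {k : ℕ} (hk : 1 ≤ k) :
    Summable (connectorFamily lam k) := by
  obtain ⟨s, hs⟩ := exists_nat_gt ‖lam‖
  obtain ⟨C, hC0, hC⟩ := exists_norm_invSub_le hs
  refine Summable.of_norm ((summable_prod_of_nonneg fun _ => norm_nonneg _).2 ⟨fun m => ?_, ?_⟩)
  · simp only [connectorFamily, norm_mul]
    exact (summable_norm_chain_connector hlam m.succ_pos k 0).mul_left _
  · rw [← summable_nat_add_iff (2 * s)]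
    exact Summable.of_nonneg_of_le (fun _ => tsum_nonneg fun _ => norm_nonneg _)
      (tsum_norm_connectorFamily_le hlam hs hC0 hC k)
      (((summable_nat_add_iff 1).2 (Real.summable_nat_pow_inv.2 (by omega))).mul_left _)

theorem hasSum_connectorFamily_gaps (hlam : ∀ p : ℕ, 0 < p → lam ≠ p) (k m : ℕ) :
    HasSum (fun g => connectorFamily lam k (m, g))
      ((((m + 1 : ℕ) : 𝕜) ^ k * (((m + 1 : ℕ) : 𝕜) - lam))⁻¹) := by
  have h := (hasSum_chain_connector hlam m.succ_pos k 0).mul_left (invSub lam (m + 1))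
  have hval : invSub lam (m + 1) * (connector lam (m + 1) 0 / ((m + 1 : ℕ) : 𝕜) ^ k)
      = (((m + 1 : ℕ) : 𝕜) ^ k * (((m + 1 : ℕ) : 𝕜) - lam))⁻¹ := by
    rw [connector_zero_right hlam, invSub, mul_inv]
    ring
  exact hval ▸ h

theorem hasSum_connectorFamily_first (hlam : ∀ p : ℕ, 0 < p → lam ≠ p) {k : ℕ} (hk : 1 ≤ k)
    (g : Fin k → ℕ) :
    HasSum (fun m => connectorFamily lam k (m, g))
      (chain (invSub lam) (fun n => (n : 𝕜)⁻¹) 0 g) := by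
  have htop : 0 < ofGaps g 0 := by rw [ofGaps_of_lt g hk]; omega
  have h := (hasSum_invSub_mul_connector hlam htop 0).mul_left
    (∏ i ∈ range k, invSub lam (0 + ofGaps g i))
  have hval : chain (invSub lam) (fun n => (n : 𝕜)⁻¹) 0 g
      = (∏ i ∈ range k, invSub lam (0 + ofGaps g i)) *
          (connector lam (ofGaps g 0) 0 / ofGaps g 0) := by
    simp only [chain, connector_zero_right hlam, one_div, zero_add]
  rw [hval]
  refine h.congr_fun fun m => ?_
  simp only [connectorFamily, chain, zero_add]
  rw [connector_comm]
  ring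

end Family

end ReducedOhno

open ReducedOhno in
/-- **The reduced Ohno relation `F(k;λ) = G(k;λ)` in depth one** (the generating-function
form of the sum formula of depth `k`):
`Σ_{m≥1} 1/(m^k (m-λ)) = Σ_{m₁>⋯>m_k≥1} 1/(m₁(m₁-λ)⋯(m_k-λ))`. -/
theorem reduced_ohno_depth_one (k : ℕ) (hk : 1 ≤ k)
    (lam : ℂ) (hlam : ∀ p : ℕ, 0 < p → lam ≠ (p : ℂ)) :
    ∑' m : ℕ, (((m + 1 : ℕ) : ℂ) ^ k * (((m + 1 : ℕ) : ℂ) - lam))⁻¹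
      = ∑' m : DecTuple k,
          ((m.1 0 : ℂ))⁻¹ * ∏ i ∈ Finset.range k, ((m.1 i : ℂ) - lam)⁻¹ := by
  have hF := (summable_connectorFamily hlam hk).hasSum
  have hLHS := hF.prod_fiberwise (hasSum_connectorFamily_gaps hlam k)
  have hchains := ((Equiv.prodComm _ _).hasSum_iff.2 hF).prod_fiberwise
    (hasSum_connectorFamily_first hlam hk)
  have hRHS : HasSum (fun m : DecTuple k =>
      ((m.1 0 : ℂ))⁻¹ * ∏ i ∈ Finset.range k, ((m.1 i : ℂ) - lam)⁻¹)
      (∑' p, connectorFamily lam k p) := by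
    refine (decTupleEquiv k).hasSum_iff.1 (hchains.congr_fun fun g => ?_)
    simp only [Function.comp, decTupleEquiv, Equiv.coe_fn_mk, chain, invSub, zero_add]
    ring
  exact hLHS.tsum_eq.trans hRHS.tsum_eq.symm
end

section
/- For every λ ∈ ℂ that is not a positive integer: Σ_{m_1>m_2≥1} 1/( m_1^2 (m_1−λ)(m_2−λ) ) = 2·Σ_{m≥1} 1/( m^3 (m−λ) ) + Σ_{m_1>m_2≥1} 1/( m_1 (m_1−λ) m_2^2 ) − ζ(2)·Σ_{m≥1} 1/( m (m−λ) ); in the notation of the paper, f(2,2;λ) = 2F(3;λ) + F(1,2;λ) − ζ(2)F(1;λ). -/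
open Finset Filter

namespace F22

lemma natc_eq (n : ℕ) : ((n:ℂ)+1) = ((n+1:ℕ):ℂ) := by push_cast; ring

lemma natc_ne (n : ℕ) : ((n:ℂ)+1) ≠ 0 := by
  exact Nat.cast_add_one_ne_zero n

lemma norm_natc (n : ℕ) : ‖((n:ℂ)+1)‖ = (n:ℝ)+1 := by
  rw [natc_eq, Complex.norm_natCast]; push_cast; ring

lemma sub_ne {lam : ℂ} (hlam : ∀ p : ℕ, 0 < p → lam ≠ (p : ℂ)) (n : ℕ) :
    ((n:ℂ)+1) - lam ≠ 0 := by
  rw [natc_eq, sub_ne_zero]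
  exact fun h => hlam (n+1) (Nat.succ_pos n) h.symm

lemma exists_c {lam : ℂ} (hlam : ∀ p : ℕ, 0 < p → lam ≠ (p : ℂ)) :
    ∃ c : ℝ, 0 < c ∧ c ≤ 1 ∧ ∀ n : ℕ, c * ((n:ℝ)+1) ≤ ‖((n:ℂ)+1) - lam‖ := by
  set K := ‖lam‖ with hK
  set N : ℕ := ⌈2*K⌉₊ with hN
  set c0 : ℝ := (Finset.range (N+1)).inf' (by simp) (fun n => ‖((n:ℂ)+1) - lam‖ / ((n:ℝ)+1))
    with hc0
  have hc0pos : 0 < c0 := by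
    rw [hc0, Finset.lt_inf'_iff]
    intro n _
    have h1 : ((n:ℂ)+1) - lam ≠ 0 := sub_ne hlam n
    have : (0:ℝ) < ‖((n:ℂ)+1) - lam‖ := norm_pos_iff.mpr h1
    positivity
  refine ⟨min (min c0 (1/2)) 1, ?_, ?_, ?_⟩
  · exact lt_min (lt_min hc0pos (by norm_num)) one_pos
  · exact min_le_right _ _
  · intro n
    set c : ℝ := min (min c0 (1/2)) 1 with hc
    have hc2 : c ≤ 1/2 := le_trans (min_le_left _ _) (min_le_right _ _)
    have hc0' : c ≤ c0 := le_trans (min_le_left _ _) (min_le_left _ _)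
    by_cases hn : n < N + 1
    · have h2 : c0 ≤ ‖((n:ℂ)+1) - lam‖ / ((n:ℝ)+1) :=
        Finset.inf'_le _ (Finset.mem_range.mpr hn)
      have hpos : (0:ℝ) < (n:ℝ)+1 := by positivity
      calc c * ((n:ℝ)+1) ≤ (‖((n:ℂ)+1) - lam‖ / ((n:ℝ)+1)) * ((n:ℝ)+1) :=
            mul_le_mul_of_nonneg_right (le_trans hc0' h2) hpos.le
        _ = ‖((n:ℂ)+1) - lam‖ := by field_simp
    · push_neg at hn
      have h2K : 2*K ≤ (n:ℝ) := by
        calc 2*K ≤ (N:ℝ) := Nat.le_ceil _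
          _ ≤ (n:ℝ) := by exact_mod_cast le_trans (Nat.le_succ N) hn
      have hnorm : ((n:ℝ)+1) - K ≤ ‖((n:ℂ)+1) - lam‖ := by
        have := norm_sub_norm_le ((n:ℂ)+1) lam
        rw [norm_natc] at this
        linarith
      calc c * ((n:ℝ)+1) ≤ (1/2) * ((n:ℝ)+1) :=
            mul_le_mul_of_nonneg_right hc2 (by positivity)
        _ ≤ ‖((n:ℂ)+1) - lam‖ := by linarith
-- ===== definitions =====

noncomputable def fa (lam : ℂ) (n : ℕ) : ℂ := (((n:ℂ)+1) * (((n:ℂ)+1) - lam))⁻¹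
noncomputable def fw (n : ℕ) : ℂ := (((n:ℂ)+1)^2)⁻¹
noncomputable def ff3 (lam : ℂ) (n : ℕ) : ℂ := (((n:ℂ)+1)^3 * (((n:ℂ)+1) - lam))⁻¹
noncomputable def fA (lam : ℂ) (p : ℕ×ℕ) : ℂ :=
  (((p.1:ℂ)+(p.2:ℂ)+2)^2 * (((p.1:ℂ)+(p.2:ℂ)+2) - lam) * (((p.2:ℂ)+1) - lam))⁻¹
noncomputable def fB (lam : ℂ) (p : ℕ×ℕ) : ℂ :=
  (((p.1:ℂ)+(p.2:ℂ)+2)^2 * ((p.2:ℂ)+1) * (((p.2:ℂ)+1) - lam))⁻¹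
noncomputable def fC (lam : ℂ) (p : ℕ×ℕ) : ℂ :=
  (((p.1:ℂ)+(p.2:ℂ)+2) * (((p.1:ℂ)+(p.2:ℂ)+2) - lam) * ((p.2:ℂ)+1) * (((p.2:ℂ)+1) - lam))⁻¹
noncomputable def fD (lam : ℂ) (p : ℕ×ℕ) : ℂ :=
  (((p.1:ℂ)+(p.2:ℂ)+2)^2 * (((p.1:ℂ)+(p.2:ℂ)+2) - lam) * ((p.2:ℂ)+1))⁻¹
noncomputable def fE (lam : ℂ) (p : ℕ×ℕ) : ℂ :=
  (((p.1:ℂ)+(p.2:ℂ)+2) * (((p.1:ℂ)+(p.2:ℂ)+2) - lam) * ((p.2:ℂ)+1)^2)⁻¹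
noncomputable def fh (lam : ℂ) (p : ℕ×ℕ) : ℂ := fa lam p.1 * fw p.2
noncomputable def fv1 (lam : ℂ) (p : ℕ×ℕ) : ℂ :=
  fa lam p.1 * (((p.2:ℂ)+1) * (((p.2:ℂ)+1) + ((p.1:ℂ)+1)))⁻¹
noncomputable def fPhi (lam : ℂ) (p : ℕ×ℕ) : ℂ :=
  if p.2 ≤ p.1 then (((p.1:ℂ)+1)^2 * (((p.1:ℂ)+1) - lam) * ((p.2:ℂ)+1))⁻¹ else 0
noncomputable def fu (lam : ℂ) (p : ℕ×ℕ) : ℂ :=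
  (((p.1:ℂ)+1) * ((p.2:ℂ)+1) * ((((p.1:ℂ)+1)+((p.2:ℂ)+1))) *
    (((((p.1:ℂ)+1)+((p.2:ℂ)+1))) - lam))⁻¹

-- ===== summability infrastructure =====

lemma S2 : Summable (fun n : ℕ => (((n:ℝ)+1)^2)⁻¹) := by
  have h : Summable (fun n : ℕ => 1/((n:ℝ))^2) :=
    (Real.summable_one_div_nat_pow (p := 2)).2 one_lt_two
  have := (summable_nat_add_iff (f := fun n : ℕ => 1/((n:ℝ))^2) 1).2 h
  apply this.congr
  intro n; push_cast; rw [one_div]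

lemma SG : Summable (fun p : ℕ×ℕ => ((((p.1:ℝ)+1)^2 * ((p.2:ℝ)+1)^2))⁻¹) := by
  have := S2.mul_of_nonneg S2 (fun n => by positivity) (fun n => by positivity)
  apply this.congr
  intro p
  simp only [mul_inv]

lemma norm_M (i j : ℕ) : ‖((i:ℂ)+(j:ℂ)+2)‖ = (i:ℝ)+(j:ℝ)+2 := by
  have h : ((i:ℂ)+(j:ℂ)+2) = (((i+j+1:ℕ)):ℂ)+1 := by push_cast; ring
  rw [h, norm_natc]; push_cast; ring

section lam
variable {lam : ℂ} {c : ℝ}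

lemma bound_Mlam (hb : ∀ n : ℕ, c * ((n:ℝ)+1) ≤ ‖((n:ℂ)+1) - lam‖) (i j : ℕ) :
    c * ((i:ℝ)+(j:ℝ)+2) ≤ ‖((i:ℂ)+(j:ℂ)+2) - lam‖ := by
  have := hb (i+j+1)
  have h1 : (((i+j+1:ℕ)):ℂ)+1 = ((i:ℂ)+(j:ℂ)+2) := by push_cast; ring
  have h2 : (((i+j+1:ℕ)):ℝ)+1 = ((i:ℝ)+(j:ℝ)+2) := by push_cast; ring
  rwa [h1, h2] at this

lemma inv_le_norm_inv {x : ℂ} {s : ℝ} (hs : 0 < s) (h : s ≤ ‖x‖) : ‖x⁻¹‖ ≤ s⁻¹ := by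
  rw [norm_inv]
  exact inv_anti₀ hs h

lemma summable_fa (hc : 0 < c) (hb : ∀ n : ℕ, c * ((n:ℝ)+1) ≤ ‖((n:ℂ)+1) - lam‖) :
    Summable (fa lam) := by
  apply Summable.of_norm_bounded (S2.mul_left c⁻¹)
  intro n
  rw [fa, show c⁻¹ * (((n:ℝ)+1)^2)⁻¹ = (c * ((n:ℝ)+1)^2)⁻¹ by rw [mul_inv]]
  apply inv_le_norm_inv (by positivity)
  rw [norm_mul, norm_natc]
  nlinarith [hb n, norm_nonneg (((n:ℂ)+1) - lam), Nat.cast_nonneg (α := ℝ) n]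

lemma summable_ff3 (hc : 0 < c) (hb : ∀ n : ℕ, c * ((n:ℝ)+1) ≤ ‖((n:ℂ)+1) - lam‖) :
    Summable (ff3 lam) := by
  apply Summable.of_norm_bounded (S2.mul_left c⁻¹)
  intro n
  rw [ff3, show c⁻¹ * (((n:ℝ)+1)^2)⁻¹ = (c * ((n:ℝ)+1)^2)⁻¹ by rw [mul_inv]]
  apply inv_le_norm_inv (by positivity)
  rw [norm_mul, norm_pow, norm_natc]
  calc c * ((n:ℝ)+1)^2 ≤ c * ((n:ℝ)+1)^4 := by
        have hx1 : (1:ℝ) ≤ ((n:ℝ)+1)^2 := by nlinarith [Nat.cast_nonneg (α := ℝ) n]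
        nlinarith [mul_le_mul_of_nonneg_left hx1
          (le_of_lt (mul_pos hc (show (0:ℝ) < ((n:ℝ)+1)^2 by positivity)))]
    _ = ((n:ℝ)+1)^3 * (c*((n:ℝ)+1)) := by ring
    _ ≤ ((n:ℝ)+1)^3 * ‖((n:ℂ)+1) - lam‖ := mul_le_mul_of_nonneg_left (hb n) (by positivity)

lemma summable_fw : Summable fw := by
  apply Summable.of_norm_bounded S2
  intro n
  rw [fw, norm_inv, norm_pow, norm_natc]

lemma summable_of_bound2 (f : ℕ×ℕ → ℂ) (K : ℝ)
    (h : ∀ p : ℕ×ℕ, ‖f p‖ ≤ (K * (((p.1:ℝ)+1)^2 * ((p.2:ℝ)+1)^2))⁻¹) : Summable f := by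
  apply Summable.of_norm_bounded (SG.mul_left K⁻¹)
  intro p
  rw [show K⁻¹ * ((((p.1:ℝ)+1)^2 * ((p.2:ℝ)+1)^2))⁻¹
      = (K * (((p.1:ℝ)+1)^2*((p.2:ℝ)+1)^2))⁻¹ from (mul_inv _ _).symm]
  exact h p

lemma key_cube {α β m : ℝ} (hα0 : 0 < α) (hβ0 : 0 < β) (hm0 : 0 < m)
    (hαm : α ≤ m) (hβm : β ≤ m) : α^2*β^2 ≤ m^3*β := by
  have k1 : α*α*β ≤ m*m*m :=
    mul_le_mul (mul_le_mul hαm hαm hα0.le hm0.le) hβm hβ0.le (mul_nonneg hm0.le hm0.le)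
  have := mul_le_mul_of_nonneg_right k1 hβ0.le
  calc α^2*β^2 = (α*α*β)*β := by ring
    _ ≤ (m*m*m)*β := this
    _ = m^3*β := by ring

variable (hc : 0 < c) (hb : ∀ n : ℕ, c * ((n:ℝ)+1) ≤ ‖((n:ℂ)+1) - lam‖)
include hc hb

lemma summable_fA : Summable (fA lam) := by
  apply summable_of_bound2 _ (c*c)
  rintro ⟨i,j⟩
  rw [fA]
  apply inv_le_norm_inv (by positivity)
  rw [norm_mul, norm_mul, norm_pow, norm_M]
  have hα0 : (0:ℝ) < (i:ℝ)+1 := by positivity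
  have hβ0 : (0:ℝ) < (j:ℝ)+1 := by positivity
  have hm0 : (0:ℝ) < (i:ℝ)+(j:ℝ)+2 := by positivity
  have h1 := bound_Mlam hb i j
  have h2 := hb j
  have key : ((i:ℝ)+1)^2*((j:ℝ)+1)^2 ≤ ((i:ℝ)+(j:ℝ)+2)^3*((j:ℝ)+1) :=
    key_cube hα0 hβ0 hm0 (by linarith) (by linarith)
  calc c*c*(((i:ℝ)+1)^2*((j:ℝ)+1)^2) ≤ c*c*(((i:ℝ)+(j:ℝ)+2)^3*((j:ℝ)+1)) :=
        mul_le_mul_of_nonneg_left key (by positivity)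
    _ = ((i:ℝ)+(j:ℝ)+2)^2*((c*((i:ℝ)+(j:ℝ)+2))*(c*((j:ℝ)+1))) := by ring
    _ ≤ ((i:ℝ)+(j:ℝ)+2)^2*(‖((i:ℂ)+(j:ℂ)+2) - lam‖*‖((j:ℂ)+1) - lam‖) := by
        apply mul_le_mul_of_nonneg_left _ (by positivity)
        exact mul_le_mul h1 h2 (by positivity) (le_trans (by positivity) h1)
    _ = ((i:ℝ)+(j:ℝ)+2)^2*‖((i:ℂ)+(j:ℂ)+2) - lam‖*‖((j:ℂ)+1) - lam‖ := by ring

lemma summable_fB : Summable (fB lam) := by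
  apply summable_of_bound2 _ c
  rintro ⟨i,j⟩
  rw [fB]
  apply inv_le_norm_inv (by positivity)
  rw [norm_mul, norm_mul, norm_pow, norm_M, norm_natc]
  have h2 := hb j
  have hiR : (0:ℝ) ≤ (i:ℝ) := Nat.cast_nonneg i
  have hjR : (0:ℝ) ≤ (j:ℝ) := Nat.cast_nonneg j
  have key : ((i:ℝ)+1)^2 ≤ ((i:ℝ)+(j:ℝ)+2)^2 := by nlinarith
  calc c*(((i:ℝ)+1)^2*((j:ℝ)+1)^2)
      ≤ c*(((i:ℝ)+(j:ℝ)+2)^2*((j:ℝ)+1)^2) := by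
        apply mul_le_mul_of_nonneg_left _ hc.le
        apply mul_le_mul_of_nonneg_right key (by positivity)
    _ = ((i:ℝ)+(j:ℝ)+2)^2*((j:ℝ)+1)*(c*((j:ℝ)+1)) := by ring
    _ ≤ ((i:ℝ)+(j:ℝ)+2)^2*((j:ℝ)+1)*‖((j:ℂ)+1) - lam‖ :=
        mul_le_mul_of_nonneg_left h2 (by positivity)

lemma summable_fC : Summable (fC lam) := by
  apply summable_of_bound2 _ (c*c)
  rintro ⟨i,j⟩
  rw [fC]
  apply inv_le_norm_inv (by positivity)
  rw [norm_mul, norm_mul, norm_mul, norm_M, norm_natc]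
  have h1 := bound_Mlam hb i j
  have h2 := hb j
  have hiR : (0:ℝ) ≤ (i:ℝ) := Nat.cast_nonneg i
  have hjR : (0:ℝ) ≤ (j:ℝ) := Nat.cast_nonneg j
  have key : ((i:ℝ)+1)^2 ≤ ((i:ℝ)+(j:ℝ)+2)^2 := by nlinarith
  calc c*c*(((i:ℝ)+1)^2*((j:ℝ)+1)^2)
      ≤ c*c*(((i:ℝ)+(j:ℝ)+2)^2*((j:ℝ)+1)^2) := by
        apply mul_le_mul_of_nonneg_left _ (by positivity)
        apply mul_le_mul_of_nonneg_right key (by positivity)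
    _ = (((i:ℝ)+(j:ℝ)+2)*((j:ℝ)+1))*((c*(((i:ℝ)+(j:ℝ)+2)))*(c*((j:ℝ)+1))) := by ring
    _ ≤ (((i:ℝ)+(j:ℝ)+2)*((j:ℝ)+1))*(‖((i:ℂ)+(j:ℂ)+2) - lam‖*‖((j:ℂ)+1) - lam‖) := by
        apply mul_le_mul_of_nonneg_left _ (by positivity)
        exact mul_le_mul h1 h2 (by positivity) (le_trans (by positivity) h1)
    _ = ((i:ℝ)+(j:ℝ)+2)*‖((i:ℂ)+(j:ℂ)+2) - lam‖*((j:ℝ)+1)*‖((j:ℂ)+1) - lam‖ := by ring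

lemma summable_fD : Summable (fD lam) := by
  apply summable_of_bound2 _ c
  rintro ⟨i,j⟩
  rw [fD]
  apply inv_le_norm_inv (by positivity)
  rw [norm_mul, norm_mul, norm_pow, norm_M, norm_natc]
  have h1 := bound_Mlam hb i j
  have hα0 : (0:ℝ) < (i:ℝ)+1 := by positivity
  have hβ0 : (0:ℝ) < (j:ℝ)+1 := by positivity
  have hm0 : (0:ℝ) < (i:ℝ)+(j:ℝ)+2 := by positivity
  have key : ((i:ℝ)+1)^2*((j:ℝ)+1)^2 ≤ ((i:ℝ)+(j:ℝ)+2)^3*((j:ℝ)+1) :=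
    key_cube hα0 hβ0 hm0 (by linarith) (by linarith)
  calc c*(((i:ℝ)+1)^2*((j:ℝ)+1)^2) ≤ c*(((i:ℝ)+(j:ℝ)+2)^3*((j:ℝ)+1)) :=
        mul_le_mul_of_nonneg_left key hc.le
    _ = ((i:ℝ)+(j:ℝ)+2)^2*(c*((i:ℝ)+(j:ℝ)+2))*((j:ℝ)+1) := by ring
    _ ≤ ((i:ℝ)+(j:ℝ)+2)^2*‖((i:ℂ)+(j:ℂ)+2) - lam‖*((j:ℝ)+1) := by
        apply mul_le_mul_of_nonneg_right _ (by positivity)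
        exact mul_le_mul_of_nonneg_left h1 (by positivity)

lemma norm_fa_le (n : ℕ) : ‖fa lam n‖ ≤ (c*((n:ℝ)+1)^2)⁻¹ := by
  rw [fa]
  apply inv_le_norm_inv (by positivity)
  rw [norm_mul, norm_natc]
  nlinarith [hb n, norm_nonneg (((n:ℂ)+1) - lam), Nat.cast_nonneg (α := ℝ) n]

lemma summable_fh : Summable (fh lam) := by
  apply summable_of_bound2 _ c
  rintro ⟨i,j⟩
  rw [fh, norm_mul]
  rw [show (c * (((i:ℝ)+1)^2 * ((j:ℝ)+1)^2))⁻¹ = (c*((i:ℝ)+1)^2)⁻¹ * (((j:ℝ)+1)^2)⁻¹ by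
    rw [← mul_inv]; ring_nf]
  apply mul_le_mul (norm_fa_le hc hb i) _ (norm_nonneg _) (by positivity)
  rw [fw, norm_inv, norm_pow, norm_natc]

lemma summable_fv1 : Summable (fv1 lam) := by
  apply summable_of_bound2 _ c
  rintro ⟨i,j⟩
  rw [fv1, norm_mul]
  rw [show (c * (((i:ℝ)+1)^2 * ((j:ℝ)+1)^2))⁻¹ = (c*((i:ℝ)+1)^2)⁻¹ * (((j:ℝ)+1)^2)⁻¹ by
    rw [← mul_inv]; ring_nf]
  apply mul_le_mul (norm_fa_le hc hb i) _ (norm_nonneg _) (by positivity)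
  apply inv_le_norm_inv (by positivity)
  rw [norm_mul, norm_natc, show ((j:ℂ)+1) + ((i:ℂ)+1) = ((j:ℂ)+(i:ℂ)+2) by ring, norm_M]
  have hiR : (0:ℝ) ≤ (i:ℝ) := Nat.cast_nonneg i
  nlinarith [Nat.cast_nonneg (α := ℝ) j]

lemma summable_fPhi : Summable (fPhi lam) := by
  apply summable_of_bound2 _ c
  rintro ⟨i,j⟩
  rw [fPhi]
  by_cases hij : j ≤ i
  · rw [if_pos hij]
    apply inv_le_norm_inv (by positivity)
    rw [norm_mul, norm_mul, norm_pow, norm_natc, norm_natc]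
    have h1 := hb i
    have hji : (j:ℝ) ≤ (i:ℝ) := Nat.cast_le.mpr hij
    have hβ0 : (0:ℝ) < (j:ℝ)+1 := by positivity
    calc c*(((i:ℝ)+1)^2*((j:ℝ)+1)^2) ≤ c*(((i:ℝ)+1)^3*((j:ℝ)+1)) := by
          apply mul_le_mul_of_nonneg_left _ hc.le
          have hji1 : (j:ℝ)+1 ≤ (i:ℝ)+1 := by linarith
          nlinarith [mul_le_mul_of_nonneg_left hji1
            (show (0:ℝ) ≤ ((i:ℝ)+1)^2*((j:ℝ)+1) by positivity)]
      _ = ((i:ℝ)+1)^2*(c*((i:ℝ)+1))*((j:ℝ)+1) := by ring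
      _ ≤ ((i:ℝ)+1)^2*‖((i:ℂ)+1) - lam‖*((j:ℝ)+1) := by
          apply mul_le_mul_of_nonneg_right _ hβ0.le
          exact mul_le_mul_of_nonneg_left h1 (by positivity)
  · rw [if_neg hij]
    simp only [norm_zero]
    positivity

end lam

-- ===== index splitting machinery =====

def sLT : Set (ℕ×ℕ) := {p | p.2 < p.1}
def t0 : Set (ℕ×ℕ) := {q | q.2 = 0}

def eLT : ℕ×ℕ ≃ ↥sLT where
  toFun q := ⟨(q.2+q.1+1, q.2), by simp only [sLT, Set.mem_setOf_eq]; omega⟩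
  invFun x := (x.1.1 - x.1.2 - 1, x.1.2)
  left_inv q := by
    obtain ⟨a,b⟩ := q
    show ((b+a+1) - b - 1, b) = (a, b)
    simp only [Prod.mk.injEq, and_true, true_and]
    omega
  right_inv x := by
    obtain ⟨⟨a,b⟩, h⟩ := x
    have hh : b < a := h
    apply Subtype.ext
    show (b + (a - b - 1) + 1, b) = (a, b)
    simp only [Prod.mk.injEq, and_true, true_and]
    omega

def eLE : ℕ×ℕ ≃ ↥sLTᶜ where
  toFun q := ⟨(q.1, q.1+q.2), by simp only [sLT, Set.mem_compl_iff, Set.mem_setOf_eq, not_lt]; omega⟩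
  invFun x := (x.1.1, x.1.2 - x.1.1)
  left_inv q := by
    obtain ⟨a,b⟩ := q
    show (a, (a+b) - a) = (a, b)
    simp only [Prod.mk.injEq, and_true, true_and]
    omega
  right_inv x := by
    obtain ⟨⟨a,b⟩, h⟩ := x
    have hh : a ≤ b := not_lt.mp h
    apply Subtype.ext
    show (a, a + (b - a)) = (a, b)
    simp only [Prod.mk.injEq, and_true, true_and]
    omega

def e0 : ℕ ≃ ↥t0 where
  toFun i := ⟨(i, 0), rfl⟩
  invFun x := x.1.1
  left_inv i := rfl
  right_inv x := by
    obtain ⟨⟨a,b⟩, h⟩ := x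
    have hh : b = 0 := h
    apply Subtype.ext
    show (a, 0) = (a, b)
    simp only [Prod.mk.injEq, and_true, true_and]
    omega

def ep0 : ℕ×ℕ ≃ ↥t0ᶜ where
  toFun q := ⟨(q.1, q.2+1), by simp only [t0, Set.mem_compl_iff, Set.mem_setOf_eq]; omega⟩
  invFun x := (x.1.1, x.1.2 - 1)
  left_inv q := by
    obtain ⟨a,b⟩ := q
    show (a, (b+1) - 1) = (a, b)
    simp only [Prod.mk.injEq, and_true, true_and]
    omega
  right_inv x := by
    obtain ⟨⟨a,b⟩, h⟩ := x
    have hh : ¬ b = 0 := h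
    apply Subtype.ext
    show (a, (b-1) + 1) = (a, b)
    simp only [Prod.mk.injEq, and_true, true_and]
    omega

lemma tsum_splitpair (g : ℕ×ℕ → ℂ) (hg : Summable g) :
    ∑' q, g q = (∑' i : ℕ, g (i, 0)) + ∑' q : ℕ×ℕ, g (q.1, q.2+1) := by
  have h1 := Summable.tsum_add_tsum_compl (f := g) (s := t0) (hg.subtype _) (hg.subtype _)
  rw [← h1]
  congr 1
  · rw [← e0.tsum_eq (fun x : ↥t0 => g x)]
    exact tsum_congr fun i => rfl
  · rw [← ep0.tsum_eq (fun x : ↥t0ᶜ => g x)]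
    exact tsum_congr fun q => rfl

lemma tsum_swap (g : ℕ×ℕ → ℂ) : ∑' q : ℕ×ℕ, g (q.2, q.1) = ∑' p, g p := by
  rw [← (Equiv.prodComm ℕ ℕ).tsum_eq g]
  exact tsum_congr fun q => rfl

lemma threeSplit (g : ℕ×ℕ → ℂ) (hg : Summable g) :
    ∑' p, g p = (∑' q : ℕ×ℕ, g (q.2+q.1+1, q.2)) +
      ((∑' i : ℕ, g (i, i)) + ∑' q : ℕ×ℕ, g (q.1, q.1+q.2+1)) := by
  have h1 := Summable.tsum_add_tsum_compl (f := g) (s := sLT) (hg.subtype _) (hg.subtype _)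
  rw [← h1]
  congr 1
  · rw [← eLT.tsum_eq (fun x : ↥sLT => g x)]
    exact tsum_congr fun q => rfl
  · have h2 : ∑' (x : ↥sLTᶜ), g x = ∑' q : ℕ×ℕ, g (q.1, q.1+q.2) := by
      rw [← eLE.tsum_eq (fun x : ↥sLTᶜ => g x)]
      exact tsum_congr fun q => rfl
    rw [h2]
    have hg2 : Summable (fun q : ℕ×ℕ => g (q.1, q.1+q.2)) := by
      have hs := hg.subtype sLTᶜ
      have := (eLE.summable_iff (f := fun x : ↥sLTᶜ => g x)).2 hs
      apply this.congr
      intro q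
      rfl
    rw [tsum_splitpair _ hg2]
    congr 1

-- ===== telescoping: ∑_{i} 1/((i+1)(i+j+2)) = H_{j+1}/(j+1) =====

lemma tele_hasSum (k : ℕ) :
    HasSum (fun i : ℕ => (((i+k:ℕ):ℂ)+1)⁻¹ - (((i+k+1:ℕ):ℂ)+1)⁻¹) (((k:ℂ)+1)⁻¹) := by
  have heq : ∀ i : ℕ, (((i+k:ℕ):ℂ)+1)⁻¹ - (((i+k+1:ℕ):ℂ)+1)⁻¹
      = ((((i+k:ℕ):ℂ)+1) * ((((i+k+1:ℕ):ℂ))+1))⁻¹ := by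
    intro i
    rw [inv_sub_inv (natc_ne _) (natc_ne _),
      show ((((i+k+1:ℕ):ℂ))+1) - ((((i+k:ℕ):ℂ))+1) = 1 by push_cast; ring, one_div]
  have hbound : ∀ i : ℕ, ‖(((i+k:ℕ):ℂ)+1)⁻¹ - (((i+k+1:ℕ):ℂ)+1)⁻¹‖ ≤ (((i:ℝ)+1)^2)⁻¹ := by
    intro i
    rw [heq i, norm_inv, norm_mul, norm_natc, norm_natc]
    have h1 : (0:ℝ) ≤ (k:ℝ) := Nat.cast_nonneg k
    have h2 : (0:ℝ) ≤ (i:ℝ) := Nat.cast_nonneg i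
    apply inv_anti₀ (by positivity)
    push_cast
    nlinarith
  have hnorm : Summable (fun i : ℕ => ‖(((i+k:ℕ):ℂ)+1)⁻¹ - (((i+k+1:ℕ):ℂ)+1)⁻¹‖) :=
    Summable.of_nonneg_of_le (fun _ => norm_nonneg _) hbound S2
  rw [hasSum_iff_tendsto_nat_of_summable_norm hnorm]
  have hps : ∀ n : ℕ, ∑ i ∈ Finset.range n, ((((i+k:ℕ):ℂ)+1)⁻¹ - (((i+k+1:ℕ):ℂ)+1)⁻¹)
      = ((k:ℂ)+1)⁻¹ - (((n+k:ℕ):ℂ)+1)⁻¹ := by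
    intro n
    have := Finset.sum_range_sub' (fun i => (((i+k:ℕ):ℂ)+1)⁻¹) n
    simp only [Nat.zero_add] at this
    rw [← this]
    apply Finset.sum_congr rfl
    intro i _
    rw [show i+1+k = i+k+1 from by omega]
  simp only [hps]
  have htend : Tendsto (fun n : ℕ => (((n+k:ℕ):ℂ)+1)⁻¹) atTop (nhds 0) := by
    rw [tendsto_zero_iff_norm_tendsto_zero]
    apply squeeze_zero (fun n => norm_nonneg _) (g := fun n : ℕ => ((n:ℝ)+1)⁻¹)
    · intro n
      rw [norm_inv, norm_natc]
      apply inv_anti₀ (by positivity)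
      push_cast
      nlinarith [Nat.cast_nonneg (α := ℝ) k]
    · have := tendsto_one_div_add_atTop_nhds_zero_nat (𝕜 := ℝ)
      apply this.congr
      intro n
      rw [one_div]
  have := (tendsto_const_nhds (x := ((k:ℂ)+1)⁻¹) (f := atTop (α := ℕ))).sub htend
  simpa using this

lemma hasSum_inner (j : ℕ) :
    HasSum (fun i : ℕ => (((i:ℂ)+1) * (((i:ℂ)+1) + ((j:ℂ)+1)))⁻¹)
      (((j:ℂ)+1)⁻¹ * ∑ k ∈ Finset.range (j+1), ((k:ℂ)+1)⁻¹) := by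
  have h1 : ∀ i : ℕ, (((i:ℂ)+1) * (((i:ℂ)+1) + ((j:ℂ)+1)))⁻¹
      = ((j:ℂ)+1)⁻¹ * (∑ k ∈ Finset.range (j+1),
          ((((i+k:ℕ):ℂ)+1)⁻¹ - (((i+k+1:ℕ):ℂ)+1)⁻¹)) := by
    intro i
    have hc : (∑ k ∈ Finset.range (j+1), ((((i+k:ℕ):ℂ)+1)⁻¹ - (((i+k+1:ℕ):ℂ)+1)⁻¹))
        = ∑ k ∈ Finset.range (j+1), ((((i+k:ℕ):ℂ)+1)⁻¹ - (((i+(k+1):ℕ):ℂ)+1)⁻¹) := rfl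
    rw [hc, Finset.sum_range_sub' (fun k => (((i+k:ℕ):ℂ)+1)⁻¹) (j+1)]
    have hi := natc_ne i
    have hj := natc_ne j
    have hij : ((i:ℂ)+1) + ((j:ℂ)+1) ≠ 0 := by
      have := natc_ne (i+j+1)
      push_cast at this ⊢
      intro hcon
      apply this
      linear_combination hcon
    have e1 : (((i+(j+1):ℕ)):ℂ)+1 = ((i:ℂ)+1) + ((j:ℂ)+1) := by push_cast; ring
    have e0 : (((i+0:ℕ)):ℂ)+1 = ((i:ℂ)+1) := by push_cast; ring
    rw [e1, e0]
    field_simp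
    try ring
  have h2 : HasSum (fun i : ℕ => ∑ k ∈ Finset.range (j+1),
      ((((i+k:ℕ):ℂ)+1)⁻¹ - (((i+k+1:ℕ):ℂ)+1)⁻¹))
      (∑ k ∈ Finset.range (j+1), ((k:ℂ)+1)⁻¹) :=
    hasSum_sum (fun k _ => tele_hasSum k)
  have h3 := h2.mul_left (((j:ℂ)+1)⁻¹)
  rw [show (fun i : ℕ => (((i:ℂ)+1) * (((i:ℂ)+1) + ((j:ℂ)+1)))⁻¹)
    = fun i => ((j:ℂ)+1)⁻¹ * (∑ k ∈ Finset.range (j+1),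
        ((((i+k:ℕ):ℂ)+1)⁻¹ - (((i+k+1:ℕ):ℂ)+1)⁻¹)) from funext h1]
  exact h3

-- ===== abstract algebraic identities =====

lemma alg3 {M N L : ℂ} (hM : M ≠ 0) (hN : N ≠ 0) (hML : M - L ≠ 0) (hNL : N - L ≠ 0) :
    (M^2*(M-L)*(N-L))⁻¹ + (M^2*N*(N-L))⁻¹ = (M*(M-L)*N*(N-L))⁻¹ + (M^2*(M-L)*N)⁻¹ := by
  have hM2 : M^2 ≠ 0 := pow_ne_zero 2 hM
  have h1 : M^2*(M-L)*(N-L) ≠ 0 := mul_ne_zero (mul_ne_zero hM2 hML) hNL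
  have h2 : M^2*N*(N-L) ≠ 0 := mul_ne_zero (mul_ne_zero hM2 hN) hNL
  have h3 : M*(M-L)*N*(N-L) ≠ 0 := mul_ne_zero (mul_ne_zero (mul_ne_zero hM hML) hN) hNL
  have h4 : M^2*(M-L)*N ≠ 0 := mul_ne_zero (mul_ne_zero hM2 hML) hN
  rw [inv_add_inv h1 h2, inv_add_inv h3 h4, div_eq_div_iff (mul_ne_zero h1 h2) (mul_ne_zero h3 h4)]
  ring

lemma alg4 {a b L : ℂ} (ha : a ≠ 0) (hb : b ≠ 0) (hs : a+b ≠ 0) (hsL : a+b-L ≠ 0) :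
    (a*b*(a+b)*((a+b)-L))⁻¹ = ((a+b)^2*((a+b)-L)*a)⁻¹ + ((a+b)^2*((a+b)-L)*b)⁻¹ := by
  have hs2 : (a+b)^2 ≠ 0 := pow_ne_zero 2 hs
  have h0 : a*b*(a+b)*((a+b)-L) ≠ 0 :=
    mul_ne_zero (mul_ne_zero (mul_ne_zero ha hb) hs) hsL
  have h1 : (a+b)^2*((a+b)-L)*a ≠ 0 := mul_ne_zero (mul_ne_zero hs2 hsL) ha
  have h2 : (a+b)^2*((a+b)-L)*b ≠ 0 := mul_ne_zero (mul_ne_zero hs2 hsL) hb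
  rw [inv_add_inv h1 h2, inv_eq_one_div, div_eq_div_iff h0 (mul_ne_zero h1 h2)]
  ring

lemma alg5 {n m L : ℂ} (hn : n ≠ 0) (hm : m ≠ 0) (hnL : n - L ≠ 0) (hs : n+m ≠ 0)
    (hsL : n+m-L ≠ 0) :
    (n*m*(n+m)*((n+m)-L))⁻¹
      = (n*(n-L))⁻¹ * (m*(m+n))⁻¹ - ((m+n)*((m+n)-L)*n*(n-L))⁻¹ := by
  have hs' : m+n ≠ 0 := by rwa [add_comm]
  have hsL' : (m+n)-L ≠ 0 := by rwa [add_comm m n]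
  have h0 : n*m*(n+m)*((n+m)-L) ≠ 0 :=
    mul_ne_zero (mul_ne_zero (mul_ne_zero hn hm) hs) hsL
  have h1 : (n*(n-L))*(m*(m+n)) ≠ 0 :=
    mul_ne_zero (mul_ne_zero hn hnL) (mul_ne_zero hm hs')
  have h2 : (m+n)*((m+n)-L)*n*(n-L) ≠ 0 :=
    mul_ne_zero (mul_ne_zero (mul_ne_zero hs' hsL') hn) hnL
  rw [← mul_inv, inv_sub_inv h1 h2, inv_eq_one_div,
    div_eq_div_iff h0 (mul_ne_zero h1 h2)]
  ring

-- ===== main steps =====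

section main
variable {lam : ℂ} {c : ℝ}

lemma M_ne (i j : ℕ) : ((i:ℂ)+(j:ℂ)+2) ≠ 0 := by
  have h := natc_ne (i+j+1)
  push_cast at h ⊢
  intro hcon
  exact h (by linear_combination hcon)

lemma Mlam_ne (hlam : ∀ p : ℕ, 0 < p → lam ≠ (p : ℂ)) (i j : ℕ) :
    ((i:ℂ)+(j:ℂ)+2) - lam ≠ 0 := by
  have h := sub_ne hlam (i+j+1)
  push_cast at h ⊢
  intro hcon
  exact h (by linear_combination hcon)

lemma sum_ne (i j : ℕ) : ((i:ℂ)+1)+((j:ℂ)+1) ≠ 0 := by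
  have h := M_ne i j
  intro hcon
  exact h (by linear_combination hcon)

lemma sumlam_ne (hlam : ∀ p : ℕ, 0 < p → lam ≠ (p : ℂ)) (i j : ℕ) :
    ((i:ℂ)+1)+((j:ℂ)+1) - lam ≠ 0 := by
  have h := Mlam_ne hlam i j
  intro hcon
  exact h (by linear_combination hcon)

lemma step2 (hc : 0 < c) (hb : ∀ n : ℕ, c * ((n:ℝ)+1) ≤ ‖((n:ℂ)+1) - lam‖) :
    (∑' n : ℕ, fw n) * (∑' n : ℕ, fa lam n)
      = ((∑' p : ℕ×ℕ, fE lam p) + (∑' n : ℕ, ff3 lam n)) + ∑' p : ℕ×ℕ, fB lam p := by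
  have hfh := summable_fh hc hb
  have hgrid : ∑' p : ℕ×ℕ, fh lam p = (∑' n : ℕ, fa lam n) * (∑' n : ℕ, fw n) := by
    rw [Summable.tsum_prod hfh]
    calc ∑' i, ∑' j, fh lam (i,j) = ∑' i : ℕ, (fa lam i * ∑' j : ℕ, fw j) := by
          apply tsum_congr
          intro i
          simp only [fh]
          exact tsum_mul_left
      _ = (∑' n : ℕ, fa lam n) * (∑' n : ℕ, fw n) := tsum_mul_right
  have hsplit := threeSplit (fh lam) hfh
  have part1 : (∑' q : ℕ×ℕ, fh lam (q.2+q.1+1, q.2)) = ∑' p : ℕ×ℕ, fE lam p := by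
    apply tsum_congr
    intro q
    simp only [fh, fa, fw, fE]
    rw [← mul_inv]
    congr 1
    push_cast
    ring
  have part2 : (∑' i : ℕ, fh lam (i,i)) = ∑' n : ℕ, ff3 lam n := by
    apply tsum_congr
    intro i
    simp only [fh, fa, fw, ff3]
    rw [← mul_inv]
    congr 1
    ring
  have part3 : (∑' q : ℕ×ℕ, fh lam (q.1, q.1+q.2+1)) = ∑' p : ℕ×ℕ, fB lam p := by
    rw [← tsum_swap (fB lam)]
    apply tsum_congr
    intro q
    simp only [fh, fa, fw, fB]
    rw [← mul_inv]
    congr 1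
    push_cast
    ring
  rw [hsplit] at hgrid
  rw [part1, part2, part3] at hgrid
  linear_combination -hgrid

lemma step3 (hlam : ∀ p : ℕ, 0 < p → lam ≠ (p : ℂ)) (hc : 0 < c)
    (hb : ∀ n : ℕ, c * ((n:ℝ)+1) ≤ ‖((n:ℂ)+1) - lam‖) :
    (∑' p : ℕ×ℕ, fA lam p) + (∑' p : ℕ×ℕ, fB lam p)
      = (∑' p : ℕ×ℕ, fC lam p) + ∑' p : ℕ×ℕ, fD lam p := by
  rw [← Summable.tsum_add (summable_fA hc hb) (summable_fB hc hb),
      ← Summable.tsum_add (summable_fC hc hb) (summable_fD hc hb)]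
  apply tsum_congr
  rintro ⟨i,j⟩
  simp only [fA, fB, fC, fD]
  exact alg3 (M_ne i j) (natc_ne j) (Mlam_ne hlam i j) (sub_ne hlam j)

lemma step4 (hlam : ∀ p : ℕ, 0 < p → lam ≠ (p : ℂ)) (hc : 0 < c)
    (hb : ∀ n : ℕ, c * ((n:ℝ)+1) ≤ ‖((n:ℂ)+1) - lam‖) :
    (∑' p : ℕ×ℕ, fu lam p) = (∑' p : ℕ×ℕ, fD lam p) + ∑' p : ℕ×ℕ, fD lam p := by
  have hD := summable_fD hc hb
  have hDs : Summable (fun q : ℕ×ℕ => fD lam (q.2, q.1)) := by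
    have := ((Equiv.prodComm ℕ ℕ).summable_iff (f := fD lam)).2 hD
    apply this.congr
    intro q
    rfl
  have hpoint : ∀ p : ℕ×ℕ, fu lam p = fD lam (p.2, p.1) + fD lam p := by
    rintro ⟨i,j⟩
    simp only [fu, fD]
    have e1 : (((j:ℂ)+(i:ℂ)+2)^2*(((j:ℂ)+(i:ℂ)+2)-lam)*((i:ℂ)+1))⁻¹
        = ((((i:ℂ)+1)+((j:ℂ)+1))^2*(((((i:ℂ)+1)+((j:ℂ)+1)))-lam)*((i:ℂ)+1))⁻¹ := by
      congr 1
      ring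
    have e2 : (((i:ℂ)+(j:ℂ)+2)^2*(((i:ℂ)+(j:ℂ)+2)-lam)*((j:ℂ)+1))⁻¹
        = ((((i:ℂ)+1)+((j:ℂ)+1))^2*(((((i:ℂ)+1)+((j:ℂ)+1)))-lam)*((j:ℂ)+1))⁻¹ := by
      congr 1
      ring
    rw [e1, e2]
    exact alg4 (natc_ne i) (natc_ne j) (sum_ne i j) (sumlam_ne hlam i j)
  rw [tsum_congr hpoint, Summable.tsum_add hDs hD, tsum_swap (fD lam)]

lemma step5 (hlam : ∀ p : ℕ, 0 < p → lam ≠ (p : ℂ)) (hc : 0 < c)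
    (hb : ∀ n : ℕ, c * ((n:ℝ)+1) ≤ ‖((n:ℂ)+1) - lam‖) :
    (∑' p : ℕ×ℕ, fu lam p)
      = ((∑' p : ℕ×ℕ, fD lam p) + (∑' n : ℕ, ff3 lam n)) - ∑' p : ℕ×ℕ, fC lam p := by
  have hv1 := summable_fv1 hc hb
  have hPhi := summable_fPhi hc hb
  have hC := summable_fC hc hb
  have hCs : Summable (fun p : ℕ×ℕ => fC lam (p.2, p.1)) := by
    have := ((Equiv.prodComm ℕ ℕ).summable_iff (f := fC lam)).2 hC
    apply this.congr
    intro q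
    rfl
  have hpoint : ∀ p : ℕ×ℕ, fu lam p = fv1 lam p - fC lam (p.2, p.1) := by
    rintro ⟨i,j⟩
    simp only [fu, fv1, fC, fa]
    have e3 : (((j:ℂ)+(i:ℂ)+2)*(((j:ℂ)+(i:ℂ)+2)-lam)*((i:ℂ)+1)*(((i:ℂ)+1)-lam))⁻¹
        = (((((j:ℂ)+1))+((i:ℂ)+1))*((((((j:ℂ)+1))+((i:ℂ)+1)))-lam)*((i:ℂ)+1)*(((i:ℂ)+1)-lam))⁻¹ := by
      congr 1
      ring
    rw [e3]
    exact alg5 (natc_ne i) (natc_ne j) (sub_ne hlam i) (sum_ne i j) (sumlam_ne hlam i j)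
  have hv1eval : ∑' p : ℕ×ℕ, fv1 lam p
      = (∑' p : ℕ×ℕ, fD lam p) + ∑' n : ℕ, ff3 lam n := by
    rw [Summable.tsum_prod hv1]
    have hinner : ∀ j : ℕ, (∑' i : ℕ, fv1 lam (j, i)) = ∑' k : ℕ, fPhi lam (j, k) := by
      intro j
      have h1 : (∑' i : ℕ, fv1 lam (j, i))
          = fa lam j * ∑' i : ℕ, ((((i:ℂ)+1) * (((i:ℂ)+1)+((j:ℂ)+1)))⁻¹) := by
        simp only [fv1]
        exact tsum_mul_left
      rw [h1, (hasSum_inner j).tsum_eq]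
      have h2 : fa lam j * (((j:ℂ)+1)⁻¹ * ∑ k ∈ Finset.range (j+1), ((k:ℂ)+1)⁻¹)
          = ∑ k ∈ Finset.range (j+1), fPhi lam (j,k) := by
        rw [← mul_assoc, Finset.mul_sum]
        apply Finset.sum_congr rfl
        intro k hk
        have hkj : k ≤ j := by
          have := Finset.mem_range.mp hk
          omega
        simp only [fPhi, fa]
        rw [if_pos hkj, ← mul_inv, ← mul_inv]
        congr 1
        ring
      rw [h2]
      refine (tsum_eq_sum  (fun k hk => ?_)).symm
      have hkj : ¬ k ≤ j := by
        intro hle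
        exact hk (Finset.mem_range.mpr (by omega))
      simp only [fPhi]
      rw [if_neg hkj]
    rw [tsum_congr hinner, ← Summable.tsum_prod hPhi, threeSplit _ hPhi]
    have p1 : (∑' q : ℕ×ℕ, fPhi lam (q.2+q.1+1, q.2)) = ∑' p : ℕ×ℕ, fD lam p := by
      apply tsum_congr
      intro q
      simp only [fPhi, fD]
      rw [if_pos (by omega : q.2 ≤ q.2+q.1+1)]
      congr 1
      push_cast
      ring
    have p2 : (∑' i : ℕ, fPhi lam (i,i)) = ∑' n : ℕ, ff3 lam n := by
      apply tsum_congr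
      intro i
      simp only [fPhi, ff3]
      rw [if_pos (le_refl i)]
      congr 1
      ring
    have p3 : (∑' q : ℕ×ℕ, fPhi lam (q.1, q.1+q.2+1)) = 0 := by
      have hz : ∀ q : ℕ×ℕ, fPhi lam (q.1, q.1+q.2+1) = 0 := by
        intro q
        simp only [fPhi]
        rw [if_neg (by omega : ¬ q.1+q.2+1 ≤ q.1)]
      rw [tsum_congr hz]
      exact tsum_zero
    rw [p1, p2, p3, add_zero]
  rw [tsum_congr hpoint, Summable.tsum_sub hv1 hCs, hv1eval, tsum_swap (fC lam)]

lemma main_key (hlam : ∀ p : ℕ, 0 < p → lam ≠ (p : ℂ)) (hc : 0 < c)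
    (hb : ∀ n : ℕ, c * ((n:ℝ)+1) ≤ ‖((n:ℂ)+1) - lam‖) :
    (∑' p : ℕ×ℕ, fA lam p) = (∑' n : ℕ, ff3 lam n) - ∑' p : ℕ×ℕ, fB lam p := by
  have e3 := step3 hlam hc hb
  have e4 := step4 hlam hc hb
  have e5 := step5 hlam hc hb
  linear_combination e3 + e5 - e4

end main

-- ===== DecTuple 2 ≃ ℕ×ℕ =====

def dEquiv : ℕ×ℕ ≃ ↥(DecTuple 2) where
  toFun q := ⟨fun k => if k = 0 then q.1+q.2+2 else if k = 1 then q.2+1 else 0, by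
    refine ⟨?_, ?_, ?_⟩
    · intro j hj
      have hj0 : j = 0 := by omega
      subst hj0
      simp
    · intro j hj
      interval_cases j <;> simp
    · intro j hj
      have h1 : ¬ j = 0 := by omega
      have h2 : ¬ j = 1 := by omega
      simp [h1, h2]⟩
  invFun m := (m.1 0 - m.1 1 - 1, m.1 1 - 1)
  left_inv q := by
    obtain ⟨a,b⟩ := q
    show ((a+b+2) - (b+1) - 1, (b+1) - 1) = (a, b)
    simp only [Prod.mk.injEq]
    omega
  right_inv m := by
    obtain ⟨m, hm⟩ := m
    have h01 : m 1 < m 0 := hm.1 0 (by omega)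
    have h11 : 1 ≤ m 1 := hm.2.1 1 (by omega)
    apply Subtype.ext
    funext k
    show (if k = 0 then (m 0 - m 1 - 1) + (m 1 - 1) + 2 else if k = 1 then (m 1 - 1)+1 else 0)
      = m k
    by_cases hk0 : k = 0
    · subst hk0
      rw [if_pos rfl]
      omega
    · by_cases hk1 : k = 1
      · subst hk1
        rw [if_neg hk0, if_pos rfl]
        omega
      · have hz := hm.2.2 k (by omega)
        simp only [if_neg hk0, if_neg hk1]
        omega

lemma dEquiv_apply0 (q : ℕ×ℕ) : ((dEquiv q).1 0) = q.1+q.2+2 := rfl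
lemma dEquiv_apply1 (q : ℕ×ℕ) : ((dEquiv q).1 1) = q.2+1 := rfl

end F22

/-- `f(2,2;λ) = 2F(3;λ) + F(1,2;λ) - ζ(2)F(1;λ)` for `λ` not a positive integer. -/
theorem f22_eq (lam : ℂ) (hlam : ∀ p : ℕ, 0 < p → lam ≠ (p : ℂ)) :
    (∑' m : DecTuple 2,
        ((m.1 0 : ℂ) ^ 2 * ((m.1 0 : ℂ) - lam) * ((m.1 1 : ℂ) - lam))⁻¹)
      = 2 * (∑' m : ℕ, (((m + 1 : ℕ) : ℂ) ^ 3 * (((m + 1 : ℕ) : ℂ) - lam))⁻¹)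
        + (∑' m : DecTuple 2,
            ((m.1 0 : ℂ) * ((m.1 0 : ℂ) - lam) * (m.1 1 : ℂ) ^ 2)⁻¹)
        - (∑' m : ℕ, (((m + 1 : ℕ) : ℂ) ^ 2)⁻¹) *
            (∑' m : ℕ, (((m + 1 : ℕ) : ℂ) * (((m + 1 : ℕ) : ℂ) - lam))⁻¹) := by
  obtain ⟨c, hc, -, hb⟩ := F22.exists_c hlam
  have hLHS : (∑' m : DecTuple 2,
        ((m.1 0 : ℂ) ^ 2 * ((m.1 0 : ℂ) - lam) * ((m.1 1 : ℂ) - lam))⁻¹)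
      = ∑' p : ℕ×ℕ, F22.fA lam p := by
    rw [← F22.dEquiv.tsum_eq (fun m : ↥(DecTuple 2) =>
      ((m.1 0 : ℂ) ^ 2 * ((m.1 0 : ℂ) - lam) * ((m.1 1 : ℂ) - lam))⁻¹)]
    apply tsum_congr
    intro q
    simp only [F22.dEquiv_apply0, F22.dEquiv_apply1, F22.fA]
    congr 1
    push_cast
    ring
  have hE : (∑' m : DecTuple 2,
        ((m.1 0 : ℂ) * ((m.1 0 : ℂ) - lam) * (m.1 1 : ℂ) ^ 2)⁻¹)
      = ∑' p : ℕ×ℕ, F22.fE lam p := by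
    rw [← F22.dEquiv.tsum_eq (fun m : ↥(DecTuple 2) =>
      ((m.1 0 : ℂ) * ((m.1 0 : ℂ) - lam) * (m.1 1 : ℂ) ^ 2)⁻¹)]
    apply tsum_congr
    intro q
    simp only [F22.dEquiv_apply0, F22.dEquiv_apply1, F22.fE]
    congr 1
    push_cast
    ring
  have hF3 : (∑' m : ℕ, (((m + 1 : ℕ) : ℂ) ^ 3 * (((m + 1 : ℕ) : ℂ) - lam))⁻¹)
      = ∑' n : ℕ, F22.ff3 lam n := by
    apply tsum_congr
    intro n
    simp only [F22.ff3]
    congr 1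
    push_cast
    ring
  have hZ2 : (∑' m : ℕ, (((m + 1 : ℕ) : ℂ) ^ 2)⁻¹) = ∑' n : ℕ, F22.fw n := by
    apply tsum_congr
    intro n
    simp only [F22.fw]
    congr 1
    push_cast
    ring
  have hF1 : (∑' m : ℕ, (((m + 1 : ℕ) : ℂ) * (((m + 1 : ℕ) : ℂ) - lam))⁻¹)
      = ∑' n : ℕ, F22.fa lam n := by
    apply tsum_congr
    intro n
    simp only [F22.fa]
    congr 1
    push_cast
    ring
  rw [hLHS, hE, hF3, hZ2, hF1]
  have e2 := F22.step2 (lam := lam) hc hb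
  have key := F22.main_key hlam hc hb
  linear_combination key + e2
end

section
/- For every λ ∈ ℂ that is not a positive integer: Σ_{m_1>m_2≥1} 1/( m_1 (m_1−λ) m_2 (m_2−λ) ) = Σ_{m≥1} 1/( m^3 (m−λ) ) − Σ_{m_1>m_2≥1} 1/( m_1^2 (m_1−λ) m_2 ); in the notation of the paper, f(1,1,1,1;λ) = F(3;λ) − F(2,1;λ). -/
/-!
Index the double sums by `m₂ = k` and `m₁ = k + j` with `k, j ≥ 1`. The partial fractions
`1/((k-λ)(k+j-λ)) = (1/j)(1/(k-λ) - 1/(k+j-λ))` and `1/(kj) = (1/(k+j))(1/k + 1/j)` split the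
summand of `f(1,1,1,1;λ)` into `1/((k+j)kj(k-λ))` minus the summands of `F(2,1;λ)` at `(k, j)` and
at `(j, k)`. Summing the first term over `j` telescopes to `∑_k H_k/(k²(k-λ))`, while grouping
`F(2,1;λ)` by `m = k + j` gives `∑_m H_{m-1}/(m²(m-λ))`; as `H_k - H_{k-1} = 1/k`, the difference
of these two series is `F(3;λ)`. Everything converges absolutely since `‖n - λ‖ ≥ c n` for all
positive integers `n`.
-/

open Finset Filter Topology

def DecTuple.equivProdTwo : ℕ × ℕ ≃ DecTuple 2 where
  toFun p :=
    ⟨fun i ↦ if i = 0 then p.1 + 1 + (p.2 + 1) else if i = 1 then p.1 + 1 else 0,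
      fun i hi ↦ by simp [show i = 0 by omega],
      fun i hi ↦ by interval_cases i <;> simp; omega,
      fun i hi ↦ by simp [show i ≠ 0 by omega, show i ≠ 1 by omega]⟩
  invFun m := (m.1 1 - 1, m.1 0 - m.1 1 - 1)
  left_inv p := by simp
  right_inv := by
    rintro ⟨m, hdec, hpos, hzero⟩
    have h01 : m 1 < m 0 := hdec 0 (by norm_num)
    have h1 : 1 ≤ m 1 := hpos 1 (by norm_num)
    ext (_ | _ | i)
    · simp; omega
    · simp; omega
    · simp [hzero (i + 2) (by omega)]

theorem DecTuple.tsum_two {α : Type*} [AddCommMonoid α] [TopologicalSpace α] (F : ℕ → ℕ → α) :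
    ∑' m : DecTuple 2, F (m.1 0) (m.1 1) = ∑' p : ℕ × ℕ, F (p.1 + 1 + (p.2 + 1)) (p.1 + 1) :=
  (DecTuple.equivProdTwo.tsum_eq _).symm

theorem HasSum.sum_antidiagonal {A α : Type*} [AddMonoid A] [HasAntidiagonal A]
    [AddCommMonoid α] [TopologicalSpace α] [ContinuousAdd α] [RegularSpace α] {f : A × A → α}
    {a : α} (h : HasSum f a) : HasSum (fun n ↦ ∑ p ∈ antidiagonal n, f p) a :=
  (HasAntidiagonal.sigmaAntidiagonalEquivProd.hasSum_iff.mpr h).sigma fun n ↦ by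
    rw [← sum_coe_sort]; exact hasSum_fintype _

theorem hasSum_sub_add_of_tendsto_zero {G : Type*} [AddCommGroup G] [TopologicalSpace G]
    [IsTopologicalAddGroup G] [T2Space G] {f : ℕ → G} (hf : Tendsto f atTop (𝓝 0)) (k : ℕ)
    (hs : Summable fun n ↦ f n - f (n + k)) :
    HasSum (fun n ↦ f n - f (n + k)) (∑ i ∈ range k, f i) := by
  refine hs.hasSum_iff_tendsto_nat.mpr ?_
  have hpartial : ∀ N, ∑ n ∈ range N, (f n - f (n + k))
      = ∑ i ∈ range k, f i - ∑ i ∈ range k, f (N + i) := by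
    intro N
    rw [sum_sub_distrib, sub_eq_sub_iff_add_eq_add, ← sum_range_add, add_comm N k,
      sum_range_add]
    simp only [add_comm]
  simp only [hpartial]
  simpa using tendsto_const_nhds.sub (tendsto_finsetSum (range k) fun i _ ↦
    hf.comp (tendsto_add_atTop_nat i) |>.congr fun N ↦ by simp [add_comm])

theorem summable_inv_natCast_add_one_sq : Summable fun n : ℕ ↦ (((n + 1 : ℕ) : ℝ) ^ 2)⁻¹ := by
  simpa using (summable_nat_add_iff 1).mpr (Real.summable_nat_pow_inv.mpr one_lt_two)

theorem summable_of_norm_le_inv_sq_mul_inv_sq {E : Type*} [NormedAddCommGroup E]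
    [CompleteSpace E] {f : ℕ → ℕ → E} (C : ℝ)
    (h : ∀ k j, 0 < k → 0 < j → ‖f k j‖ ≤ C * (((k : ℝ) ^ 2)⁻¹ * ((j : ℝ) ^ 2)⁻¹)) :
    Summable fun p : ℕ × ℕ ↦ f (p.1 + 1) (p.2 + 1) :=
  .of_norm_bounded ((summable_inv_natCast_add_one_sq.mul_of_nonneg
    summable_inv_natCast_add_one_sq (fun _ ↦ by positivity) fun _ ↦ by positivity).mul_left C)
    fun p ↦ h _ _ p.1.succ_pos p.2.succ_pos

theorem exists_norm_natCast_sub_inv_le (lam : ℂ) :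
    ∃ C, 0 ≤ C ∧ ∀ n : ℕ, 0 < n → ‖(n : ℂ) - lam‖⁻¹ ≤ C * (n : ℝ)⁻¹ := by
  obtain ⟨C, hC⟩ := isBounded_iff_forall_norm_le.mp
    (Metric.isBounded_range_of_tendsto _ (tendsto_natCast_div_add_atTop (-lam : ℂ)))
  refine ⟨C, (norm_nonneg _).trans (hC _ ⟨0, rfl⟩), fun n hn ↦ ?_⟩
  have hn' : (n : ℂ) ≠ 0 := by exact_mod_cast hn.ne'
  calc ‖(n : ℂ) - lam‖⁻¹ = ‖(n : ℂ) / (n + -lam)‖ * (n : ℝ)⁻¹ := by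
        rw [← sub_eq_add_neg, norm_div, Complex.norm_natCast]
        field_simp
    _ ≤ C * (n : ℝ)⁻¹ := by gcongr; exact hC _ ⟨n, rfl⟩

theorem hasSum_inv_mul_add {k : ℕ} (hk : 0 < k) :
    HasSum (fun n : ℕ ↦ (((n + 1 : ℕ) : ℂ) * ((k + (n + 1) : ℕ) : ℂ))⁻¹) (harmonic k / k) := by
  set f : ℕ → ℂ := fun n ↦ ((n + 1 : ℕ) : ℂ)⁻¹
  have hk' : (k : ℂ) ≠ 0 := by exact_mod_cast hk.ne'
  have hfg : ∀ n : ℕ, f n - f (n + k) = k * (((n + 1 : ℕ) : ℂ) * ((k + (n + 1) : ℕ) : ℂ))⁻¹ := by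
    intro n
    simp only [f]
    push_cast
    rw [inv_sub_inv (by exact_mod_cast n.succ_ne_zero)
      (by exact_mod_cast (n + k).succ_ne_zero), div_eq_mul_inv]
    ring
  have hs : Summable fun n ↦ (((n + 1 : ℕ) : ℂ) * ((k + (n + 1) : ℕ) : ℂ))⁻¹ := by
    refine .of_norm_bounded summable_inv_natCast_add_one_sq fun n ↦ ?_
    rw [norm_inv, norm_mul, Complex.norm_natCast, Complex.norm_natCast, sq]
    gcongr ((_ : ℝ) * ?_)⁻¹
    exact Nat.cast_le.mpr (by omega)
  have hf : Tendsto f atTop (𝓝 0) :=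
    (tendsto_inv_atTop_nhds_zero_nat (𝕜 := ℂ)).comp (tendsto_add_atTop_nat 1)
  have h := (hasSum_sub_add_of_tendsto_zero hf k
    ((hs.mul_left (k : ℂ)).congr fun n ↦ (hfg n).symm)).mul_left (k : ℂ)⁻¹
  have hval : (k : ℂ)⁻¹ * ∑ i ∈ range k, f i = harmonic k / k := by
    simp [f, harmonic, div_eq_inv_mul]
  rw [hval] at h
  exact h.congr_fun fun n ↦ by rw [hfg, inv_mul_cancel_left₀ hk']

noncomputable section

variable (lam : ℂ) (k j : ℕ)

def termF1111 : ℂ :=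
  (((k + j : ℕ) : ℂ) * ((k + j : ℕ) - lam) * k * (k - lam))⁻¹

def termF21 : ℂ :=
  (((k + j : ℕ) : ℂ) ^ 2 * ((k + j : ℕ) - lam) * k)⁻¹

def termLowerPole : ℂ :=
  (((k + j : ℕ) : ℂ) * k * j * (k - lam))⁻¹

def termUpperPole : ℂ :=
  (((k + j : ℕ) : ℂ) * k * j * ((k + j : ℕ) - lam))⁻¹

end

section PartialFractions

variable {lam : ℂ} {k j : ℕ}

theorem termF1111_eq_sub (hlam : ∀ p : ℕ, 0 < p → lam ≠ p) (hk : 0 < k) (hj : 0 < j) :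
    termF1111 lam k j = termLowerPole lam k j - termUpperPole lam k j := by
  have hk' : (k : ℂ) ≠ 0 := by exact_mod_cast hk.ne'
  have hj' : (j : ℂ) ≠ 0 := by exact_mod_cast hj.ne'
  have hm' : (k : ℂ) + j ≠ 0 := by exact_mod_cast (by omega : k + j ≠ 0)
  have hkl : (k : ℂ) - lam ≠ 0 := sub_ne_zero.mpr (hlam k hk).symm
  have hml : ((k : ℂ) + j) - lam ≠ 0 := by
    exact_mod_cast sub_ne_zero.mpr (hlam (k + j) (by omega)).symm
  simp only [termF1111, termLowerPole, termUpperPole]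
  push_cast
  field_simp
  ring

theorem termUpperPole_eq_add (hk : 0 < k) (hj : 0 < j) :
    termUpperPole lam k j = termF21 lam k j + termF21 lam j k := by
  have hk' : (k : ℂ) ≠ 0 := by exact_mod_cast hk.ne'
  have hj' : (j : ℂ) ≠ 0 := by exact_mod_cast hj.ne'
  have hm' : (k : ℂ) + j ≠ 0 := by exact_mod_cast (by omega : k + j ≠ 0)
  simp only [termF21, termUpperPole, mul_inv, add_comm j k]
  push_cast
  field_simp
  ring

end PartialFractions

section Series

variable (lam : ℂ)

theorem summable_termLowerPole :
    Summable fun p : ℕ × ℕ ↦ termLowerPole lam (p.1 + 1) (p.2 + 1) := by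
  obtain ⟨C, -, hbound⟩ := exists_norm_natCast_sub_inv_le lam
  refine summable_of_norm_le_inv_sq_mul_inv_sq C fun k j hk hj ↦ ?_
  have hjm : (j : ℝ) ≤ ((k + j : ℕ) : ℝ) := Nat.cast_le.mpr (by omega)
  calc ‖termLowerPole lam k j‖
      = ((k + j : ℕ) : ℝ)⁻¹ * (k : ℝ)⁻¹ * (j : ℝ)⁻¹ * ‖(k : ℂ) - lam‖⁻¹ := by
        simp only [termLowerPole, mul_inv, norm_mul, norm_inv, Complex.norm_natCast]
    _ ≤ (j : ℝ)⁻¹ * (k : ℝ)⁻¹ * (j : ℝ)⁻¹ * (C * (k : ℝ)⁻¹) := by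
        gcongr
        exact hbound k hk
    _ = C * (((k : ℝ) ^ 2)⁻¹ * ((j : ℝ) ^ 2)⁻¹) := by ring

theorem summable_termF21 :
    Summable fun p : ℕ × ℕ ↦ termF21 lam (p.1 + 1) (p.2 + 1) := by
  obtain ⟨C, hC, hbound⟩ := exists_norm_natCast_sub_inv_le lam
  refine summable_of_norm_le_inv_sq_mul_inv_sq C fun k j hk hj ↦ ?_
  have hkm : (k : ℝ) ≤ ((k + j : ℕ) : ℝ) := Nat.cast_le.mpr (by omega)
  have hjm : (j : ℝ) ≤ ((k + j : ℕ) : ℝ) := Nat.cast_le.mpr (by omega)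
  calc ‖termF21 lam k j‖
      = ((k + j : ℕ) : ℝ)⁻¹ * ((k + j : ℕ) : ℝ)⁻¹ * ‖((k + j : ℕ) : ℂ) - lam‖⁻¹ * (k : ℝ)⁻¹ := by
        simp only [termF21, mul_inv, norm_mul, norm_inv, Complex.norm_natCast, sq]
    _ ≤ (k : ℝ)⁻¹ * (j : ℝ)⁻¹ * (C * ((k + j : ℕ) : ℝ)⁻¹) * (k : ℝ)⁻¹ := by
        gcongr
        exact hbound (k + j) (by omega)
    _ ≤ (k : ℝ)⁻¹ * (j : ℝ)⁻¹ * (C * (j : ℝ)⁻¹) * (k : ℝ)⁻¹ := by gcongr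
    _ = C * (((k : ℝ) ^ 2)⁻¹ * ((j : ℝ) ^ 2)⁻¹) := by ring

theorem summable_termUpperPole :
    Summable fun p : ℕ × ℕ ↦ termUpperPole lam (p.1 + 1) (p.2 + 1) :=
  ((summable_termF21 lam).add ((Equiv.prodComm ℕ ℕ).summable_iff.mpr (summable_termF21 lam))).congr
    fun p ↦ (termUpperPole_eq_add p.1.succ_pos p.2.succ_pos).symm

theorem tsum_termUpperPole :
    ∑' p : ℕ × ℕ, termUpperPole lam (p.1 + 1) (p.2 + 1)
      = 2 * ∑' p : ℕ × ℕ, termF21 lam (p.1 + 1) (p.2 + 1) := by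
  have hswap := (Equiv.prodComm ℕ ℕ).summable_iff.mpr (summable_termF21 lam)
  calc ∑' p : ℕ × ℕ, termUpperPole lam (p.1 + 1) (p.2 + 1)
      = ∑' p : ℕ × ℕ, (termF21 lam (p.1 + 1) (p.2 + 1) + termF21 lam (p.2 + 1) (p.1 + 1)) :=
        tsum_congr fun p ↦ termUpperPole_eq_add p.1.succ_pos p.2.succ_pos
    _ = ∑' p : ℕ × ℕ, termF21 lam (p.1 + 1) (p.2 + 1)
          + ∑' p : ℕ × ℕ, termF21 lam (p.2 + 1) (p.1 + 1) :=
        (summable_termF21 lam).tsum_add hswap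
    _ = 2 * ∑' p : ℕ × ℕ, termF21 lam (p.1 + 1) (p.2 + 1) := by
        rw [two_mul]
        congr 1
        exact (Equiv.prodComm ℕ ℕ).tsum_eq fun p ↦ termF21 lam (p.1 + 1) (p.2 + 1)

theorem tsum_termF1111 (hlam : ∀ p : ℕ, 0 < p → lam ≠ p) :
    ∑' p : ℕ × ℕ, termF1111 lam (p.1 + 1) (p.2 + 1)
      = ∑' p : ℕ × ℕ, termLowerPole lam (p.1 + 1) (p.2 + 1)
        - 2 * ∑' p : ℕ × ℕ, termF21 lam (p.1 + 1) (p.2 + 1) := by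
  rw [← tsum_termUpperPole, ← (summable_termLowerPole lam).tsum_sub (summable_termUpperPole lam)]
  exact tsum_congr fun p ↦ termF1111_eq_sub hlam p.1.succ_pos p.2.succ_pos

theorem hasSum_harmonic_mul_termLowerPole :
    HasSum (fun n : ℕ ↦ (harmonic (n + 1) : ℂ) * (((n + 1 : ℕ) : ℂ) ^ 2 * ((n + 1 : ℕ) - lam))⁻¹)
      (∑' p : ℕ × ℕ, termLowerPole lam (p.1 + 1) (p.2 + 1)) := by
  refine (summable_termLowerPole lam).hasSum.prod_fiberwise fun k ↦ ?_
  have h := (hasSum_inv_mul_add k.add_one_pos).mul_left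
    (((k + 1 : ℕ) : ℂ) * ((k + 1 : ℕ) - lam))⁻¹
  rw [show (((k + 1 : ℕ) : ℂ) * ((k + 1 : ℕ) - lam))⁻¹ * (harmonic (k + 1) / ((k + 1 : ℕ) : ℂ))
      = harmonic (k + 1) * (((k + 1 : ℕ) : ℂ) ^ 2 * ((k + 1 : ℕ) - lam))⁻¹ by
    simp only [div_eq_mul_inv, mul_inv, sq]; ring] at h
  exact h.congr_fun fun j ↦ by simp only [termLowerPole, mul_inv]; ring

theorem sum_antidiagonal_termF21 (n : ℕ) :
    ∑ p ∈ antidiagonal n, termF21 lam (p.1 + 1) (p.2 + 1)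
      = harmonic (n + 1) * (((n + 2 : ℕ) : ℂ) ^ 2 * ((n + 2 : ℕ) - lam))⁻¹ := by
  rw [Nat.sum_antidiagonal_eq_sum_range_succ_mk, harmonic, Rat.cast_sum, sum_mul]
  refine sum_congr rfl fun i hi ↦ ?_
  have hm : i + 1 + (n - i + 1) = n + 2 := by rw [mem_range] at hi; omega
  simp only [termF21, hm, mul_inv]
  push_cast
  ring

theorem hasSum_harmonic_mul_termF21 :
    HasSum (fun n : ℕ ↦ (harmonic n : ℂ) * (((n + 1 : ℕ) : ℂ) ^ 2 * ((n + 1 : ℕ) - lam))⁻¹)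
      (∑' p : ℕ × ℕ, termF21 lam (p.1 + 1) (p.2 + 1)) := by
  have h := (summable_termF21 lam).hasSum.sum_antidiagonal
  simp only [sum_antidiagonal_termF21] at h
  rw [← hasSum_nat_add_iff' 1, sum_range_one, harmonic_zero, Rat.cast_zero, zero_mul, sub_zero]
  exact h

theorem hasSum_F3 :
    HasSum (fun n : ℕ ↦ (((n + 1 : ℕ) : ℂ) ^ 3 * (((n + 1 : ℕ) : ℂ) - lam))⁻¹)
      (∑' p : ℕ × ℕ, termLowerPole lam (p.1 + 1) (p.2 + 1)
        - ∑' p : ℕ × ℕ, termF21 lam (p.1 + 1) (p.2 + 1)) :=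
  ((hasSum_harmonic_mul_termLowerPole lam).sub (hasSum_harmonic_mul_termF21 lam)).congr_fun
    fun n ↦ by
      rw [← sub_mul, harmonic_succ, Rat.cast_add, add_sub_cancel_left, Rat.cast_inv,
        Rat.cast_natCast, ← mul_inv, ← mul_assoc, ← pow_succ']

end Series

/-- `f(1,1,1,1;λ) = F(3;λ) - F(2,1;λ)` for `λ` not a positive integer. -/
theorem f1111_eq (lam : ℂ) (hlam : ∀ p : ℕ, 0 < p → lam ≠ (p : ℂ)) :
    (∑' m : DecTuple 2,
        ((m.1 0 : ℂ) * ((m.1 0 : ℂ) - lam) * (m.1 1 : ℂ) * ((m.1 1 : ℂ) - lam))⁻¹)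
      = (∑' m : ℕ, (((m + 1 : ℕ) : ℂ) ^ 3 * (((m + 1 : ℕ) : ℂ) - lam))⁻¹)
        - (∑' m : DecTuple 2,
            ((m.1 0 : ℂ) ^ 2 * ((m.1 0 : ℂ) - lam) * (m.1 1 : ℂ))⁻¹) := by
  rw [DecTuple.tsum_two fun x y : ℕ ↦ ((x : ℂ) * (x - lam) * y * (y - lam))⁻¹,
    DecTuple.tsum_two fun x y : ℕ ↦ ((x : ℂ) ^ 2 * (x - lam) * y)⁻¹, (hasSum_F3 lam).tsum_eq]
  change ∑' p : ℕ × ℕ, termF1111 lam (p.1 + 1) (p.2 + 1) = _ - ∑' p : ℕ × ℕ, termF21 lam _ _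
  rw [tsum_termF1111 lam hlam]
  ring
end
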